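/- arXiv:1512.09333 — 14 statements merged into one kernel-verified Lean document; each statement's English description precedes it below -/
import Mathlib

section
/- Let W be a finite set, let P and Q be probability mass functions on W, and let α ∈ [0,1]. Then for every λ ≥ 0, β_α(P,Q) ≥ Σ_{w∈W} min(Q(w), λ·P(w)) − λ·(1−α). -/
open Finset
open scoped Classical

/-- `P` is a probability mass function on the finite type `Ω`. -/
def IsPMF {Ω : Type*} [Fintype Ω] (P : Ω → ℝ) : Prop :=
  (∀ w, 0 ≤ P w) ∧ ∑ w, P w = 1

/-- `β_α(P,Q)`: the minimum of `∑ w, Q w * φ w` over randomized tests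
`φ : Ω → [0,1]` with `∑ w, P w * φ w ≥ α` (the minimum is attained, so it
equals the infimum of the set of achievable values). -/
noncomputable def betaHT {Ω : Type*} [Fintype Ω] (α : ℝ) (P Q : Ω → ℝ) : ℝ :=
  sInf {r | ∃ φ : Ω → ℝ, (∀ w, φ w ∈ Set.Icc (0:ℝ) 1) ∧
    α ≤ ∑ w, P w * φ w ∧ r = ∑ w, Q w * φ w}

theorem stmt_0 {Ω : Type*} [Fintype Ω] (P Q : Ω → ℝ)
    (hP : IsPMF P) (hQ : IsPMF Q) (α : ℝ) (hα : α ∈ Set.Icc (0:ℝ) 1)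
    (lam : ℝ) (hlam : 0 ≤ lam) :
    (∑ w, min (Q w) (lam * P w)) - lam * (1 - α) ≤ betaHT α P Q := by
  obtain ⟨hP0, hP1⟩ := hP
  obtain ⟨hQ0, hQ1⟩ := hQ
  apply le_csInf
  · exact ⟨∑ w, Q w * 1, fun _ => 1, fun w => ⟨zero_le_one, le_refl 1⟩,
      by simpa [hP1] using hα.2, rfl⟩
  · rintro r ⟨φ, hφ, hαφ, rfl⟩
    have key : ∀ w, min (Q w) (lam * P w) ≤ Q w * φ w + lam * (P w * (1 - φ w)) := by
      intro w
      obtain ⟨h0, h1⟩ := hφ w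
      have e : min (Q w) (lam * P w) =
          min (Q w) (lam * P w) * φ w + min (Q w) (lam * P w) * (1 - φ w) := by ring
      rw [e]
      have h2 : (0:ℝ) ≤ 1 - φ w := by linarith
      have := mul_le_mul_of_nonneg_right (min_le_left (Q w) (lam * P w)) h0
      have := mul_le_mul_of_nonneg_right (min_le_right (Q w) (lam * P w)) h2
      nlinarith [mul_le_mul_of_nonneg_right (min_le_left (Q w) (lam * P w)) h0]
    have hsum : ∑ w, min (Q w) (lam * P w) ≤
        ∑ w, (Q w * φ w + lam * (P w * (1 - φ w))) := Finset.sum_le_sum fun w _ => key w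
    have expand : ∑ w, (Q w * φ w + lam * (P w * (1 - φ w)))
        = (∑ w, Q w * φ w) + lam * (1 - ∑ w, P w * φ w) := by
      have h1 : ∑ w, P w * (1 - φ w) = 1 - ∑ w, P w * φ w := by
        simp only [mul_sub, mul_one]
        rw [Finset.sum_sub_distrib, hP1]
      rw [← h1, Finset.sum_add_distrib, Finset.mul_sum]
    have : lam * (1 - ∑ w, P w * φ w) ≤ lam * (1 - α) :=
      mul_le_mul_of_nonneg_left (by linarith) hlam
    linarith [hsum, expand ▸ hsum]
end

section
/- Let W be a finite set, let P and Q be probability mass functions on W, and let α ∈ [0,1]. Then β_α(P,Q) = max_{λ ≥ 0} ( Σ_{w∈W} min(Q(w), λ·P(w)) − λ·(1−α) ), where the maximum over λ ≥ 0 is attained by some λ. -/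
open Finset
open scoped Classical

theorem stmt_1 {Ω : Type*} [Fintype Ω] (P Q : Ω → ℝ)
    (hP : IsPMF P) (hQ : IsPMF Q) (α : ℝ) (hα : α ∈ Set.Icc (0:ℝ) 1) :
    IsGreatest
      {v | ∃ lam : ℝ, 0 ≤ lam ∧
        v = (∑ w, min (Q w) (lam * P w)) - lam * (1 - α)}
      (betaHT α P Q) := by
  classical
  obtain ⟨hP0, hP1⟩ := hP
  obtain ⟨hQ0, hQ1⟩ := hQ
  obtain ⟨hα0, hα1⟩ := hα
  set prim : Set ℝ := {r | ∃ φ : Ω → ℝ, (∀ w, φ w ∈ Set.Icc (0:ℝ) 1) ∧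
    α ≤ ∑ w, P w * φ w ∧ r = ∑ w, Q w * φ w} with hprim
  have hbeta : betaHT α P Q = sInf prim := rfl
  have hne : prim.Nonempty := by
    refine ⟨∑ w, Q w, fun _ => 1, fun w => by norm_num, ?_, by simp⟩
    simp [hP1, hα1]
  have hbdd : BddBelow prim := by
    refine ⟨0, ?_⟩
    rintro r ⟨φ, hφ, hfe, rfl⟩
    exact Finset.sum_nonneg fun w _ => mul_nonneg (hQ0 w) (hφ w).1
  -- weak duality
  have weak : ∀ lam : ℝ, 0 ≤ lam → ∀ r ∈ prim,
      (∑ w, min (Q w) (lam * P w)) - lam * (1 - α) ≤ r := by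
    rintro lam hlam r ⟨φ, hφ, hfe, rfl⟩
    have h1 : ∀ w, min (Q w) (lam * P w) ≤ Q w * φ w + lam * P w * (1 - φ w) := by
      intro w
      obtain ⟨h0, h1⟩ := hφ w
      nlinarith [min_le_left (Q w) (lam * P w), min_le_right (Q w) (lam * P w)]
    have e1 : ∑ w, (Q w * φ w + lam * P w * (1 - φ w))
        = (∑ w, Q w * φ w) + lam * (1 - ∑ w, P w * φ w) := by
      rw [Finset.sum_add_distrib]
      congr 1
      have e2 : ∑ w, lam * P w * (1 - φ w)
          = lam * ((∑ w, P w) - ∑ w, P w * φ w) := by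
        rw [← Finset.sum_sub_distrib, Finset.mul_sum]
        exact Finset.sum_congr rfl fun w _ => by ring
      rw [e2, hP1]
    have hs : ∑ w, min (Q w) (lam * P w)
        ≤ (∑ w, Q w * φ w) + lam * (1 - ∑ w, P w * φ w) := by
      rw [← e1]; exact Finset.sum_le_sum fun w _ => h1 w
    nlinarith
  -- there is a point of positive P-mass
  have hex : ∃ w0, 0 < P w0 := by
    by_contra h
    push_neg at h
    have : ∑ w, P w = 0 := Finset.sum_eq_zero fun w _ => le_antisymm (h w) (hP0 w)
    rw [hP1] at this; norm_num at this
  -- candidate thresholds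
  set S : Finset ℝ :=
    insert 0 ((univ.filter fun w => 0 < P w).image fun w => Q w / P w) with hS
  have hSnn : ∀ t ∈ S, (0:ℝ) ≤ t := by
    intro t ht
    rcases Finset.mem_insert.mp ht with rfl | ht
    · exact le_refl 0
    · obtain ⟨w, hw, rfl⟩ := Finset.mem_image.mp ht
      exact div_nonneg (hQ0 w) (hP0 w)
  set T : Finset ℝ :=
    S.filter (fun t => α ≤ ∑ w ∈ univ.filter (fun w => Q w ≤ t * P w), P w) with hT
  have hTne : T.Nonempty := by
    have hSne : S.Nonempty := ⟨0, Finset.mem_insert_self _ _⟩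
    set t0 := S.max' hSne with ht0
    refine ⟨t0, Finset.mem_filter.mpr ⟨S.max'_mem hSne, ?_⟩⟩
    have hz : ∑ w ∈ univ.filter (fun w => ¬ (Q w ≤ t0 * P w)), P w = 0 := by
      refine Finset.sum_eq_zero fun w hw => ?_
      simp only [Finset.mem_filter] at hw
      rcases (hP0 w).lt_or_eq with hPw | hPw
      · exfalso
        have hmem : Q w / P w ∈ S :=
          Finset.mem_insert_of_mem (Finset.mem_image.mpr
            ⟨w, Finset.mem_filter.mpr ⟨Finset.mem_univ w, hPw⟩, rfl⟩)
        have := S.le_max' _ hmem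
        exact hw.2 ((div_le_iff₀ hPw).mp this)
      · exact hPw.symm
    have hsum := Finset.sum_filter_add_sum_filter_not univ
      (fun w => Q w ≤ t0 * P w) P
    rw [hz, hP1] at hsum
    linarith
  set l := T.min' hTne with hldef
  obtain ⟨hlS, hlH⟩ := Finset.mem_filter.mp (T.min'_mem hTne)
  have hl0 : 0 ≤ l := hSnn l hlS
  -- the regions
  set A : Finset Ω := univ.filter (fun w => Q w < l * P w) with hA
  set B : Finset Ω := univ.filter (fun w => Q w = l * P w) with hB
  set h : ℝ := ∑ w ∈ A, P w with hh
  set b : ℝ := ∑ w ∈ B, P w with hbdef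
  have hsplitP : ∑ w ∈ univ.filter (fun w => Q w ≤ l * P w), P w = h + b := by
    have hun : univ.filter (fun w => Q w ≤ l * P w) = A ∪ B := by
      ext w; simp [hA, hB, le_iff_lt_or_eq]
    have hdisj : Disjoint A B := by
      rw [Finset.disjoint_left]
      intro w hwA hwB
      simp only [hA, hB, Finset.mem_filter] at hwA hwB
      exact absurd hwB.2 (ne_of_lt hwA.2)
    rw [hun, Finset.sum_union hdisj]
  have hb0 : 0 ≤ b := Finset.sum_nonneg fun w _ => hP0 w
  have hh0 : 0 ≤ h := Finset.sum_nonneg fun w _ => hP0 w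
  have hαH : α ≤ h + b := by rw [← hsplitP]; exact hlH
  -- key: h ≤ α (minimality of l)
  have hhα : h ≤ α := by
    by_contra hc
    push_neg at hc
    set D : Finset Ω := univ.filter (fun w => Q w < l * P w ∧ 0 < P w) with hD
    have hDne : D.Nonempty := by
      by_contra hDe
      rw [Finset.not_nonempty_iff_eq_empty] at hDe
      have hz : h = 0 := by
        refine Finset.sum_eq_zero fun w hw => ?_
        simp only [hA, Finset.mem_filter] at hw
        rcases (hP0 w).lt_or_eq with hPw | hPw
        · exfalso
          have : w ∈ D := Finset.mem_filter.mpr ⟨Finset.mem_univ w, hw.2, hPw⟩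
          rw [hDe] at this
          exact absurd this (Finset.notMem_empty w)
        · exact hPw.symm
      rw [hz] at hc; linarith
    have hEne : (D.image fun w => Q w / P w).Nonempty := hDne.image _
    obtain ⟨w1, hw1, hw1e⟩ := Finset.mem_image.mp ((D.image fun w => Q w / P w).max'_mem hEne)
    simp only [hD, Finset.mem_filter] at hw1
    set t' := Q w1 / P w1 with ht'
    have ht'l : t' < l :=
      (div_lt_iff₀ hw1.2.2).mpr (by linarith [hw1.2.1])
    have ht'S : t' ∈ S :=
      Finset.mem_insert_of_mem (Finset.mem_image.mpr
        ⟨w1, Finset.mem_filter.mpr ⟨Finset.mem_univ w1, hw1.2.2⟩, rfl⟩)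
    have hAsub : A ⊆ univ.filter (fun w => Q w ≤ t' * P w) := by
      intro w hw
      simp only [hA, Finset.mem_filter] at hw
      have hPw : 0 < P w := by
        rcases (hP0 w).lt_or_eq with hPw | hPw
        · exact hPw
        · exfalso; rw [← hPw, mul_zero] at hw; linarith [hQ0 w, hw.2]
      have hwD : w ∈ D := Finset.mem_filter.mpr ⟨Finset.mem_univ w, hw.2, hPw⟩
      have hmm : Q w / P w ≤ t' := by
        rw [hw1e]
        exact Finset.le_max' (D.image fun w => Q w / P w) _ (Finset.mem_image.mpr ⟨w, hwD, rfl⟩)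
      exact Finset.mem_filter.mpr ⟨Finset.mem_univ w, (div_le_iff₀ hPw).mp hmm⟩
    have hge : α ≤ ∑ w ∈ univ.filter (fun w => Q w ≤ t' * P w), P w :=
      le_trans hc.le (Finset.sum_le_sum_of_subset_of_nonneg hAsub fun w _ _ => hP0 w)
    have : t' ∈ T := Finset.mem_filter.mpr ⟨ht'S, hge⟩
    exact absurd (T.min'_le t' this) (not_le.mpr ht'l)
  -- randomization weight
  set γ : ℝ := if b = 0 then 0 else (α - h) / b with hγ
  have hγb : γ * b = α - h := by
    by_cases hb : b = 0
    · simp only [hγ, if_pos hb, hb, mul_zero]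
      have : α ≤ h := by rw [hb, add_zero] at hαH; exact hαH
      linarith
    · rw [hγ, if_neg hb, div_mul_cancel₀ _ hb]
  have hbpos : b ≠ 0 → 0 < b := fun hb => lt_of_le_of_ne hb0 (Ne.symm hb)
  have hγ0 : 0 ≤ γ := by
    by_cases hb : b = 0
    · simp [hγ, hb]
    · rw [hγ, if_neg hb]
      exact div_nonneg (by linarith) hb0
  have hγ1 : γ ≤ 1 := by
    by_cases hb : b = 0
    · simp [hγ, hb]
    · rw [hγ, if_neg hb]
      rw [div_le_one (hbpos hb)]
      linarith
  -- the optimal test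
  set φ : Ω → ℝ := fun w =>
    if Q w < l * P w then 1 else if Q w = l * P w then γ else 0 with hφdef
  have hφ01 : ∀ w, φ w ∈ Set.Icc (0:ℝ) 1 := by
    intro w
    simp only [hφdef]
    split_ifs
    · exact ⟨zero_le_one, le_refl 1⟩
    · exact ⟨hγ0, hγ1⟩
    · exact ⟨le_refl 0, zero_le_one⟩
  have key : ∀ f : Ω → ℝ, ∑ w, f w * φ w = (∑ w ∈ A, f w) + γ * ∑ w ∈ B, f w := by
    intro f
    rw [Finset.mul_sum, hA, hB, Finset.sum_filter, Finset.sum_filter,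
      ← Finset.sum_add_distrib]
    refine Finset.sum_congr rfl fun w _ => ?_
    by_cases h1 : Q w < l * P w
    · simp [hφdef, h1, ne_of_lt h1]
    · by_cases h2 : Q w = l * P w
      · simp [hφdef, h1, h2, mul_comm]
      · simp [hφdef, h1, h2]
  have hfeas : ∑ w, P w * φ w = α := by
    rw [key P, ← hh, ← hbdef, hγb]; ring
  have hBQ : ∑ w ∈ B, Q w = l * b := by
    rw [hbdef, Finset.mul_sum]
    refine Finset.sum_congr rfl fun w hw => ?_
    simp only [hB, Finset.mem_filter] at hw
    exact hw.2
  have hval : ∑ w, Q w * φ w = (∑ w ∈ A, Q w) + l * (α - h) := by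
    rw [key Q, hBQ, ← mul_assoc, mul_comm γ l, mul_assoc, hγb]
  have hmin : ∑ w, min (Q w) (l * P w)
      = (∑ w ∈ A, Q w) + l * b + l * (1 - (h + b)) := by
    have e1 : ∀ w : Ω, min (Q w) (l * P w)
        = if Q w ≤ l * P w then Q w else l * P w := fun w => min_def _ _
    rw [Finset.sum_congr rfl fun w _ => e1 w, Finset.sum_ite]
    have e2 : ∑ w ∈ univ.filter (fun w => Q w ≤ l * P w), Q w
        = (∑ w ∈ A, Q w) + l * b := by
      have hun : univ.filter (fun w => Q w ≤ l * P w) = A ∪ B := by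
        ext w; simp [hA, hB, le_iff_lt_or_eq]
      have hdisj : Disjoint A B := by
        rw [Finset.disjoint_left]
        intro w hwA hwB
        simp only [hA, hB, Finset.mem_filter] at hwA hwB
        exact absurd hwB.2 (ne_of_lt hwA.2)
      rw [hun, Finset.sum_union hdisj, hBQ]
    have e3 : ∑ w ∈ univ.filter (fun w => ¬ Q w ≤ l * P w), (l * P w)
        = l * (1 - (h + b)) := by
      have hsum := Finset.sum_filter_add_sum_filter_not univ
        (fun w => Q w ≤ l * P w) P
      rw [hP1, hsplitP] at hsum
      rw [← Finset.mul_sum]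
      congr 1
      linarith
    rw [e2, e3]
  have hgval : (∑ w, min (Q w) (l * P w)) - l * (1 - α) = ∑ w, Q w * φ w := by
    rw [hmin, hval]; ring
  constructor
  · refine ⟨l, hl0, ?_⟩
    have hvp : (∑ w, Q w * φ w) ∈ prim := ⟨φ, hφ01, le_of_eq hfeas.symm, rfl⟩
    rw [hbeta]
    refine le_antisymm ?_ ?_
    · rw [hgval]
      exact csInf_le hbdd hvp
    · exact le_csInf hne (weak l hl0)
  · rintro v ⟨lam, hlam, rfl⟩
    rw [hbeta]
    exact le_csInf hne (weak lam hlam)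
end

section
/- Let W be a finite set, let P and Q be probability mass functions on W, let α ∈ [0,1], and let λ ≥ 0. Then β_α(P,Q) = Σ_{w∈W} min(Q(w), λ·P(w)) − λ·(1−α) holds if and only if P({w : Q(w) < λ·P(w)}) ≤ α ≤ P({w : Q(w) ≤ λ·P(w)}). -/
open Finset
open scoped Classical

lemma base_pt (q p l f : ℝ) (hq : 0 ≤ q) (hp : 0 ≤ p) (hl : 0 ≤ l)
    (hf0 : 0 ≤ f) (hf1 : f ≤ 1) :
    min q (l * p) - l * p + l * (p * f) ≤ q * f := by
  rcases le_total q (l * p) with h | h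
  · rw [min_eq_left h]; nlinarith [mul_nonneg (sub_nonneg.2 h) (sub_nonneg.2 hf1)]
  · rw [min_eq_right h]; nlinarith [mul_le_mul_of_nonneg_right h hf0]

lemma sum_base {Ω : Type*} [Fintype Ω] (P Q φ : Ω → ℝ) (lam : ℝ) (hP1 : ∑ w, P w = 1) :
    ∑ w, (min (Q w) (lam * P w) - lam * P w + lam * (P w * φ w)) =
      (∑ w, min (Q w) (lam * P w)) - lam + lam * ∑ w, P w * φ w := by
  rw [Finset.sum_add_distrib, Finset.sum_sub_distrib, ← Finset.mul_sum, ← Finset.mul_sum,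
    hP1, mul_one]

set_option maxHeartbeats 1000000 in
theorem stmt_2 {Ω : Type*} [Fintype Ω] (P Q : Ω → ℝ)
    (hP : IsPMF P) (hQ : IsPMF Q) (α : ℝ) (hα : α ∈ Set.Icc (0:ℝ) 1)
    (lam : ℝ) (hlam : 0 ≤ lam) :
    betaHT α P Q = (∑ w, min (Q w) (lam * P w)) - lam * (1 - α) ↔
      ((∑ w ∈ univ.filter (fun w => Q w < lam * P w), P w) ≤ α ∧
        α ≤ ∑ w ∈ univ.filter (fun w => Q w ≤ lam * P w), P w) := by
  obtain ⟨hP0, hP1⟩ := hP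
  obtain ⟨hQ0, hQ1⟩ := hQ
  obtain ⟨hα0, hα1⟩ := hα
  set S := {r | ∃ φ : Ω → ℝ, (∀ w, φ w ∈ Set.Icc (0:ℝ) 1) ∧
    α ≤ ∑ w, P w * φ w ∧ r = ∑ w, Q w * φ w} with hSdef
  have hbeta : betaHT α P Q = sInf S := rfl
  set A := univ.filter (fun w => Q w < lam * P w) with hAdef
  set E := univ.filter (fun w => Q w = lam * P w) with hEdef
  set B := univ.filter (fun w => Q w ≤ lam * P w) with hBdef
  set T : ℝ := (∑ w, min (Q w) (lam * P w)) - lam * (1 - α) with hTdef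
  have hPle1 : ∀ w, P w ≤ 1 := fun w => by
    rw [← hP1]; exact Finset.single_le_sum (fun i _ => hP0 i) (mem_univ w)
  -- lower bound
  have hlow : ∀ r ∈ S, T ≤ r := by
    rintro r ⟨φ, hφ, hfeas, rfl⟩
    have key := Finset.sum_le_sum (fun w (_ : w ∈ univ) =>
      base_pt (Q w) (P w) lam (φ w) (hQ0 w) (hP0 w) hlam (hφ w).1 (hφ w).2)
    rw [sum_base P Q φ lam hP1] at key
    have h2 : lam * α ≤ lam * ∑ w, P w * φ w := mul_le_mul_of_nonneg_left hfeas hlam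
    rw [hTdef]; linarith
  have hne : S.Nonempty := by
    refine ⟨∑ w, Q w * 1, fun _ => 1, fun w => ⟨zero_le_one, le_refl 1⟩, ?_, rfl⟩
    simp only [mul_one, hP1]; exact hα1
  have hbdd : BddBelow S := ⟨T, hlow⟩
  -- splitting lemma
  have hsplit : ∀ f : Ω → ℝ, ∑ w ∈ B, f w = ∑ w ∈ A, f w + ∑ w ∈ E, f w := by
    intro f
    rw [hAdef, hBdef, hEdef, Finset.sum_filter, Finset.sum_filter, Finset.sum_filter,
      ← Finset.sum_add_distrib]
    refine Finset.sum_congr rfl fun w _ => ?_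
    rcases lt_trichotomy (Q w) (lam * P w) with h | h | h
    · rw [if_pos h.le, if_pos h, if_neg (ne_of_lt h), add_zero]
    · rw [if_pos h.le, if_neg (by rw [h]; exact lt_irrefl _), if_pos h, zero_add]
    · rw [if_neg (not_le.2 h), if_neg (not_lt.2 h.le), if_neg (ne_of_gt h), add_zero]
  have hQE : ∑ w ∈ E, Q w = lam * ∑ w ∈ E, P w := by
    rw [Finset.mul_sum]
    exact Finset.sum_congr rfl fun w hw => (Finset.mem_filter.1 hw).2
  have hminsum : ∑ w, min (Q w) (lam * P w) =
      (∑ w ∈ B, Q w) + lam * (1 - ∑ w ∈ B, P w) := by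
    have h1 := Finset.sum_filter_add_sum_filter_not univ
      (fun w => Q w ≤ lam * P w) (fun w => min (Q w) (lam * P w))
    have h2 := Finset.sum_filter_add_sum_filter_not univ
      (fun w => Q w ≤ lam * P w) P
    rw [hP1] at h2
    have e1 : ∑ w ∈ univ.filter (fun w => Q w ≤ lam * P w), min (Q w) (lam * P w)
        = ∑ w ∈ B, Q w :=
      Finset.sum_congr rfl fun w hw => min_eq_left (Finset.mem_filter.1 hw).2
    have e2 : ∑ w ∈ univ.filter (fun w => ¬ Q w ≤ lam * P w), min (Q w) (lam * P w)
        = lam * ∑ w ∈ univ.filter (fun w => ¬ Q w ≤ lam * P w), P w := by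
      rw [Finset.mul_sum]
      exact Finset.sum_congr rfl fun w hw =>
        min_eq_right (le_of_lt (not_le.1 (Finset.mem_filter.1 hw).2))
    rw [← h1, e1, e2]; rw [hBdef]; nlinarith [h2]
  have hTval : T = (∑ w ∈ A, Q w) + lam * (α - ∑ w ∈ A, P w) := by
    rw [hTdef, hminsum, hsplit Q, hsplit P, hQE]; ring
  constructor
  · intro heq
    by_contra hc
    rcases not_and_or.1 hc with hc | hc
    · push_neg at hc
      have hδ : 0 < (∑ w ∈ A, P w) - α := by linarith
      have hApos : (0:ℝ) < ∑ w ∈ A, P w := lt_of_le_of_lt hα0 hc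
      have hAne : A.Nonempty := by
        rcases A.eq_empty_or_nonempty with h | h
        · rw [h, Finset.sum_empty] at hApos; linarith
        · exact h
      obtain ⟨w₀, hw₀⟩ := hAne
      have hw₀lt : Q w₀ < lam * P w₀ := (Finset.mem_filter.1 hw₀).2
      have hlampos : 0 < lam := by
        by_contra hl; push_neg at hl
        nlinarith [hQ0 w₀, hP0 w₀]
      set c := A.inf' ⟨w₀, hw₀⟩ (fun w => lam * P w - Q w) with hcdef
      have hcpos : 0 < c := by
        rw [hcdef]; refine (Finset.lt_inf'_iff _).2 ?_
        intro w hw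
        have := (Finset.mem_filter.1 hw).2; linarith
      have hcle : ∀ w ∈ A, c ≤ lam * P w - Q w := fun w hw => Finset.inf'_le _ hw
      have hpos : (0:ℝ) < lam + c := by linarith
      have hgap : ∀ r ∈ S, T + c * lam * ((∑ w ∈ A, P w) - α) / (lam + c) ≤ r := by
        rintro r ⟨φ, hφ, hfeas, rfl⟩
        have key : ∀ w ∈ (univ : Finset Ω),
            (min (Q w) (lam * P w) - lam * P w + lam * (P w * φ w)) +
              (if w ∈ A then c * (P w - P w * φ w) else 0) ≤ Q w * φ w := by
          intro w _
          by_cases hw : w ∈ A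
          · rw [if_pos hw]
            have hqlt := (Finset.mem_filter.1 hw).2
            have hcw := hcle w hw
            rw [min_eq_left hqlt.le]
            nlinarith [(hφ w).1, (hφ w).2, hP0 w, hPle1 w,
              mul_nonneg (by linarith : (0:ℝ) ≤ lam * P w - Q w - c)
                (by linarith [(hφ w).2] : (0:ℝ) ≤ 1 - φ w),
              mul_nonneg (mul_nonneg hcpos.le (by linarith [hPle1 w] : (0:ℝ) ≤ 1 - P w))
                (by linarith [(hφ w).2] : (0:ℝ) ≤ 1 - φ w)]
          · rw [if_neg hw, add_zero]
            exact base_pt _ _ _ _ (hQ0 w) (hP0 w) hlam (hφ w).1 (hφ w).2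
        have hsum := Finset.sum_le_sum key
        rw [Finset.sum_add_distrib, sum_base P Q φ lam hP1] at hsum
        have hite : ∑ w, (if w ∈ A then c * (P w - P w * φ w) else 0)
            = c * ((∑ w ∈ A, P w) - ∑ w ∈ A, P w * φ w) := by
          rw [Finset.sum_ite_mem, Finset.univ_inter, ← Finset.mul_sum,
            Finset.sum_sub_distrib]
        rw [hite] at hsum
        have huPA : (∑ w ∈ A, P w * φ w) ≤ ∑ w ∈ A, P w :=
          Finset.sum_le_sum (fun w _ => mul_le_of_le_one_right (hP0 w) (hφ w).2)
        have huF : (∑ w ∈ A, P w * φ w) ≤ ∑ w, P w * φ w :=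
          Finset.sum_le_sum_of_subset_of_nonneg (Finset.subset_univ A)
            (fun w _ _ => mul_nonneg (hP0 w) (hφ w).1)
        have hX : lam * ((∑ w, P w * φ w) - α) +
            c * ((∑ w ∈ A, P w) - ∑ w ∈ A, P w * φ w) ≤ (∑ w, Q w * φ w) - T := by
          rw [hTdef]; linarith [hsum]
        have h5 : c * lam * ((∑ w ∈ A, P w) - α) ≤
            (lam + c) * (lam * ((∑ w, P w * φ w) - α) +
              c * ((∑ w ∈ A, P w) - ∑ w ∈ A, P w * φ w)) := by
          nlinarith [mul_nonneg (mul_nonneg hlampos.le hlampos.le) (sub_nonneg.2 hfeas),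
            mul_nonneg (mul_nonneg hcpos.le hcpos.le) (sub_nonneg.2 huPA),
            mul_nonneg (mul_nonneg hcpos.le hlampos.le) (sub_nonneg.2 huF)]
        have h6 := mul_le_mul_of_nonneg_left hX (le_of_lt hpos)
        have h7 : c * lam * ((∑ w ∈ A, P w) - α) / (lam + c) ≤ (∑ w, Q w * φ w) - T :=
          (div_le_iff₀ hpos).2 (by
            linarith [h5, h6, mul_comm (lam + c) ((∑ w, Q w * φ w) - T)])
        linarith
      have hcon := le_csInf hne hgap
      rw [← hbeta, heq] at hcon
      have hεpos : 0 < c * lam * ((∑ w ∈ A, P w) - α) / (lam + c) :=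
        div_pos (mul_pos (mul_pos hcpos hlampos) hδ) hpos
      linarith
    · push_neg at hc
      have hδ : 0 < α - ∑ w ∈ B, P w := by linarith
      set C := univ.filter (fun w => lam * P w < Q w ∧ 0 < P w) with hCdef
      have hCne : C.Nonempty := by
        by_contra hCE
        rw [Finset.not_nonempty_iff_eq_empty, Finset.eq_empty_iff_forall_notMem] at hCE
        have hz : ∑ w ∈ univ.filter (fun w => ¬ Q w ≤ lam * P w), P w = 0 := by
          refine Finset.sum_eq_zero fun w hw => ?_
          have hnle := (Finset.mem_filter.1 hw).2
          by_contra hPw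
          exact hCE w (Finset.mem_filter.2 ⟨Finset.mem_univ w,
            not_le.1 hnle, lt_of_le_of_ne (hP0 w) (Ne.symm hPw)⟩)
        have htot := Finset.sum_filter_add_sum_filter_not univ (fun w => Q w ≤ lam * P w) P
        rw [hP1, hz, ← hBdef] at htot
        linarith
      set c := C.inf' hCne (fun w => Q w - lam * P w) with hcdef
      have hcpos : 0 < c := by
        rw [hcdef, Finset.lt_inf'_iff]
        intro w hw
        have := (Finset.mem_filter.1 hw).2.1; linarith
      have hcle : ∀ w ∈ C, c ≤ Q w - lam * P w := fun w hw => Finset.inf'_le _ hw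
      have hgap : ∀ r ∈ S, T + c * (α - ∑ w ∈ B, P w) ≤ r := by
        rintro r ⟨φ, hφ, hfeas, rfl⟩
        have key : ∀ w ∈ (univ : Finset Ω),
            (min (Q w) (lam * P w) - lam * P w + lam * (P w * φ w)) +
              (if w ∈ C then c * (P w * φ w) else 0) ≤ Q w * φ w := by
          intro w _
          by_cases hw : w ∈ C
          · rw [if_pos hw]
            obtain ⟨hqgt, hPpos⟩ := (Finset.mem_filter.1 hw).2
            have hcw := hcle w hw
            rw [min_eq_right hqgt.le]
            nlinarith [mul_nonneg (by linarith : (0:ℝ) ≤ Q w - lam * P w - c) (hφ w).1,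
              mul_nonneg (mul_nonneg hcpos.le (by linarith [hPle1 w] : (0:ℝ) ≤ 1 - P w))
                (hφ w).1]
          · rw [if_neg hw, add_zero]
            exact base_pt _ _ _ _ (hQ0 w) (hP0 w) hlam (hφ w).1 (hφ w).2
        have hsum := Finset.sum_le_sum key
        rw [Finset.sum_add_distrib, sum_base P Q φ lam hP1] at hsum
        have hite : ∑ w, (if w ∈ C then c * (P w * φ w) else 0)
            = c * ∑ w ∈ C, P w * φ w := by
          rw [Finset.sum_ite_mem, Finset.univ_inter, Finset.mul_sum]
        rw [hite] at hsum
        have hVlb : α - ∑ w ∈ B, P w ≤ ∑ w ∈ C, P w * φ w := by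
          have hsplitC := Finset.sum_filter_add_sum_filter_not univ
            (fun w => lam * P w < Q w ∧ 0 < P w) (fun w => P w * φ w)
          rw [← hCdef] at hsplitC
          have hrest : ∑ w ∈ univ.filter (fun w => ¬(lam * P w < Q w ∧ 0 < P w)),
              P w * φ w ≤ ∑ w ∈ B, P w := by
            calc ∑ w ∈ univ.filter (fun w => ¬(lam * P w < Q w ∧ 0 < P w)), P w * φ w
                ≤ ∑ w ∈ univ.filter (fun w => ¬(lam * P w < Q w ∧ 0 < P w)),
                    (if Q w ≤ lam * P w then P w else 0) := by
                  refine Finset.sum_le_sum fun w hw => ?_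
                  have hnot := (Finset.mem_filter.1 hw).2
                  by_cases hle : Q w ≤ lam * P w
                  · rw [if_pos hle]; exact mul_le_of_le_one_right (hP0 w) (hφ w).2
                  · rw [if_neg hle]
                    have hP0w : P w = 0 := le_antisymm
                      (not_lt.1 fun h => hnot ⟨not_le.1 hle, h⟩) (hP0 w)
                    rw [hP0w, zero_mul]
              _ ≤ ∑ w, (if Q w ≤ lam * P w then P w else 0) := by
                  refine Finset.sum_le_sum_of_subset_of_nonneg
                    (Finset.filter_subset _ _) (fun w _ _ => ?_)
                  by_cases hle : Q w ≤ lam * P w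
                  · rw [if_pos hle]; exact hP0 w
                  · rw [if_neg hle]
              _ = ∑ w ∈ B, P w := by rw [hBdef, Finset.sum_filter]
          linarith [hfeas]
        have h8 : c * (α - ∑ w ∈ B, P w) ≤ c * ∑ w ∈ C, P w * φ w :=
          mul_le_mul_of_nonneg_left hVlb hcpos.le
        have h9 : 0 ≤ lam * ((∑ w, P w * φ w) - α) :=
          mul_nonneg hlam (by linarith [hfeas])
        rw [hTdef]; nlinarith [hsum, h8, h9]
      have hcon := le_csInf hne hgap
      rw [← hbeta, heq] at hcon
      have hεpos : 0 < c * (α - ∑ w ∈ B, P w) := mul_pos hcpos hδ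
      linarith
  · rintro ⟨h1, h2⟩
    obtain ⟨s, hs0, hs1, hsPE⟩ : ∃ s : ℝ, 0 ≤ s ∧ s ≤ 1 ∧
        s * (∑ w ∈ E, P w) = α - ∑ w ∈ A, P w := by
      by_cases hPE : (∑ w ∈ E, P w) = 0
      · refine ⟨0, le_refl 0, zero_le_one, ?_⟩
        have hsp := hsplit P
        rw [hPE, mul_zero]; rw [hPE] at hsp; linarith
      · have hPEnn : 0 ≤ ∑ w ∈ E, P w := Finset.sum_nonneg fun w _ => hP0 w
        have hPEpos : 0 < ∑ w ∈ E, P w := lt_of_le_of_ne hPEnn (Ne.symm hPE)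
        refine ⟨(α - ∑ w ∈ A, P w) / (∑ w ∈ E, P w),
          div_nonneg (by linarith) hPEnn, ?_, div_mul_cancel₀ _ hPE⟩
        rw [div_le_one hPEpos]; have hsp := hsplit P; linarith
    set φ : Ω → ℝ := fun w => if Q w < lam * P w then 1 else
      if Q w = lam * P w then s else 0 with hφdef
    have hφw : ∀ w, φ w = if Q w < lam * P w then 1 else
      if Q w = lam * P w then s else 0 := fun w => rfl
    have hφmem : ∀ w, φ w ∈ Set.Icc (0:ℝ) 1 := by
      intro w; rw [Set.mem_Icc, hφw w]
      split_ifs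
      · exact ⟨zero_le_one, le_refl 1⟩
      · exact ⟨hs0, hs1⟩
      · exact ⟨le_refl 0, zero_le_one⟩
    have ptgen : ∀ f : Ω → ℝ, ∀ w, f w * φ w =
        (if Q w < lam * P w then f w else 0) + s * (if Q w = lam * P w then f w else 0) := by
      intro f w; rw [hφw w]
      split_ifs with ha hb
      · exact absurd hb (ne_of_lt ha)
      · ring
      · ring
      · ring
    have hsumφ : ∀ f : Ω → ℝ, ∑ w, f w * φ w =
        (∑ w ∈ A, f w) + s * (∑ w ∈ E, f w) := by
      intro f
      rw [Finset.sum_congr rfl (fun w _ => ptgen f w), Finset.sum_add_distrib,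
        ← Finset.mul_sum, ← Finset.sum_filter, ← Finset.sum_filter, hAdef, hEdef]
    have hTmem : T ∈ S := by
      refine ⟨φ, hφmem, ?_, ?_⟩
      · rw [hsumφ P]; linarith [hsPE]
      · rw [hsumφ Q, hQE, hTval]; linear_combination (-lam) * hsPE
    rw [hbeta]
    exact le_antisymm (csInf_le hbdd hTmem) (le_csInf hne hlow)
end

section
/- Let W be a finite set, let P and Q be probability mass functions on W, and let α ∈ [0,1]. Suppose λ ≥ 0 satisfies P({w : Q(w) < λ·P(w)}) ≤ α ≤ P({w : Q(w) ≤ λ·P(w)}) and λ₁ ≥ 0 does not satisfy this condition (i.e., either P({w : Q(w) < λ₁·P(w)}) > α or P({w : Q(w) ≤ λ₁·P(w)}) < α). Then Σ_{w∈W} min(Q(w), λ₁·P(w)) − λ₁·(1−α) < Σ_{w∈W} min(Q(w), λ·P(w)) − λ·(1−α), i.e., the inequality is strict. -/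
open Finset
open scoped Classical

lemma sum_min_le_aux {Ω : Type*} [Fintype Ω] (P Q : Ω → ℝ) (hP0 : ∀ w, 0 ≤ P w)
    {μ ν : ℝ} (h : μ ≤ ν) :
    ∑ w, min (Q w) (ν * P w) ≤
      ∑ w, min (Q w) (μ * P w) +
        (ν - μ) * ∑ w ∈ univ.filter (fun w => ¬ (Q w ≤ μ * P w)), P w := by
  rw [Finset.sum_filter, Finset.mul_sum, ← Finset.sum_add_distrib]
  apply Finset.sum_le_sum
  intro w _
  by_cases hw : Q w ≤ μ * P w
  · rw [if_neg (not_not.mpr hw), mul_zero, add_zero, min_eq_left hw]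
    exact min_le_left _ _
  · rw [if_pos hw, min_eq_right (le_of_not_ge hw)]
    have h2 : min (Q w) (ν * P w) ≤ ν * P w := min_le_right _ _
    nlinarith

lemma sum_min_ge_aux {Ω : Type*} [Fintype Ω] (P Q : Ω → ℝ) (hP0 : ∀ w, 0 ≤ P w)
    {μ ν : ℝ} (h : μ ≤ ν) :
    ∑ w, min (Q w) (μ * P w) +
        (ν - μ) * ∑ w ∈ univ.filter (fun w => ¬ (Q w < ν * P w)), P w ≤
      ∑ w, min (Q w) (ν * P w) := by
  rw [Finset.sum_filter, Finset.mul_sum, ← Finset.sum_add_distrib]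
  apply Finset.sum_le_sum
  intro w _
  have hPw := hP0 w
  by_cases hw : Q w < ν * P w
  · rw [if_neg (not_not.mpr hw), mul_zero, add_zero]
    exact min_le_min le_rfl (by nlinarith)
  · push_neg at hw
    rw [if_pos (not_lt.mpr hw), min_eq_right hw,
      min_eq_right (show μ * P w ≤ Q w by nlinarith)]
    nlinarith

theorem stmt_3 {Ω : Type*} [Fintype Ω] (P Q : Ω → ℝ)
    (hP : IsPMF P) (hQ : IsPMF Q) (α : ℝ) (hα : α ∈ Set.Icc (0:ℝ) 1)
    (lam lam₁ : ℝ) (hlam : 0 ≤ lam) (hlam₁ : 0 ≤ lam₁)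
    (hopt : (∑ w ∈ univ.filter (fun w => Q w < lam * P w), P w) ≤ α ∧
      α ≤ ∑ w ∈ univ.filter (fun w => Q w ≤ lam * P w), P w)
    (hnot : ¬ ((∑ w ∈ univ.filter (fun w => Q w < lam₁ * P w), P w) ≤ α ∧
      α ≤ ∑ w ∈ univ.filter (fun w => Q w ≤ lam₁ * P w), P w)) :
    (∑ w, min (Q w) (lam₁ * P w)) - lam₁ * (1 - α) <
      (∑ w, min (Q w) (lam * P w)) - lam * (1 - α) := by
  obtain ⟨hP0, hP1⟩ := hP
  obtain ⟨hQ0, _⟩ := hQ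
  obtain ⟨h1, h2⟩ := hopt
  have hcomp : ∀ (p : Ω → Prop),
      (∑ w ∈ univ.filter (fun w => ¬ p w), P w)
        = 1 - ∑ w ∈ univ.filter (fun w => p w), P w := by
    intro p
    have := Finset.sum_filter_add_sum_filter_not univ p P
    rw [show ∑ w ∈ univ, P w = 1 from hP1] at this
    linarith
  rcases not_and_or.mp hnot with ha | hb
  · -- Case A : α < ∑_{Q < lam₁ P} P
    push_neg at ha
    have hll : lam < lam₁ := by
      by_contra hc
      push_neg at hc
      have hsub : univ.filter (fun w => Q w < lam₁ * P w) ⊆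
          univ.filter (fun w => Q w < lam * P w) := by
        intro w hw
        simp only [mem_filter, mem_univ, true_and] at *
        have := hP0 w
        nlinarith
      have := Finset.sum_le_sum_of_subset_of_nonneg hsub (fun w _ _ => hP0 w)
      linarith
    have hex : ∃ t, lam ≤ t ∧ t < lam₁ ∧ ∀ w, Q w < lam₁ * P w → Q w ≤ t * P w := by
      have hTne : (insert lam ((univ.filter (fun w => Q w < lam₁ * P w)).image
          (fun w => Q w / P w))).Nonempty := ⟨lam, Finset.mem_insert_self _ _⟩
      refine ⟨(insert lam ((univ.filter (fun w => Q w < lam₁ * P w)).image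
          (fun w => Q w / P w))).max' hTne,
        Finset.le_max' _ _ (Finset.mem_insert_self _ _), ?_, ?_⟩
      · have hm := Finset.max'_mem _ hTne
        rw [Finset.mem_insert] at hm
        rcases hm with hm | hm
        · rw [hm]; exact hll
        · obtain ⟨w, hw, hwe⟩ := Finset.mem_image.mp hm
          rw [mem_filter] at hw
          have hw2 := hw.2
          have hPw : 0 < P w := by
            rcases lt_or_eq_of_le (hP0 w) with h | h
            · exact h
            · exfalso; have := hQ0 w; nlinarith
          rw [← hwe, div_lt_iff₀ hPw]
          linarith
      · intro w hw
        have hPw : 0 < P w := by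
          rcases lt_or_eq_of_le (hP0 w) with h | h
          · exact h
          · exfalso; have := hQ0 w; nlinarith
        have hmem : Q w / P w ∈ insert lam ((univ.filter (fun w => Q w < lam₁ * P w)).image
            (fun w => Q w / P w)) :=
          Finset.mem_insert_of_mem (Finset.mem_image_of_mem _ (by
            rw [mem_filter]; exact ⟨mem_univ _, hw⟩))
        have hle := Finset.le_max' _ _ hmem
        calc Q w = (Q w / P w) * P w := by field_simp
          _ ≤ _ * P w := by nlinarith
    obtain ⟨t, hlt, htl, hkey⟩ := hex
    have step1 : (∑ w, min (Q w) (t * P w)) - t * (1 - α) ≤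
        (∑ w, min (Q w) (lam * P w)) - lam * (1 - α) := by
      have hb1 := sum_min_le_aux P Q hP0 hlt
      rw [hcomp (fun w => Q w ≤ lam * P w)] at hb1
      have : (t - lam) * (1 - ∑ w ∈ univ.filter (fun w => Q w ≤ lam * P w), P w)
          ≤ (t - lam) * (1 - α) :=
        mul_le_mul_of_nonneg_left (by linarith) (by linarith)
      nlinarith
    have step2 : (∑ w, min (Q w) (lam₁ * P w)) - lam₁ * (1 - α) <
        (∑ w, min (Q w) (t * P w)) - t * (1 - α) := by
      have hb1 := sum_min_le_aux P Q hP0 (le_of_lt htl)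
      rw [hcomp (fun w => Q w ≤ t * P w)] at hb1
      have hsub : univ.filter (fun w => Q w < lam₁ * P w) ⊆
          univ.filter (fun w => Q w ≤ t * P w) := by
        intro w hw
        simp only [mem_filter, mem_univ, true_and] at *
        exact hkey w hw
      have hmono := Finset.sum_le_sum_of_subset_of_nonneg hsub (fun w _ _ => hP0 w)
      have hstrict : (lam₁ - t) * (1 - ∑ w ∈ univ.filter (fun w => Q w ≤ t * P w), P w)
          < (lam₁ - t) * (1 - α) :=
        mul_lt_mul_of_pos_left (by linarith) (by linarith)
      nlinarith
    linarith
  · -- Case B : ∑_{Q ≤ lam₁ P} P < α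
    push_neg at hb
    have hll : lam₁ < lam := by
      by_contra hc
      push_neg at hc
      have hsub : univ.filter (fun w => Q w ≤ lam * P w) ⊆
          univ.filter (fun w => Q w ≤ lam₁ * P w) := by
        intro w hw
        simp only [mem_filter, mem_univ, true_and] at *
        have := hP0 w
        nlinarith
      have := Finset.sum_le_sum_of_subset_of_nonneg hsub (fun w _ _ => hP0 w)
      linarith
    have hex : ∃ t, t ≤ lam ∧ lam₁ < t ∧ ∀ w, lam₁ * P w < Q w → t * P w ≤ Q w := by
      have hTne : (insert lam ((univ.filter (fun w => lam₁ * P w < Q w ∧ 0 < P w)).image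
          (fun w => Q w / P w))).Nonempty := ⟨lam, Finset.mem_insert_self _ _⟩
      refine ⟨(insert lam ((univ.filter (fun w => lam₁ * P w < Q w ∧ 0 < P w)).image
          (fun w => Q w / P w))).min' hTne,
        Finset.min'_le _ _ (Finset.mem_insert_self _ _), ?_, ?_⟩
      · have hm := Finset.min'_mem _ hTne
        rw [Finset.mem_insert] at hm
        rcases hm with hm | hm
        · rw [hm]; exact hll
        · obtain ⟨w, hw, hwe⟩ := Finset.mem_image.mp hm
          rw [mem_filter] at hw
          obtain ⟨_, hw2, hPw⟩ := hw
          rw [← hwe, lt_div_iff₀ hPw]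
          linarith
      · intro w hw
        rcases lt_or_eq_of_le (hP0 w) with hPw | hPw
        · have hmem : Q w / P w ∈ insert lam
              ((univ.filter (fun w => lam₁ * P w < Q w ∧ 0 < P w)).image (fun w => Q w / P w)) :=
            Finset.mem_insert_of_mem (Finset.mem_image_of_mem _ (by
              rw [mem_filter]; exact ⟨mem_univ _, hw, hPw⟩))
          have hle := Finset.min'_le _ _ hmem
          calc _ * P w ≤ (Q w / P w) * P w := by nlinarith
            _ = Q w := by field_simp
        · rw [← hPw, mul_zero]; exact hQ0 w
    obtain ⟨t, htl, hlt, hkey⟩ := hex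
    have step1 : (∑ w, min (Q w) (lam₁ * P w)) - lam₁ * (1 - α) <
        (∑ w, min (Q w) (t * P w)) - t * (1 - α) := by
      have hb1 := sum_min_ge_aux P Q hP0 (le_of_lt hlt)
      have hsub : univ.filter (fun w => ¬ (Q w ≤ lam₁ * P w)) ⊆
          univ.filter (fun w => ¬ (Q w < t * P w)) := by
        intro w hw
        simp only [mem_filter, mem_univ, true_and, not_le, not_lt] at *
        exact hkey w hw
      have hmono := Finset.sum_le_sum_of_subset_of_nonneg hsub (fun w _ _ => hP0 w)
      rw [hcomp (fun w => Q w ≤ lam₁ * P w)] at hmono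
      have hstrict : (t - lam₁) * (1 - α) <
          (t - lam₁) * (∑ w ∈ univ.filter (fun w => ¬ (Q w < t * P w)), P w) :=
        mul_lt_mul_of_pos_left (by linarith) (by linarith)
      nlinarith
    have step2 : (∑ w, min (Q w) (t * P w)) - t * (1 - α) ≤
        (∑ w, min (Q w) (lam * P w)) - lam * (1 - α) := by
      have hb1 := sum_min_ge_aux P Q hP0 htl
      rw [hcomp (fun w => Q w < lam * P w)] at hb1
      have : (lam - t) * (1 - α) ≤
          (lam - t) * (1 - ∑ w ∈ univ.filter (fun w => Q w < lam * P w), P w) :=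
        mul_le_mul_of_nonneg_left (by linarith) (by linarith)
      nlinarith
    linarith
end

section
/- Let X and Y be finite sets, let W : X × Y → [0,1] be a channel (for each x ∈ X, Σ_{y∈Y} W(y|x) = 1), and fix R > 0. Define γ(Q_X, z) = Σ_{x∈X} Σ_{y∈Y} Q_X(x)·min(W(y|x), z_y) − e^{−R}·Σ_{y∈Y} z_y. Then γ admits a saddle point: there exist a probability mass function Q_X* on X and z* ∈ [0,1]^Y such that γ(Q_X*, z) ≤ γ(Q_X*, z*) ≤ γ(Q_X, z*) for every probability mass function Q_X on X and every z ∈ [0,1]^Y. Consequently min_{Q_X} max_{z∈[0,1]^Y} γ(Q_X, z) = max_{z∈[0,1]^Y} min_{Q_X} γ(Q_X, z), where the min is over all probability mass functions Q_X on X. -/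
open Finset
open scoped Classical

/-- The functional `γ(Q_X, z)` of the paper; `W x y` denotes `W(y|x)`. -/
noncomputable def gammaFn {X Y : Type*} [Fintype X] [Fintype Y]
    (W : X → Y → ℝ) (R : ℝ) (Q : X → ℝ) (z : Y → ℝ) : ℝ :=
  (∑ x, ∑ y, Q x * min (W x y) (z y)) - Real.exp (-R) * ∑ y, z y

set_option linter.unusedSectionVars false

section Aux
variable {X Y : Type*} [Fintype X] [Fintype Y]

noncomputable def phiFn (W : X → Y → ℝ) (R : ℝ) (x : X) (z : Y → ℝ) : ℝ :=
  (∑ y, min (W x y) (z y)) - Real.exp (-R) * ∑ y, z y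

lemma gamma_eq_sum (W : X → Y → ℝ) (R : ℝ) {Q : X → ℝ} (hQ : ∑ x, Q x = 1) (z : Y → ℝ) :
    gammaFn W R Q z = ∑ x, Q x * phiFn W R x z := by
  unfold gammaFn phiFn
  simp only [mul_sub, Finset.sum_sub_distrib, Finset.mul_sum]
  congr 1
  simp only [← Finset.mul_sum]
  rw [← Finset.sum_mul, hQ, one_mul]

lemma phi_cont (W : X → Y → ℝ) (R : ℝ) (x : X) : Continuous (fun z : Y → ℝ => phiFn W R x z) := by
  unfold phiFn
  exact (continuous_finset_sum _ fun y _ => continuous_const.min (continuous_apply y)).sub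
    (continuous_const.mul (continuous_finset_sum _ fun y _ => continuous_apply y))

lemma phi_concave (W : X → Y → ℝ) (R : ℝ) (x : X) {z1 z2 : Y → ℝ} {a b : ℝ}
    (ha : 0 ≤ a) (hb : 0 ≤ b) (hab : a + b = 1) :
    a * phiFn W R x z1 + b * phiFn W R x z2 ≤ phiFn W R x (a • z1 + b • z2) := by
  have key : ∀ y, a * min (W x y) (z1 y) + b * min (W x y) (z2 y)
      ≤ min (W x y) (a * z1 y + b * z2 y) := by
    intro y
    have h1 := min_le_left (W x y) (z1 y)
    have h2 := min_le_right (W x y) (z1 y)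
    have h3 := min_le_left (W x y) (z2 y)
    have h4 := min_le_right (W x y) (z2 y)
    have hWe : a * W x y + b * W x y = W x y := by rw [← add_mul, hab, one_mul]
    refine le_min ?_ ?_
    · linarith [mul_le_mul_of_nonneg_left h1 ha, mul_le_mul_of_nonneg_left h3 hb]
    · linarith [mul_le_mul_of_nonneg_left h2 ha, mul_le_mul_of_nonneg_left h4 hb]
  unfold phiFn
  have hs : ∀ y, (a • z1 + b • z2) y = a * z1 y + b * z2 y := by
    intro y; simp [smul_eq_mul]
  simp only [hs]
  have hsum : ∑ y, (a * min (W x y) (z1 y) + b * min (W x y) (z2 y))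
      ≤ ∑ y, min (W x y) (a * z1 y + b * z2 y) := Finset.sum_le_sum fun y _ => key y
  have e1 : ∑ y, (a * min (W x y) (z1 y) + b * min (W x y) (z2 y))
      = a * ∑ y, min (W x y) (z1 y) + b * ∑ y, min (W x y) (z2 y) := by
    rw [Finset.sum_add_distrib, Finset.mul_sum, Finset.mul_sum]
  have e2 : ∑ y, (a * z1 y + b * z2 y) = a * ∑ y, z1 y + b * ∑ y, z2 y := by
    rw [Finset.sum_add_distrib, Finset.mul_sum, Finset.mul_sum]
  rw [e2]
  nlinarith [hsum, e1]

end Aux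
lemma exists_saddle {X Y : Type*} [Fintype X] [Fintype Y] [Nonempty X] [Nonempty Y]
    (W : X → Y → ℝ)
    (hW : ∀ x y, W x y ∈ Set.Icc (0:ℝ) 1) (hWsum : ∀ x, ∑ y, W x y = 1)
    (R : ℝ) (hR : 0 < R) :
    ∃ Qs : X → ℝ, ∃ zs : Y → ℝ, IsPMF Qs ∧ (∀ y, zs y ∈ Set.Icc (0:ℝ) 1) ∧
      (∀ z : Y → ℝ, (∀ y, z y ∈ Set.Icc (0:ℝ) 1) → gammaFn W R Qs z ≤ gammaFn W R Qs zs) ∧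
      (∀ Q : X → ℝ, IsPMF Q → gammaFn W R Qs zs ≤ gammaFn W R Q zs) := by
  classical
  set K : Set (Y → ℝ) := Set.univ.pi fun _ => Set.Icc (0:ℝ) 1 with hKdef
  have hKmem : ∀ z : Y → ℝ, z ∈ K ↔ ∀ y, z y ∈ Set.Icc (0:ℝ) 1 := by
    intro z; simp [hKdef, Set.mem_pi, Pi.le_def, Set.mem_Icc, forall_and]
  have hKcomp : IsCompact K := isCompact_univ_pi fun _ => isCompact_Icc
  have hKconv : Convex ℝ K := convex_pi fun _ _ => convex_Icc 0 1
  have hKne : K.Nonempty := ⟨fun _ => 0, (hKmem _).2 fun y => ⟨le_refl 0, zero_le_one⟩⟩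
  set μ : (Y → ℝ) → ℝ :=
    fun z => Finset.univ.inf' Finset.univ_nonempty (fun x => phiFn W R x z) with hμdef
  have hμcont : Continuous μ :=
    Continuous.finset_inf'_apply _ fun x _ => phi_cont W R x
  obtain ⟨zs, hzsK, hzsmax⟩ := hKcomp.exists_isMaxOn hKne hμcont.continuousOn
  set v : ℝ := μ zs with hvdef
  have hμle : ∀ z ∈ K, μ z ≤ v := fun z hz => hzsmax hz
  have hvle : ∀ x, v ≤ phiFn W R x zs := by
    intro x
    have := Finset.inf'_le (fun x => phiFn W R x zs) (Finset.mem_univ x)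
    exact this
  set A : Set (X → ℝ) := {a | ∃ z ∈ K, ∀ x, a x ≤ phiFn W R x z} with hAdef
  set B : Set (X → ℝ) := {b | ∀ x, v < b x} with hBdef
  have hAconv : Convex ℝ A := by
    rintro a1 ⟨z1, hz1, h1⟩ a2 ⟨z2, hz2, h2⟩ t s ht hs hts
    refine ⟨t • z1 + s • z2, hKconv hz1 hz2 ht hs hts, fun x => ?_⟩
    have hcon := phi_concave W R x (z1 := z1) (z2 := z2) ht hs hts
    have e1 : (t • a1 + s • a2) x = t * a1 x + s * a2 x := by simp [smul_eq_mul]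
    rw [e1]
    have := mul_le_mul_of_nonneg_left (h1 x) ht
    have := mul_le_mul_of_nonneg_left (h2 x) hs
    linarith
  have hBconv : Convex ℝ B := by
    rintro b1 h1 b2 h2 t s ht hs hts x
    have e1 : (t • b1 + s • b2) x = t * b1 x + s * b2 x := by simp [smul_eq_mul]
    rw [e1]
    have hv : t * v + s * v = v := by rw [← add_mul, hts, one_mul]
    rcases ht.lt_or_eq with ht' | ht'
    · have hh1 := mul_lt_mul_of_pos_left (h1 x) ht'
      have hh2 := mul_le_mul_of_nonneg_left (h2 x).le hs
      linarith
    · have hs1 : s = 1 := by linarith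
      have := h2 x
      rw [← ht', hs1]; simpa using this
  have hBopen : IsOpen B := by
    have : B = ⋂ x, {b : X → ℝ | v < b x} := by
      ext b; simp [hBdef, Set.mem_iInter]
    rw [this]
    exact isOpen_iInter_of_finite fun x => isOpen_lt continuous_const (continuous_apply x)
  have hdisj : Disjoint B A := by
    rw [Set.disjoint_left]
    rintro b hbB ⟨z, hzK, hle⟩
    have hlt : v < μ z := by
      rw [hμdef]
      refine (Finset.lt_inf'_iff _).mpr fun x _ => lt_of_lt_of_le (hbB x) (hle x)
    exact absurd (hμle z hzK) (not_le.mpr hlt)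
  obtain ⟨f, u, hfB, hfA⟩ := geometric_hahn_banach_open hBconv hBopen hAconv hdisj
  set lam : X → ℝ := fun x => f (fun j => if x = j then (1:ℝ) else 0) with hlamdef
  have hrep : ∀ w : X → ℝ, f w = ∑ x, w x * lam x := by
    intro w
    conv_lhs => rw [pi_eq_sum_univ w]
    rw [map_sum]
    simp only [map_smul, smul_eq_mul, hlamdef]
  have ha0A : (fun x => phiFn W R x zs) ∈ A := ⟨zs, hzsK, fun x => le_refl _⟩
  have hb0B : (fun _ : X => v + 1) ∈ B := fun x => by simp
  have hcu : f (fun _ : X => v + 1) < u := hfB _ hb0B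
  have hlamneg : ∀ x, lam x ≤ 0 := by
    intro x
    by_contra hpos
    push_neg at hpos
    set c : ℝ := f (fun _ : X => v + 1) with hcdef
    set t : ℝ := (|u - c| + 1) / lam x with htdef
    have ht0 : 0 ≤ t := by
      rw [htdef]; positivity
    have hbt : ((fun _ : X => v + 1) + t • fun j => if x = j then (1:ℝ) else 0) ∈ B := by
      intro x'
      simp only [Pi.add_apply, Pi.smul_apply, smul_eq_mul]
      rcases eq_or_ne x x' with hx | hx
      · rw [if_pos hx, mul_one]; linarith
      · rw [if_neg hx, mul_zero]; linarith
    have hlt := hfB _ hbt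
    rw [map_add, map_smul] at hlt
    have hlt' : c + t * lam x < u := by
      have : f (fun j => if x = j then (1:ℝ) else 0) = lam x := by rw [hlamdef]
      rw [this] at hlt
      simpa [smul_eq_mul] using hlt
    have : u - c < t * lam x := by
      rw [htdef, div_mul_cancel₀ _ hpos.ne']
      have := le_abs_self (u - c)
      linarith
    linarith
  set S : ℝ := ∑ x, -lam x with hSdef
  have hS0 : 0 ≤ S := Finset.sum_nonneg fun x _ => by linarith [hlamneg x]
  have hSpos : 0 < S := by
    rcases hS0.lt_or_eq with h | h
    · exact h
    · exfalso
      have hall : ∀ x, lam x = 0 := by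
        intro x
        have := (Finset.sum_eq_zero_iff_of_nonneg
          (fun x _ => by linarith [hlamneg x] : ∀ x ∈ Finset.univ, (0:ℝ) ≤ -lam x)).mp h.symm
        have := this x (Finset.mem_univ x)
        linarith
      have hf0 : ∀ w : X → ℝ, f w = 0 := by
        intro w; rw [hrep w]
        exact Finset.sum_eq_zero fun x _ => by rw [hall x, mul_zero]
      have h1 := hfA _ ha0A
      rw [hf0] at h1
      rw [hf0] at hcu
      linarith
  set Qs : X → ℝ := fun x => -lam x / S with hQsdef
  have hQsPMF : IsPMF Qs := by
    constructor
    · intro x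
      exact div_nonneg (by linarith [hlamneg x]) hS0
    · rw [hQsdef]
      simp only
      rw [← Finset.sum_div, ← hSdef, div_self hSpos.ne']
  -- the "−u ≤ v * S" bound
  have hεbound : ∀ ε : ℝ, 0 < ε → -u < (v + ε) * S := by
    intro ε hε
    have hbB : (fun _ : X => v + ε) ∈ B := fun x => by simp [hε]
    have := hfB _ hbB
    rw [hrep] at this
    have hsum : ∑ x, (v + ε) * lam x = -((v + ε) * S) := by
      rw [hSdef, Finset.mul_sum]
      rw [← Finset.sum_neg_distrib]
      refine Finset.sum_congr rfl fun x _ => by ring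
    rw [hsum] at this
    linarith
  have huvS : -u ≤ v * S := by
    by_contra h
    push_neg at h
    have hε : 0 < (-u - v * S) / (2 * S) := div_pos (by linarith) (by linarith)
    have := hεbound _ hε
    have heq : ((-u - v * S) / (2 * S)) * S = (-u - v * S) / 2 := by
      field_simp
    nlinarith [this]
  have key1 : ∀ z ∈ K, ∑ x, Qs x * phiFn W R x z ≤ v := by
    intro z hz
    have haA : (fun x => phiFn W R x z) ∈ A := ⟨z, hz, fun x => le_refl _⟩
    have hu := hfA _ haA
    rw [hrep] at hu
    have hsum : ∑ x, Qs x * phiFn W R x z = (∑ x, phiFn W R x z * -lam x) / S := by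
      rw [Finset.sum_div]
      refine Finset.sum_congr rfl fun x _ => by rw [hQsdef]; ring
    rw [hsum, div_le_iff₀ hSpos]
    have e1 : ∑ x, phiFn W R x z * -lam x = -∑ x, phiFn W R x z * lam x := by
      rw [← Finset.sum_neg_distrib]
      exact Finset.sum_congr rfl fun x _ => by ring
    rw [e1]
    linarith
  have key2 : ∀ Q : X → ℝ, IsPMF Q → v ≤ ∑ x, Q x * phiFn W R x zs := by
    intro Q hQ
    have : ∑ x, Q x * v ≤ ∑ x, Q x * phiFn W R x zs :=
      Finset.sum_le_sum fun x _ => mul_le_mul_of_nonneg_left (hvle x) (hQ.1 x)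
    have hQv : ∑ x, Q x * v = v := by rw [← Finset.sum_mul, hQ.2, one_mul]
    linarith
  refine ⟨Qs, zs, hQsPMF, (hKmem zs).mp hzsK, ?_, ?_⟩
  · intro z hzIcc
    rw [gamma_eq_sum W R hQsPMF.2, gamma_eq_sum W R hQsPMF.2]
    have h1 := key1 z ((hKmem z).mpr hzIcc)
    have h2 := key2 Qs hQsPMF
    linarith
  · intro Q hQ
    rw [gamma_eq_sum W R hQsPMF.2, gamma_eq_sum W R hQ.2]
    have h1 := key1 zs hzsK
    have h2 := key2 Q hQ
    linarith

theorem stmt_5 {X Y : Type*} [Fintype X] [Fintype Y] [Nonempty X] [Nonempty Y]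
    (W : X → Y → ℝ)
    (hW : ∀ x y, W x y ∈ Set.Icc (0:ℝ) 1) (hWsum : ∀ x, ∑ y, W x y = 1)
    (R : ℝ) (hR : 0 < R) :
    -- existence of a saddle point
    (∃ Qs : X → ℝ, ∃ zs : Y → ℝ, IsPMF Qs ∧ (∀ y, zs y ∈ Set.Icc (0:ℝ) 1) ∧
      (∀ z : Y → ℝ, (∀ y, z y ∈ Set.Icc (0:ℝ) 1) →
        gammaFn W R Qs z ≤ gammaFn W R Qs zs) ∧
      (∀ Q : X → ℝ, IsPMF Q → gammaFn W R Qs zs ≤ gammaFn W R Q zs)) ∧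
    -- consequently, min-max equals max-min
    sInf {v | ∃ Q : X → ℝ, IsPMF Q ∧
        v = sSup {w | ∃ z : Y → ℝ, (∀ y, z y ∈ Set.Icc (0:ℝ) 1) ∧ w = gammaFn W R Q z}}
      = sSup {v | ∃ z : Y → ℝ, (∀ y, z y ∈ Set.Icc (0:ℝ) 1) ∧
          v = sInf {w | ∃ Q : X → ℝ, IsPMF Q ∧ w = gammaFn W R Q z}} := by
  classical
  obtain ⟨Qs, zs, hQs, hzs, hsadZ, hsadQ⟩ := exists_saddle W hW hWsum R hR
  refine ⟨⟨Qs, zs, hQs, hzs, hsadZ, hsadQ⟩, ?_⟩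
  set g : ℝ := gammaFn W R Qs zs with hg
  -- upper and lower bounds for gammaFn
  have hub : ∀ Q : X → ℝ, IsPMF Q → ∀ z : Y → ℝ, (∀ y, z y ∈ Set.Icc (0:ℝ) 1) →
      gammaFn W R Q z ≤ 1 := by
    intro Q hQ z hz
    unfold gammaFn
    have h1 : ∑ x, ∑ y, Q x * min (W x y) (z y) ≤ 1 := by
      calc ∑ x, ∑ y, Q x * min (W x y) (z y)
          ≤ ∑ x, Q x := by
            refine Finset.sum_le_sum fun x _ => ?_
            rw [← Finset.mul_sum]
            calc Q x * ∑ y, min (W x y) (z y)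
                ≤ Q x * ∑ y, W x y := by
                  refine mul_le_mul_of_nonneg_left ?_ (hQ.1 x)
                  exact Finset.sum_le_sum fun y _ => min_le_left _ _
              _ = Q x := by rw [hWsum x, mul_one]
        _ = 1 := hQ.2
    have h2 : 0 ≤ Real.exp (-R) * ∑ y, z y :=
      mul_nonneg (Real.exp_pos _).le (Finset.sum_nonneg fun y _ => (hz y).1)
    linarith
  have hlb : ∀ Q : X → ℝ, IsPMF Q → ∀ z : Y → ℝ, (∀ y, z y ∈ Set.Icc (0:ℝ) 1) →
      -(Fintype.card Y : ℝ) ≤ gammaFn W R Q z := by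
    intro Q hQ z hz
    unfold gammaFn
    have h1 : 0 ≤ ∑ x, ∑ y, Q x * min (W x y) (z y) :=
      Finset.sum_nonneg fun x _ => Finset.sum_nonneg fun y _ =>
        mul_nonneg (hQ.1 x) (le_min (hW x y).1 (hz y).1)
    have h2 : Real.exp (-R) * ∑ y, z y ≤ (Fintype.card Y : ℝ) := by
      have hz0 : 0 ≤ ∑ y, z y := Finset.sum_nonneg fun y _ => (hz y).1
      have he : Real.exp (-R) ≤ 1 := Real.exp_le_one_iff.mpr (by linarith)
      have hzc : ∑ y, z y ≤ (Fintype.card Y : ℝ) := by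
        calc ∑ y, z y ≤ ∑ _y : Y, (1:ℝ) := Finset.sum_le_sum fun y _ => (hz y).2
          _ = (Fintype.card Y : ℝ) := by simp [Finset.card_univ]
      calc Real.exp (-R) * ∑ y, z y ≤ ∑ y, z y := mul_le_of_le_one_left hz0 he
        _ ≤ _ := hzc
    linarith
  -- the left-hand side
  have hSSne : ∀ Q : X → ℝ,
      ({w | ∃ z : Y → ℝ, (∀ y, z y ∈ Set.Icc (0:ℝ) 1) ∧ w = gammaFn W R Q z}).Nonempty :=
    fun Q => ⟨gammaFn W R Q zs, zs, hzs, rfl⟩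
  have hSSbdd : ∀ Q : X → ℝ, IsPMF Q →
      BddAbove {w | ∃ z : Y → ℝ, (∀ y, z y ∈ Set.Icc (0:ℝ) 1) ∧ w = gammaFn W R Q z} := by
    intro Q hQ
    exact ⟨1, by rintro w ⟨z, hz, rfl⟩; exact hub Q hQ z hz⟩
  have hMQs : sSup {w | ∃ z : Y → ℝ, (∀ y, z y ∈ Set.Icc (0:ℝ) 1) ∧ w = gammaFn W R Qs z}
      = g := by
    refine le_antisymm (csSup_le (hSSne Qs) ?_) (le_csSup (hSSbdd Qs hQs) ⟨zs, hzs, rfl⟩)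
    rintro w ⟨z, hz, rfl⟩
    exact hsadZ z hz
  have hgL : g ∈ {v | ∃ Q : X → ℝ, IsPMF Q ∧
      v = sSup {w | ∃ z : Y → ℝ, (∀ y, z y ∈ Set.Icc (0:ℝ) 1) ∧ w = gammaFn W R Q z}} :=
    ⟨Qs, hQs, hMQs.symm⟩
  have hLlb : ∀ v ∈ {v | ∃ Q : X → ℝ, IsPMF Q ∧
      v = sSup {w | ∃ z : Y → ℝ, (∀ y, z y ∈ Set.Icc (0:ℝ) 1) ∧ w = gammaFn W R Q z}},
      g ≤ v := by
    rintro v ⟨Q, hQ, rfl⟩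
    calc g ≤ gammaFn W R Q zs := hsadQ Q hQ
      _ ≤ _ := le_csSup (hSSbdd Q hQ) ⟨zs, hzs, rfl⟩
  have hL : sInf {v | ∃ Q : X → ℝ, IsPMF Q ∧
      v = sSup {w | ∃ z : Y → ℝ, (∀ y, z y ∈ Set.Icc (0:ℝ) 1) ∧ w = gammaFn W R Q z}} = g :=
    le_antisymm (csInf_le ⟨g, hLlb⟩ hgL) (le_csInf ⟨g, hgL⟩ hLlb)
  -- the right-hand side
  have hIIbdd : ∀ z : Y → ℝ, (∀ y, z y ∈ Set.Icc (0:ℝ) 1) →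
      BddBelow {w | ∃ Q : X → ℝ, IsPMF Q ∧ w = gammaFn W R Q z} := by
    intro z hz
    exact ⟨-(Fintype.card Y : ℝ), by rintro w ⟨Q, hQ, rfl⟩; exact hlb Q hQ z hz⟩
  have hmzs : sInf {w | ∃ Q : X → ℝ, IsPMF Q ∧ w = gammaFn W R Q zs} = g := by
    refine le_antisymm (csInf_le (hIIbdd zs hzs) ⟨Qs, hQs, rfl⟩)
      (le_csInf ⟨g, Qs, hQs, rfl⟩ ?_)
    rintro w ⟨Q, hQ, rfl⟩
    exact hsadQ Q hQ
  have hgR : g ∈ {v | ∃ z : Y → ℝ, (∀ y, z y ∈ Set.Icc (0:ℝ) 1) ∧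
      v = sInf {w | ∃ Q : X → ℝ, IsPMF Q ∧ w = gammaFn W R Q z}} :=
    ⟨zs, hzs, hmzs.symm⟩
  have hRub : ∀ v ∈ {v | ∃ z : Y → ℝ, (∀ y, z y ∈ Set.Icc (0:ℝ) 1) ∧
      v = sInf {w | ∃ Q : X → ℝ, IsPMF Q ∧ w = gammaFn W R Q z}}, v ≤ g := by
    rintro v ⟨z, hz, rfl⟩
    calc sInf {w | ∃ Q : X → ℝ, IsPMF Q ∧ w = gammaFn W R Q z}
        ≤ gammaFn W R Qs z := csInf_le (hIIbdd z hz) ⟨Qs, hQs, rfl⟩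
      _ ≤ g := hsadZ z hz
  have hRR : sSup {v | ∃ z : Y → ℝ, (∀ y, z y ∈ Set.Icc (0:ℝ) 1) ∧
      v = sInf {w | ∃ Q : X → ℝ, IsPMF Q ∧ w = gammaFn W R Q z}} = g :=
    le_antisymm (csSup_le ⟨g, hgR⟩ hRub) (le_csSup ⟨g, hRub⟩ hgR)
  rw [hL, hRR]
end

section
/- Let X and Y be finite sets, let W : X × Y → [0,1] be a channel (for each x ∈ X, Σ_{y∈Y} W(y|x) = 1), and fix R > 0. Define γ(Q_X, z) = Σ_{x∈X} Σ_{y∈Y} Q_X(x)·min(W(y|x), z_y) − e^{−R}·Σ_{y∈Y} z_y. Then for every probability mass function Q_X on X, max over probability mass functions Q_Y on Y of β_{1−e^{−R}}(Q_X × Q_Y, Q_X W) = max over z ∈ [0,1]^Y of γ(Q_X, z), where both maxima are attained. -/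
open Finset
open scoped Classical

section Aux

variable {X Y : Type*} [Fintype X] [Fintype Y]

lemma gamma_eq (W : X → Y → ℝ) (R : ℝ) (Q : X → ℝ) (z : Y → ℝ) :
    gammaFn W R Q z =
      (∑ p : X × Y, Q p.1 * min (W p.1 p.2) (z p.2)) - Real.exp (-R) * ∑ y, z y := by
  rw [gammaFn, Fintype.sum_prod_type]

lemma sum_prod_pmf (Qx : X → ℝ) (Qy : Y → ℝ) (hx : ∑ x, Qx x = 1) (hy : ∑ y, Qy y = 1) :
    ∑ p : X × Y, Qx p.1 * Qy p.2 = 1 := by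
  rw [Fintype.sum_prod_type]
  simp_rw [← Finset.mul_sum, hy, mul_one, hx]

lemma betaHT_le {Ω : Type*} [Fintype Ω] (α : ℝ) (P Q : Ω → ℝ) (hQ : ∀ w, 0 ≤ Q w)
    (φ : Ω → ℝ) (hφ : ∀ w, φ w ∈ Set.Icc (0:ℝ) 1) (hf : α ≤ ∑ w, P w * φ w) :
    betaHT α P Q ≤ ∑ w, Q w * φ w := by
  apply csInf_le
  · refine ⟨0, ?_⟩
    rintro r ⟨ψ, hψ, -, rfl⟩
    exact Finset.sum_nonneg fun w _ => mul_nonneg (hQ w) (hψ w).1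
  · exact ⟨φ, hφ, hf, rfl⟩

lemma le_betaHT {Ω : Type*} [Fintype Ω] (α b : ℝ) (P Q : Ω → ℝ)
    (hfeas1 : α ≤ ∑ w, P w)
    (h : ∀ φ : Ω → ℝ, (∀ w, φ w ∈ Set.Icc (0:ℝ) 1) → α ≤ ∑ w, P w * φ w →
      b ≤ ∑ w, Q w * φ w) :
    b ≤ betaHT α P Q := by
  apply le_csInf
  · exact ⟨∑ w, Q w * (fun _ => (1:ℝ)) w, ⟨fun _ => 1,
      fun w => ⟨zero_le_one, le_rfl⟩, by simpa using hfeas1, rfl⟩⟩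
  · rintro r ⟨φ, hφ, hf, rfl⟩
    exact h φ hφ hf

/-- Weak duality. -/
lemma weak_duality (W : X → Y → ℝ) (hW : ∀ x y, W x y ∈ Set.Icc (0:ℝ) 1)
    (R : ℝ) (Qx : X → ℝ) (hQx : IsPMF Qx) (Qy : Y → ℝ) (hQy : IsPMF Qy)
    (l : ℝ) (hl : 0 ≤ l) (φ : X × Y → ℝ) (hφ : ∀ p, φ p ∈ Set.Icc (0:ℝ) 1)
    (hfeas : 1 - Real.exp (-R) ≤ ∑ p : X × Y, (Qx p.1 * Qy p.2) * φ p) :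
    gammaFn W R Qx (fun y => l * Qy y) ≤ ∑ p : X × Y, (Qx p.1 * W p.1 p.2) * φ p := by
  have key : ∀ p : X × Y,
      Qx p.1 * min (W p.1 p.2) (l * Qy p.2) - l * (Qx p.1 * Qy p.2)
        ≤ (Qx p.1 * W p.1 p.2) * φ p - l * ((Qx p.1 * Qy p.2) * φ p) := by
    intro p
    obtain ⟨hφ0, hφ1⟩ := hφ p
    have hx0 := hQx.1 p.1
    rcases le_total (W p.1 p.2) (l * Qy p.2) with h | h
    · rw [min_eq_left h]
      have h1 : 0 ≤ Qx p.1 * ((l * Qy p.2 - W p.1 p.2) * (1 - φ p)) :=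
        mul_nonneg hx0 (mul_nonneg (by linarith) (by linarith))
      nlinarith [h1]
    · rw [min_eq_right h]
      have h1 : 0 ≤ (Qx p.1 * (W p.1 p.2 - l * Qy p.2)) * φ p :=
        mul_nonneg (mul_nonneg hx0 (by linarith)) hφ0
      nlinarith [h1]
  have hsum := Finset.sum_le_sum (fun p (_ : p ∈ Finset.univ) => key p)
  rw [Finset.sum_sub_distrib, Finset.sum_sub_distrib, ← Finset.mul_sum, ← Finset.mul_sum,
    sum_prod_pmf Qx Qy hQx.2 hQy.2] at hsum
  have hfl : l * (1 - Real.exp (-R)) ≤ l * ∑ p : X × Y, (Qx p.1 * Qy p.2) * φ p :=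
    mul_le_mul_of_nonneg_left hfeas hl
  rw [gamma_eq]
  have hz : ∑ y, l * Qy y = l := by rw [← Finset.mul_sum, hQy.2, mul_one]
  rw [hz]
  nlinarith

/-- Capping `z` at 1 does not decrease gamma. -/
lemma gamma_cap (W : X → Y → ℝ) (hW : ∀ x y, W x y ∈ Set.Icc (0:ℝ) 1)
    (R : ℝ) (Qx : X → ℝ) (z : Y → ℝ) :
    gammaFn W R Qx z ≤ gammaFn W R Qx (fun y => min (z y) 1) := by
  rw [gammaFn, gammaFn]
  have h2 : ∑ y, min (z y) 1 ≤ ∑ y, z y :=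
    Finset.sum_le_sum fun y _ => min_le_left _ _
  have h3 : Real.exp (-R) * ∑ y, min (z y) 1 ≤ Real.exp (-R) * ∑ y, z y :=
    mul_le_mul_of_nonneg_left h2 (Real.exp_pos _).le
  have h4 : (∑ x, ∑ y, Qx x * min (W x y) (z y))
      = ∑ x, ∑ y, Qx x * min (W x y) (min (z y) 1) := by
    refine Finset.sum_congr rfl fun x _ => Finset.sum_congr rfl fun y _ => ?_
    rcases le_total (z y) 1 with h | h
    · rw [min_eq_left h]
    · rw [min_eq_right h, min_eq_left (le_trans (hW x y).2 h), min_eq_left (hW x y).2]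
  rw [h4]; linarith

/-- Strong duality: a randomized Neyman–Pearson test attains `γ(t·Qy)`. -/
lemma strong_duality (W : X → Y → ℝ) (hW : ∀ x y, W x y ∈ Set.Icc (0:ℝ) 1)
    (R : ℝ) (hR : 0 < R)
    (Qx : X → ℝ) (hQx : IsPMF Qx) (Qy : Y → ℝ) (hQy : IsPMF Qy) :
    ∃ t : ℝ, 0 ≤ t ∧ ∃ φ : X × Y → ℝ, (∀ p, φ p ∈ Set.Icc (0:ℝ) 1) ∧
      (∑ p : X × Y, (Qx p.1 * Qy p.2) * φ p = 1 - Real.exp (-R)) ∧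
      (∑ p : X × Y, (Qx p.1 * W p.1 p.2) * φ p
        = gammaFn W R Qx (fun y => t * Qy y)) := by
  have hexp1 : Real.exp (-R) < 1 := by
    calc Real.exp (-R) < Real.exp 0 := Real.exp_lt_exp.mpr (by linarith)
    _ = 1 := Real.exp_zero
  have hexp0 : (0:ℝ) < Real.exp (-R) := Real.exp_pos _
  have hα1 : 1 - Real.exp (-R) ≤ 1 := by linarith
  have hPnn : ∀ p : X × Y, 0 ≤ Qx p.1 * Qy p.2 :=
    fun p => mul_nonneg (hQx.1 _) (hQy.1 _)
  set S : Finset ℝ :=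
    insert 0 ((Finset.univ.filter fun p : X × Y => 0 < Qy p.2).image
      fun p => W p.1 p.2 / Qy p.2) with hSdef
  have hSne : S.Nonempty := ⟨0, Finset.mem_insert_self _ _⟩
  have hSnn : ∀ s ∈ S, (0:ℝ) ≤ s := by
    intro s hs
    rcases Finset.mem_insert.mp hs with h | h
    · simp [h]
    · obtain ⟨p, hp, rfl⟩ := Finset.mem_image.mp h
      exact div_nonneg (hW p.1 p.2).1 (le_of_lt (Finset.mem_filter.mp hp).2)
  have hGmax : (∑ p : X × Y,
      if W p.1 p.2 ≤ S.max' hSne * Qy p.2 then Qx p.1 * Qy p.2 else 0) = 1 := by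
    have h : ∀ p : X × Y,
        (if W p.1 p.2 ≤ S.max' hSne * Qy p.2 then Qx p.1 * Qy p.2 else 0)
          = Qx p.1 * Qy p.2 := by
      intro p
      by_cases hq : 0 < Qy p.2
      · have hmem : W p.1 p.2 / Qy p.2 ∈ S :=
          Finset.mem_insert_of_mem (Finset.mem_image_of_mem _
            (Finset.mem_filter.mpr ⟨Finset.mem_univ _, hq⟩))
        have hle := S.le_max' _ hmem
        rw [if_pos ((div_le_iff₀ hq).mp hle)]
      · have hq0 : Qy p.2 = 0 := le_antisymm (not_lt.mp hq) (hQy.1 p.2)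
        rw [hq0]; simp
    rw [Finset.sum_congr rfl fun p _ => h p]
    exact sum_prod_pmf Qx Qy hQx.2 hQy.2
  set T : Finset ℝ := S.filter (fun u =>
    1 - Real.exp (-R) ≤ ∑ p : X × Y,
      if W p.1 p.2 ≤ u * Qy p.2 then Qx p.1 * Qy p.2 else 0) with hTdef
  have hTne : T.Nonempty :=
    ⟨S.max' hSne, Finset.mem_filter.mpr ⟨S.max'_mem hSne, by rw [hGmax]; exact hα1⟩⟩
  set t : ℝ := T.min' hTne with htdef
  have htT := T.min'_mem hTne
  have htS : t ∈ S := (Finset.mem_filter.mp htT).1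
  have htG : 1 - Real.exp (-R) ≤ ∑ p : X × Y,
      if W p.1 p.2 ≤ t * Qy p.2 then Qx p.1 * Qy p.2 else 0 :=
    (Finset.mem_filter.mp htT).2
  have ht0 : 0 ≤ t := hSnn t htS
  have hAα : (∑ p : X × Y, if W p.1 p.2 < t * Qy p.2 then Qx p.1 * Qy p.2 else 0)
      ≤ 1 - Real.exp (-R) := by
    rcases eq_or_lt_of_le ht0 with h0 | h0
    · have hz : (∑ p : X × Y, if W p.1 p.2 < t * Qy p.2 then Qx p.1 * Qy p.2 else 0)
          = 0 := by
        refine Finset.sum_eq_zero fun p _ => ?_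
        rw [if_neg]
        rw [← h0, zero_mul]
        exact not_lt.mpr (hW p.1 p.2).1
      rw [hz]; linarith
    · set S' : Finset ℝ := S.filter (fun u => u < t) with hS'def
      have hS'ne : S'.Nonempty :=
        ⟨0, Finset.mem_filter.mpr ⟨Finset.mem_insert_self _ _, h0⟩⟩
      set s : ℝ := S'.max' hS'ne with hsdef
      have hsS : s ∈ S := (Finset.mem_filter.mp (S'.max'_mem hS'ne)).1
      have hst : s < t := (Finset.mem_filter.mp (S'.max'_mem hS'ne)).2
      have hsG : (∑ p : X × Y,
          if W p.1 p.2 ≤ s * Qy p.2 then Qx p.1 * Qy p.2 else 0)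
            < 1 - Real.exp (-R) := by
        by_contra hcon
        push_neg at hcon
        have hmem : s ∈ T := Finset.mem_filter.mpr ⟨hsS, hcon⟩
        exact absurd (T.min'_le s hmem) (not_le.mpr hst)
      have hFG : (∑ p : X × Y, if W p.1 p.2 < t * Qy p.2 then Qx p.1 * Qy p.2 else 0)
          ≤ ∑ p : X × Y, if W p.1 p.2 ≤ s * Qy p.2 then Qx p.1 * Qy p.2 else 0 := by
        refine Finset.sum_le_sum fun p _ => ?_
        by_cases hlt : W p.1 p.2 < t * Qy p.2
        · rw [if_pos hlt]
          have hq : 0 < Qy p.2 := by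
            rcases (hQy.1 p.2).lt_or_eq with h | h
            · exact h
            · exfalso
              rw [← h, mul_zero] at hlt
              exact absurd hlt (not_lt.mpr (hW p.1 p.2).1)
          have hr : W p.1 p.2 / Qy p.2 ∈ S' :=
            Finset.mem_filter.mpr ⟨Finset.mem_insert_of_mem
              (Finset.mem_image_of_mem _
                (Finset.mem_filter.mpr ⟨Finset.mem_univ _, hq⟩)),
              (div_lt_iff₀ hq).mpr hlt⟩
          have hrs := S'.le_max' _ hr
          rw [if_pos ((div_le_iff₀ hq).mp hrs)]
        · rw [if_neg hlt]
          split_ifs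
          · exact hPnn p
          · exact le_rfl
      linarith
  have hAB : (∑ p : X × Y, if W p.1 p.2 < t * Qy p.2 then Qx p.1 * Qy p.2 else 0)
      ≤ ∑ p : X × Y, if W p.1 p.2 ≤ t * Qy p.2 then Qx p.1 * Qy p.2 else 0 := by
    refine Finset.sum_le_sum fun p _ => ?_
    by_cases hlt : W p.1 p.2 < t * Qy p.2
    · rw [if_pos hlt, if_pos hlt.le]
    · rw [if_neg hlt]
      split_ifs
      · exact hPnn p
      · exact le_rfl
  set A : ℝ := ∑ p : X × Y, if W p.1 p.2 < t * Qy p.2 then Qx p.1 * Qy p.2 else 0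
    with hAdef
  set B : ℝ := ∑ p : X × Y, if W p.1 p.2 ≤ t * Qy p.2 then Qx p.1 * Qy p.2 else 0
    with hBdef
  set c : ℝ := (1 - Real.exp (-R) - A) / (B - A) with hcdef
  have hc : c ∈ Set.Icc (0:ℝ) 1 := by
    rcases eq_or_lt_of_le hAB with h | h
    · have hz : B - A = 0 := by rw [← h]; ring
      rw [hcdef, hz, div_zero]
      exact ⟨le_rfl, zero_le_one⟩
    · constructor
      · exact div_nonneg (by linarith) (by linarith)
      · rw [hcdef, div_le_one (by linarith)]
        linarith
  set φ : X × Y → ℝ := fun p =>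
    if W p.1 p.2 < t * Qy p.2 then 1 else if W p.1 p.2 = t * Qy p.2 then c else 0
    with hφdef
  have hφmem : ∀ p, φ p ∈ Set.Icc (0:ℝ) 1 := by
    intro p
    rw [hφdef]
    dsimp only
    split_ifs
    · exact ⟨zero_le_one, le_rfl⟩
    · exact hc
    · exact ⟨le_rfl, zero_le_one⟩
  have hPφ : ∑ p : X × Y, (Qx p.1 * Qy p.2) * φ p = 1 - Real.exp (-R) := by
    have hsplit : ∀ p : X × Y, (Qx p.1 * Qy p.2) * φ p =
        (if W p.1 p.2 < t * Qy p.2 then Qx p.1 * Qy p.2 else 0) +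
        c * ((if W p.1 p.2 ≤ t * Qy p.2 then Qx p.1 * Qy p.2 else 0) -
             (if W p.1 p.2 < t * Qy p.2 then Qx p.1 * Qy p.2 else 0)) := by
      intro p
      rw [hφdef]
      dsimp only
      rcases lt_trichotomy (W p.1 p.2) (t * Qy p.2) with h | h | h
      · simp only [if_pos h, if_pos h.le]; ring
      · simp only [if_neg (not_lt.mpr h.ge), if_pos h, if_pos h.le]; ring
      · simp only [if_neg (not_lt.mpr h.le), if_neg h.ne', if_neg (not_le.mpr h)]; ring
    rw [Finset.sum_congr rfl fun p _ => hsplit p, Finset.sum_add_distrib,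
      ← Finset.mul_sum, Finset.sum_sub_distrib, ← hAdef, ← hBdef]
    rcases eq_or_lt_of_le hAB with h | h
    · have hz : B - A = 0 := by rw [h]; ring
      have hAeq : A = 1 - Real.exp (-R) :=
        le_antisymm hAα (by rw [h]; exact htG)
      rw [hz, mul_zero, add_zero, hAeq]
    · rw [hcdef, div_mul_cancel₀ _ (by linarith : B - A ≠ 0)]
      ring
  have hQφ : ∑ p : X × Y, (Qx p.1 * W p.1 p.2) * φ p
      = gammaFn W R Qx (fun y => t * Qy y) := by
    have hsplit2 : ∀ p : X × Y, (Qx p.1 * W p.1 p.2) * φ p =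
        t * ((Qx p.1 * Qy p.2) * φ p) +
        (Qx p.1 * min (W p.1 p.2) (t * Qy p.2) - t * (Qx p.1 * Qy p.2)) := by
      intro p
      rw [hφdef]
      dsimp only
      rcases lt_trichotomy (W p.1 p.2) (t * Qy p.2) with h | h | h
      · simp only [if_pos h, min_eq_left h.le]; ring
      · simp only [if_neg (not_lt.mpr h.ge), if_pos h]
        rw [h, min_self]; ring
      · simp only [if_neg (not_lt.mpr h.le), if_neg h.ne', min_eq_right h.le]; ring
    rw [Finset.sum_congr rfl fun p _ => hsplit2 p, Finset.sum_add_distrib,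
      ← Finset.mul_sum, Finset.sum_sub_distrib, ← Finset.mul_sum, hPφ,
      sum_prod_pmf Qx Qy hQx.2 hQy.2, gamma_eq]
    have hzz : ∑ y, t * Qy y = t := by rw [← Finset.mul_sum, hQy.2, mul_one]
    rw [hzz]
    ring
  exact ⟨t, ht0, φ, hφmem, hPφ, hQφ⟩

end Aux

set_option maxHeartbeats 1000000 in
theorem stmt_8 {X Y : Type*} [Fintype X] [Fintype Y] [Nonempty X] [Nonempty Y]
    (W : X → Y → ℝ)
    (hW : ∀ x y, W x y ∈ Set.Icc (0:ℝ) 1) (hWsum : ∀ x, ∑ y, W x y = 1)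
    (R : ℝ) (hR : 0 < R)
    (Qx : X → ℝ) (hQx : IsPMF Qx) :
    ∃ v : ℝ,
      IsGreatest {r | ∃ Qy : Y → ℝ, IsPMF Qy ∧
        r = betaHT (1 - Real.exp (-R))
              (fun p : X × Y => Qx p.1 * Qy p.2)
              (fun p : X × Y => Qx p.1 * W p.1 p.2)} v ∧
      IsGreatest {r | ∃ z : Y → ℝ, (∀ y, z y ∈ Set.Icc (0:ℝ) 1) ∧
        r = gammaFn W R Qx z} v := by
  have hexp1 : Real.exp (-R) < 1 := by
    calc Real.exp (-R) < Real.exp 0 := Real.exp_lt_exp.mpr (by linarith)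
    _ = 1 := Real.exp_zero
  have hexp0 : (0:ℝ) < Real.exp (-R) := Real.exp_pos _
  have hcont : Continuous fun z : Y → ℝ => gammaFn W R Qx z := by
    simp only [gammaFn]
    apply Continuous.sub
    · apply continuous_finset_sum
      intro x _
      apply continuous_finset_sum
      intro y _
      exact continuous_const.mul (continuous_const.min (continuous_apply y))
    · exact continuous_const.mul (continuous_finset_sum _ fun y _ => continuous_apply y)
  obtain ⟨z0, hz0K, hz0max⟩ :=
    (isCompact_univ_pi fun _ : Y => isCompact_Icc).exists_isMaxOn
      ⟨fun _ => 0, Set.mem_univ_pi.mpr fun y => Set.mem_Icc.mpr ⟨le_rfl, zero_le_one⟩⟩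
      hcont.continuousOn
  have hz0mem : ∀ y, z0 y ∈ Set.Icc (0:ℝ) 1 := Set.mem_univ_pi.mp hz0K
  set v := gammaFn W R Qx z0 with hvdef
  have hvub : ∀ z : Y → ℝ, (∀ y, z y ∈ Set.Icc (0:ℝ) 1) → gammaFn W R Qx z ≤ v :=
    fun z hz => hz0max (Set.mem_univ_pi.mpr hz)
  have hub : ∀ Qy : Y → ℝ, IsPMF Qy →
      betaHT (1 - Real.exp (-R)) (fun p : X × Y => Qx p.1 * Qy p.2)
        (fun p : X × Y => Qx p.1 * W p.1 p.2) ≤ v := by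
    intro Qy hQy
    obtain ⟨t, ht0, φ, hφ, hPφ, hQφ⟩ := strong_duality W hW R hR Qx hQx Qy hQy
    have h1 : betaHT (1 - Real.exp (-R)) (fun p : X × Y => Qx p.1 * Qy p.2)
        (fun p : X × Y => Qx p.1 * W p.1 p.2)
        ≤ ∑ p : X × Y, (Qx p.1 * W p.1 p.2) * φ p :=
      betaHT_le (1 - Real.exp (-R)) (fun p : X × Y => Qx p.1 * Qy p.2)
        (fun p : X × Y => Qx p.1 * W p.1 p.2)
        (fun p => mul_nonneg (hQx.1 _) (hW p.1 p.2).1) φ hφ (le_of_eq hPφ.symm)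
    have h2 := gamma_cap W hW R Qx (fun y => t * Qy y)
    have h3 : gammaFn W R Qx (fun y => min (t * Qy y) 1) ≤ v := hvub _ (fun y =>
      ⟨le_min (mul_nonneg ht0 (hQy.1 y)) zero_le_one, min_le_right _ _⟩)
    rw [hQφ] at h1
    linarith [h1, h2, h3]
  refine ⟨v, ⟨?_, ?_⟩, ⟨⟨z0, hz0mem, hvdef⟩, ?_⟩⟩
  · -- v is attained on the beta side
    by_cases hpos : 0 < ∑ y, z0 y
    · set s := ∑ y, z0 y with hsdef
      have hQyPMF : IsPMF (fun y => z0 y / s) := by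
        constructor
        · intro y; exact div_nonneg (hz0mem y).1 hpos.le
        · rw [← Finset.sum_div, ← hsdef, div_self (ne_of_gt hpos)]
      refine ⟨fun y => z0 y / s, hQyPMF, ?_⟩
      have hle := hub _ hQyPMF
      have hge : v ≤ betaHT (1 - Real.exp (-R))
          (fun p : X × Y => Qx p.1 * (fun y => z0 y / s) p.2)
          (fun p : X × Y => Qx p.1 * W p.1 p.2) := by
        apply le_betaHT (1 - Real.exp (-R)) v
          (fun p : X × Y => Qx p.1 * (fun y => z0 y / s) p.2)
          (fun p : X × Y => Qx p.1 * W p.1 p.2)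
        · rw [sum_prod_pmf Qx _ hQx.2 hQyPMF.2]; linarith
        · intro φ hφ hf
          have hwd := weak_duality W hW R Qx hQx _ hQyPMF s hpos.le φ hφ hf
          have hzeq : (fun y => s * (fun y => z0 y / s) y) = z0 := by
            funext y
            show s * (z0 y / s) = z0 y
            field_simp
          rw [hzeq] at hwd
          exact hwd
      exact (le_antisymm hle hge).symm
    · push_neg at hpos
      have hsum0 : ∑ y, z0 y = 0 :=
        le_antisymm hpos (Finset.sum_nonneg fun y _ => (hz0mem y).1)
      have hz0 : ∀ y, z0 y = 0 := fun y =>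
        (Finset.sum_eq_zero_iff_of_nonneg fun y _ => (hz0mem y).1).mp hsum0 y
          (Finset.mem_univ y)
      have hv0 : v = 0 := by
        rw [hvdef, gammaFn]
        have h5 : (∑ x, ∑ y, Qx x * min (W x y) (z0 y)) = 0 :=
          Finset.sum_eq_zero fun x _ => Finset.sum_eq_zero fun y _ => by
            rw [hz0 y, min_eq_right (hW x y).1, mul_zero]
        rw [h5, hsum0, mul_zero, sub_zero]
      have hcard : (0:ℝ) < (Fintype.card Y : ℝ) := by exact_mod_cast Fintype.card_pos
      have hQyPMF : IsPMF (fun _ : Y => ((Fintype.card Y : ℝ))⁻¹) := by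
        constructor
        · intro y; positivity
        · rw [Finset.sum_const, Finset.card_univ, nsmul_eq_mul,
            mul_inv_cancel₀ (ne_of_gt hcard)]
      refine ⟨_, hQyPMF, ?_⟩
      have hle := hub _ hQyPMF
      rw [hv0] at hle ⊢
      have hge : (0:ℝ) ≤ betaHT (1 - Real.exp (-R))
          (fun p : X × Y => Qx p.1 * (fun _ : Y => ((Fintype.card Y : ℝ))⁻¹) p.2)
          (fun p : X × Y => Qx p.1 * W p.1 p.2) := by
        apply le_betaHT (1 - Real.exp (-R)) 0
          (fun p : X × Y => Qx p.1 * (fun _ : Y => ((Fintype.card Y : ℝ))⁻¹) p.2)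
          (fun p : X × Y => Qx p.1 * W p.1 p.2)
        · rw [sum_prod_pmf Qx _ hQx.2 hQyPMF.2]; linarith
        · intro φ hφ hf
          exact Finset.sum_nonneg fun p _ =>
            mul_nonneg (mul_nonneg (hQx.1 _) (hW p.1 p.2).1) (hφ p).1
      exact (le_antisymm hle hge).symm
  · rintro r ⟨Qy, hQy, rfl⟩
    exact hub Qy hQy
  · rintro r ⟨z, hz, rfl⟩
    exact hvub z hz
end

section
/- Let X and Y be finite sets, let W : X × Y → [0,1] be a channel (for each x ∈ X, Σ_{y∈Y} W(y|x) = 1), fix R > 0, and define γ(Q_X, z) = Σ_{x∈X} Σ_{y∈Y} Q_X(x)·min(W(y|x), z_y) − e^{−R}·Σ_{y∈Y} z_y. Suppose Q_X* is a probability mass function on X, z* ∈ [0,1]^Y, and ε ∈ ℝ satisfy: (i) for every y ∈ Y, Q_X*({x : W(y|x) > z*_y}) ≤ e^{−R} ≤ Q_X*({x : W(y|x) ≥ z*_y}); (ii) for every x with Q_X*(x) > 0, ε = Σ_{y∈Y} min(W(y|x), z*_y) − e^{−R}·Σ_{y∈Y} z*_y; and (iii) for every x with Q_X*(x) = 0,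 ε ≤ Σ_{y∈Y} min(W(y|x), z*_y) − e^{−R}·Σ_{y∈Y} z*_y. Then (Q_X*, z*) is a saddle point of γ, i.e., γ(Q_X*, z) ≤ γ(Q_X*, z*) ≤ γ(Q_X, z*) for every probability mass function Q_X on X and every z ∈ [0,1]^Y. -/
open Finset
open scoped Classical

theorem stmt_10 {X Y : Type*} [Fintype X] [Fintype Y] (W : X → Y → ℝ)
    (hW : ∀ x y, W x y ∈ Set.Icc (0:ℝ) 1) (hWsum : ∀ x, ∑ y, W x y = 1)
    (R : ℝ) (hR : 0 < R)
    (Qs : X → ℝ) (hQs : IsPMF Qs) (zs : Y → ℝ) (hzs : ∀ y, zs y ∈ Set.Icc (0:ℝ) 1)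
    (ε : ℝ)
    -- (i)
    (hi : ∀ y : Y,
      (∑ x ∈ univ.filter (fun x => zs y < W x y), Qs x) ≤ Real.exp (-R) ∧
        Real.exp (-R) ≤ ∑ x ∈ univ.filter (fun x => zs y ≤ W x y), Qs x)
    -- (ii)
    (hii : ∀ x, 0 < Qs x →
      ε = (∑ y, min (W x y) (zs y)) - Real.exp (-R) * ∑ y, zs y)
    -- (iii)
    (hiii : ∀ x, Qs x = 0 →
      ε ≤ (∑ y, min (W x y) (zs y)) - Real.exp (-R) * ∑ y, zs y) :
    (∀ z : Y → ℝ, (∀ y, z y ∈ Set.Icc (0:ℝ) 1) →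
      gammaFn W R Qs z ≤ gammaFn W R Qs zs) ∧
    (∀ Q : X → ℝ, IsPMF Q → gammaFn W R Qs zs ≤ gammaFn W R Q zs) := by
  obtain ⟨hQs0, hQs1⟩ := hQs
  set E := Real.exp (-R) with hE
  have hEpos : 0 < E := Real.exp_pos _
  have hrearr : ∀ (Q : X → ℝ) (z : Y → ℝ),
      gammaFn W R Q z = ∑ y, ((∑ x, Q x * min (W x y) (z y)) - E * z y) := by
    intro Q z
    rw [gammaFn, Finset.sum_comm, Finset.mul_sum, ← Finset.sum_sub_distrib]
  constructor
  · intro z hz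
    rw [hrearr, hrearr]
    apply Finset.sum_le_sum
    intro y _
    set s := zs y with hs
    set t := z y with ht
    have key : (∑ x, (Qs x * min (W x y) t - Qs x * min (W x y) s)) ≤ E * (t - s) := by
      rcases le_total s t with hst | hst
      · calc (∑ x, (Qs x * min (W x y) t - Qs x * min (W x y) s))
            ≤ ∑ x, (if s < W x y then Qs x * (t - s) else 0) := by
              apply Finset.sum_le_sum
              intro x _
              by_cases h : s < W x y
              · simp only [h, if_pos]
                rw [← mul_sub]
                apply mul_le_mul_of_nonneg_left _ (hQs0 x)
                have : min (W x y) s = s := min_eq_right h.le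
                rw [this]
                exact sub_le_sub_right (min_le_right _ _) s
              · simp only [h, if_neg, not_false_iff]
                push_neg at h
                rw [min_eq_left h, min_eq_left (h.trans hst), sub_self]
          _ = ∑ x ∈ univ.filter (fun x => s < W x y), Qs x * (t - s) := by
              rw [Finset.sum_filter]
          _ = (∑ x ∈ univ.filter (fun x => s < W x y), Qs x) * (t - s) := by
              rw [Finset.sum_mul]
          _ ≤ E * (t - s) :=
              mul_le_mul_of_nonneg_right (hi y).1 (sub_nonneg.2 hst)
      · calc (∑ x, (Qs x * min (W x y) t - Qs x * min (W x y) s))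
            ≤ ∑ x, (if s ≤ W x y then Qs x * (t - s) else 0) := by
              apply Finset.sum_le_sum
              intro x _
              by_cases h : s ≤ W x y
              · simp only [h, if_pos]
                rw [← mul_sub, min_eq_right h, min_eq_right (hst.trans h)]
              · simp only [h, if_neg, not_false_iff]
                push_neg at h
                rw [min_eq_left h.le, sub_nonpos]
                exact mul_le_mul_of_nonneg_left (min_le_left _ _) (hQs0 x)
          _ = ∑ x ∈ univ.filter (fun x => s ≤ W x y), Qs x * (t - s) := by
              rw [Finset.sum_filter]
          _ = (∑ x ∈ univ.filter (fun x => s ≤ W x y), Qs x) * (t - s) := by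
              rw [Finset.sum_mul]
          _ ≤ E * (t - s) :=
              mul_le_mul_of_nonpos_right (hi y).2 (sub_nonpos.2 hst)
    rw [Finset.sum_sub_distrib, mul_sub] at key
    linarith
  · intro Q hQ
    obtain ⟨hQ0, hQ1⟩ := hQ
    have hfε : ∀ x, ε ≤ (∑ y, min (W x y) (zs y)) - E * ∑ y, zs y := by
      intro x
      rcases (hQs0 x).eq_or_lt with h | h
      · exact hiii x h.symm
      · exact (hii x h).le
    have hform : ∀ (P : X → ℝ), (∑ x, P x = 1) →
        gammaFn W R P zs = ∑ x, P x * ((∑ y, min (W x y) (zs y)) - E * ∑ y, zs y) := by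
      intro P hP
      rw [gammaFn]
      rw [Finset.sum_congr rfl (fun x _ => mul_sub (P x) _ _), Finset.sum_sub_distrib,
        ← Finset.sum_mul, hP, one_mul]
      congr 1
      exact Finset.sum_congr rfl fun x _ => (Finset.mul_sum _ _ _).symm
    rw [hform Qs hQs1, hform Q hQ1]
    have h1 : ∑ x, Qs x * ((∑ y, min (W x y) (zs y)) - E * ∑ y, zs y) = ε := by
      have : ∀ x ∈ univ, Qs x * ((∑ y, min (W x y) (zs y)) - E * ∑ y, zs y)
          = Qs x * ε := by
        intro x _
        rcases (hQs0 x).eq_or_lt with h | h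
        · rw [← h]; ring
        · rw [← hii x h]
      rw [Finset.sum_congr rfl this, ← Finset.sum_mul, hQs1, one_mul]
    rw [h1]
    calc ε = ∑ x, Q x * ε := by rw [← Finset.sum_mul, hQ1, one_mul]
      _ ≤ ∑ x, Q x * ((∑ y, min (W x y) (zs y)) - E * ∑ y, zs y) := by
          apply Finset.sum_le_sum
          intro x _
          exact mul_le_mul_of_nonneg_left (hfε x) (hQ0 x)
end

section
/- Let X and Y be finite sets, let W : X × Y → [0,1] be a channel (for each x ∈ X, Σ_{y∈Y} W(y|x) = 1), fix R > 0, and define γ(Q_X, z) = Σ_{x∈X} Σ_{y∈Y} Q_X(x)·min(W(y|x), z_y) − e^{−R}·Σ_{y∈Y} z_y. Let Q_X be a probability mass function on X and suppose z, z' ∈ [0,1]^Y both satisfy: for every y ∈ Y, Q_X({x : W(y|x) > z_y}) ≤ e^{−R} ≤ Q_X({x : W(y|x) ≥ z_y}) (and similarly for z'). Then γ(Q_X, z) = γ(Q_X, z'). -/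
open Finset
open scoped Classical

private lemma key_aux {X : Type*} [Fintype X] (Q w : X → ℝ) (hQ : ∀ x, 0 ≤ Q x)
    (a b c : ℝ) (hab : a ≤ b)
    (h1 : ∑ x ∈ univ.filter (fun x => a < w x), Q x ≤ c)
    (h2 : c ≤ ∑ x ∈ univ.filter (fun x => b ≤ w x), Q x) :
    (∑ x, Q x * min (w x) a) - c * a = (∑ x, Q x * min (w x) b) - c * b := by
  have hmain : ∑ x, Q x * (min (w x) b - min (w x) a) = c * (b - a) := by
    apply le_antisymm
    · calc ∑ x, Q x * (min (w x) b - min (w x) a)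
          = ∑ x ∈ univ.filter (fun x => a < w x), Q x * (min (w x) b - min (w x) a) := by
            rw [← Finset.sum_filter_add_sum_filter_not univ (fun x => a < w x)]
            have : ∑ x ∈ univ.filter (fun x => ¬ a < w x), Q x * (min (w x) b - min (w x) a)
                = 0 := by
              apply Finset.sum_eq_zero
              intro x hx
              simp only [Finset.mem_filter, not_lt] at hx
              have hwa : w x ≤ a := hx.2
              rw [min_eq_left (hwa.trans hab), min_eq_left hwa]
              ring
            linarith [this]
      _ ≤ ∑ x ∈ univ.filter (fun x => a < w x), Q x * (b - a) := by
            apply Finset.sum_le_sum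
            intro x hx
            apply mul_le_mul_of_nonneg_left _ (hQ x)
            have h1 : min (w x) b ≤ b := min_le_right _ _
            have h2 : a ≤ min (w x) a := by
              simp only [Finset.mem_filter] at hx
              exact le_min hx.2.le le_rfl
            linarith
      _ = (∑ x ∈ univ.filter (fun x => a < w x), Q x) * (b - a) := by
            rw [← Finset.sum_mul]
      _ ≤ c * (b - a) := mul_le_mul_of_nonneg_right h1 (by linarith)
    · calc c * (b - a)
          ≤ (∑ x ∈ univ.filter (fun x => b ≤ w x), Q x) * (b - a) :=
            mul_le_mul_of_nonneg_right h2 (by linarith)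
      _ = ∑ x ∈ univ.filter (fun x => b ≤ w x), Q x * (b - a) := by
            rw [← Finset.sum_mul]
      _ = ∑ x ∈ univ.filter (fun x => b ≤ w x), Q x * (min (w x) b - min (w x) a) := by
            apply Finset.sum_congr rfl
            intro x hx
            simp only [Finset.mem_filter] at hx
            rw [min_eq_right hx.2, min_eq_right (hab.trans hx.2)]
      _ ≤ ∑ x, Q x * (min (w x) b - min (w x) a) := by
            apply Finset.sum_le_sum_of_subset_of_nonneg (Finset.filter_subset _ _)
            intro x _ _
            apply mul_nonneg (hQ x)
            have : min (w x) a ≤ min (w x) b := min_le_min le_rfl hab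
            linarith
  have hsub : ∑ x, Q x * (min (w x) b - min (w x) a)
      = (∑ x, Q x * min (w x) b) - ∑ x, Q x * min (w x) a := by
    rw [← Finset.sum_sub_distrib]
    apply Finset.sum_congr rfl
    intro x _
    ring
  rw [hsub] at hmain
  linarith

theorem stmt_11 {X Y : Type*} [Fintype X] [Fintype Y] (W : X → Y → ℝ)
    (hW : ∀ x y, W x y ∈ Set.Icc (0:ℝ) 1) (hWsum : ∀ x, ∑ y, W x y = 1)
    (R : ℝ) (hR : 0 < R)
    (Qx : X → ℝ) (hQx : IsPMF Qx)
    (z z' : Y → ℝ) (hz : ∀ y, z y ∈ Set.Icc (0:ℝ) 1) (hz' : ∀ y, z' y ∈ Set.Icc (0:ℝ) 1)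
    (hcond : ∀ y : Y,
      (∑ x ∈ univ.filter (fun x => z y < W x y), Qx x) ≤ Real.exp (-R) ∧
        Real.exp (-R) ≤ ∑ x ∈ univ.filter (fun x => z y ≤ W x y), Qx x)
    (hcond' : ∀ y : Y,
      (∑ x ∈ univ.filter (fun x => z' y < W x y), Qx x) ≤ Real.exp (-R) ∧
        Real.exp (-R) ≤ ∑ x ∈ univ.filter (fun x => z' y ≤ W x y), Qx x) :
    gammaFn W R Qx z = gammaFn W R Qx z' := by
  have hform : ∀ u : Y → ℝ, gammaFn W R Qx u
      = ∑ y, ((∑ x, Qx x * min (W x y) (u y)) - Real.exp (-R) * u y) := by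
    intro u
    rw [gammaFn, Finset.sum_comm, Finset.mul_sum, ← Finset.sum_sub_distrib]
  rw [hform, hform]
  apply Finset.sum_congr rfl
  intro y _
  have hper : ∀ a b : ℝ, a ≤ b →
      (∑ x ∈ univ.filter (fun x => a < W x y), Qx x) ≤ Real.exp (-R) →
      Real.exp (-R) ≤ (∑ x ∈ univ.filter (fun x => b ≤ W x y), Qx x) →
      (∑ x, Qx x * min (W x y) a) - Real.exp (-R) * a
        = (∑ x, Qx x * min (W x y) b) - Real.exp (-R) * b := by
    intro a b hab h1 h2
    exact key_aux Qx (fun x => W x y) hQx.1 a b _ hab h1 h2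
  rcases le_total (z y) (z' y) with h | h
  · exact hper _ _ h (hcond y).1 (hcond' y).2
  · exact (hper _ _ h (hcond' y).1 (hcond y).2).symm
end

section
/- Let X and Y be finite sets, let W : X × Y → [0,1] be a channel (for each x ∈ X, Σ_{y∈Y} W(y|x) = 1), and fix R > 0. Then min over probability mass functions Q_X on X of max over probability mass functions Q_Y on Y of β_{1−e^{−R}}(Q_X × Q_Y, Q_X W) = max over z ∈ [0,1]^Y of min over x ∈ X of ( Σ_{y∈Y} min(W(y|x), z_y) − e^{−R}·Σ_{y∈Y} z_y ), and all the indicated extrema are attained. -/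
open Finset
open scoped Classical

open scoped Pointwise

set_option maxHeartbeats 1000000

section Beta
variable {Ω : Type*} [Fintype Ω]

lemma beta_mem_ones (α : ℝ) (hα1 : α ≤ 1) (P Q : Ω → ℝ) (hPs : ∑ w, P w = 1) :
    (∑ w, Q w) ∈ {r | ∃ φ : Ω → ℝ, (∀ w, φ w ∈ Set.Icc (0:ℝ) 1) ∧
      α ≤ ∑ w, P w * φ w ∧ r = ∑ w, Q w * φ w} := by
  refine ⟨fun _ => 1, fun w => ⟨zero_le_one, le_refl 1⟩, ?_, by simp⟩
  simp only [mul_one, hPs]; exact hα1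

lemma beta_weak (α : ℝ) (hα1 : α ≤ 1) (P Q : Ω → ℝ) (hPs : ∑ w, P w = 1)
    (hQ0 : ∀ w, 0 ≤ Q w) (γ : ℝ) (hγ : 0 ≤ γ) :
    γ * α - ∑ w, max (γ * P w - Q w) 0 ≤ betaHT α P Q := by
  apply le_csInf ⟨_, beta_mem_ones α hα1 P Q hPs⟩
  rintro r ⟨φ, hφ, hfeas, rfl⟩
  have h1 : γ * α ≤ γ * ∑ w, P w * φ w := mul_le_mul_of_nonneg_left hfeas hγ
  have h2 : ∀ w, γ * (P w * φ w) - max (γ * P w - Q w) 0 ≤ Q w * φ w := by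
    intro w
    obtain ⟨hb0, hb1⟩ := hφ w
    rcases le_or_gt (γ * P w - Q w) 0 with h | h
    · rw [max_eq_right h]
      nlinarith [mul_nonpos_of_nonpos_of_nonneg h hb0]
    · rw [max_eq_left h.le]
      nlinarith [mul_nonneg h.le (sub_nonneg.mpr hb1)]
  calc γ * α - ∑ w, max (γ * P w - Q w) 0
      ≤ γ * ∑ w, P w * φ w - ∑ w, max (γ * P w - Q w) 0 := by linarith
    _ = ∑ w, (γ * (P w * φ w) - max (γ * P w - Q w) 0) := by
        rw [Finset.mul_sum, Finset.sum_sub_distrib]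
    _ ≤ ∑ w, Q w * φ w := Finset.sum_le_sum fun w _ => h2 w

end Beta

section Beta2
variable {Ω : Type*} [Fintype Ω]

lemma beta_bddBelow (α : ℝ) (P Q : Ω → ℝ) (hQ0 : ∀ w, 0 ≤ Q w) :
    BddBelow {r | ∃ φ : Ω → ℝ, (∀ w, φ w ∈ Set.Icc (0:ℝ) 1) ∧
      α ≤ ∑ w, P w * φ w ∧ r = ∑ w, Q w * φ w} := by
  refine ⟨0, ?_⟩
  rintro r ⟨φ, hφ, -, rfl⟩
  exact Finset.sum_nonneg fun w _ => mul_nonneg (hQ0 w) (hφ w).1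

lemma beta_le_of_phi (α : ℝ) (P Q : Ω → ℝ) (hQ0 : ∀ w, 0 ≤ Q w) (φ : Ω → ℝ)
    (hφ : ∀ w, φ w ∈ Set.Icc (0:ℝ) 1) (hfeas : α ≤ ∑ w, P w * φ w) :
    betaHT α P Q ≤ ∑ w, Q w * φ w :=
  csInf_le (beta_bddBelow α P Q hQ0) ⟨φ, hφ, hfeas, rfl⟩

/-- Neyman–Pearson: the optimal test is a likelihood-ratio threshold test;
it yields the dual value `γα - ∑ max (γP - Q) 0`. -/
lemma beta_strong (α : ℝ) (hα0 : 0 ≤ α) (hα1 : α ≤ 1) (P Q : Ω → ℝ)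
    (hP0 : ∀ w, 0 ≤ P w) (hPs : ∑ w, P w = 1) (hQ0 : ∀ w, 0 ≤ Q w) :
    ∃ γ : ℝ, 0 ≤ γ ∧ ∃ φ : Ω → ℝ, (∀ w, φ w ∈ Set.Icc (0:ℝ) 1) ∧
      (∑ w, P w * φ w = α) ∧
      ∑ w, Q w * φ w = γ * α - ∑ w, max (γ * P w - Q w) 0 := by
  classical
  -- the finite set of likelihood ratios
  set T : Finset ℝ := (univ.filter fun w => 0 < P w).image fun w => Q w / P w with hT
  have hex : ∃ w, 0 < P w := by
    by_contra h
    push_neg at h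
    have : ∑ w, P w = 0 :=
      Finset.sum_eq_zero fun w _ => le_antisymm (h w) (hP0 w)
    rw [hPs] at this; norm_num at this
  obtain ⟨w1, hw1⟩ := hex
  have hTne : T.Nonempty := ⟨Q w1 / P w1, mem_image.mpr ⟨w1, by simp [hw1], rfl⟩⟩
  have hTnn : ∀ t ∈ T, 0 ≤ t := by
    intro t ht
    obtain ⟨w, hw, rfl⟩ := mem_image.mp ht
    exact div_nonneg (hQ0 w) (hP0 w)
  set γbig : ℝ := T.max' hTne + 1 with hγbig
  set U : ℝ → ℝ := fun γ => ∑ w ∈ univ.filter (fun w => Q w ≤ γ * P w), P w with hU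
  have hPfil : ∑ w ∈ univ.filter (fun w => 0 < P w), P w = 1 := by
    rw [← hPs]
    apply Finset.sum_filter_of_ne
    intro w _ h
    exact lt_of_le_of_ne (hP0 w) (Ne.symm h)
  have hUmono : ∀ (s : Finset Ω) γ, s ⊆ univ.filter (fun w => Q w ≤ γ * P w) →
      ∑ w ∈ s, P w ≤ U γ := by
    intro s γ hs
    exact Finset.sum_le_sum_of_subset_of_nonneg hs fun w _ _ => hP0 w
  have hbig : α ≤ U γbig := by
    have hsub : univ.filter (fun w => 0 < P w) ⊆ univ.filter (fun w => Q w ≤ γbig * P w) := by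
      intro w hw
      rw [mem_filter] at hw ⊢
      refine ⟨mem_univ w, ?_⟩
      have hmem : Q w / P w ∈ T := mem_image.mpr ⟨w, by simp [hw.2], rfl⟩
      have h1 : Q w / P w ≤ T.max' hTne := T.le_max' _ hmem
      have h2 : Q w / P w ≤ γbig := by rw [hγbig]; linarith
      calc Q w = Q w / P w * P w := (div_mul_cancel₀ (Q w) hw.2.ne').symm
        _ ≤ γbig * P w := mul_le_mul_of_nonneg_right h2 (hP0 w)
    calc α ≤ 1 := hα1
      _ = ∑ w ∈ univ.filter (fun w => 0 < P w), P w := hPfil.symm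
      _ ≤ U γbig := hUmono _ _ hsub
  set C' : Finset ℝ := (insert γbig T).filter (fun γ => α ≤ U γ) with hC'
  have hγbigC' : γbig ∈ C' := mem_filter.mpr ⟨mem_insert_self _ _, hbig⟩
  have hC'ne : C'.Nonempty := ⟨γbig, hγbigC'⟩
  set γs : ℝ := C'.min' hC'ne with hγs
  have hγsC' : γs ∈ C' := Finset.min'_mem _ _
  have hγsU : α ≤ U γs := (mem_filter.mp hγsC').2
  have hγs0 : 0 ≤ γs := by
    rcases mem_insert.mp (mem_filter.mp hγsC').1 with h | h
    · rw [h, hγbig]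
      obtain ⟨t, ht⟩ := hTne
      linarith [hTnn t ht, T.le_max' t ht]
    · exact hTnn _ h
  set L : ℝ := ∑ w ∈ univ.filter (fun w => Q w < γs * P w), P w with hL
  have hLle : L ≤ α := by
    by_contra hcon
    push_neg at hcon
    set D := univ.filter (fun w => Q w < γs * P w) with hD
    have hDne : D.Nonempty := by
      by_contra h
      rw [Finset.not_nonempty_iff_eq_empty] at h
      rw [hL, h, Finset.sum_empty] at hcon
      linarith
    have hPpos : ∀ w ∈ D, 0 < P w := by
      intro w hw
      rcases (hP0 w).lt_or_eq with h | h
      · exact h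
      · exfalso
        have := (mem_filter.mp hw).2
        rw [← h, mul_zero] at this
        exact absurd this (not_lt.mpr (hQ0 w))
    obtain ⟨w0, hw0D, hw0max⟩ := Finset.exists_max_image D (fun w => Q w / P w) hDne
    set γ' : ℝ := Q w0 / P w0 with hγ'
    have hP0pos := hPpos w0 hw0D
    have hγ'T : γ' ∈ T := mem_image.mpr ⟨w0, by simp [hP0pos], rfl⟩
    have hγ'lt : γ' < γs := by
      rw [hγ', div_lt_iff₀ hP0pos]
      exact (mem_filter.mp hw0D).2
    have hsub : D ⊆ univ.filter (fun w => Q w ≤ γ' * P w) := by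
      intro w hw
      rw [mem_filter]
      refine ⟨mem_univ w, ?_⟩
      have h1 : Q w / P w ≤ γ' := hw0max w hw
      have h2 := hPpos w hw
      calc Q w = Q w / P w * P w := (div_mul_cancel₀ (Q w) h2.ne').symm
        _ ≤ γ' * P w := mul_le_mul_of_nonneg_right h1 h2.le
    have hLU : L ≤ U γ' := hUmono _ _ hsub
    have hmemC' : γ' ∈ C' :=
      mem_filter.mpr ⟨mem_insert_of_mem hγ'T, le_of_lt (lt_of_lt_of_le hcon hLU)⟩
    have := Finset.min'_le C' γ' hmemC'
    rw [← hγs] at this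
    linarith
  -- the randomization parameter
  have hfilsub : univ.filter (fun w => Q w < γs * P w) ⊆
      univ.filter (fun w => Q w ≤ γs * P w) := by
    intro w hw; rw [mem_filter] at hw ⊢; exact ⟨hw.1, hw.2.le⟩
  have hLleU : L ≤ U γs := hUmono _ _ hfilsub
  set τ : ℝ := if L < U γs then (α - L) / (U γs - L) else 0 with hτ
  have hτ0 : 0 ≤ τ := by
    rw [hτ]; split_ifs with h
    · exact div_nonneg (by linarith) (by linarith)
    · exact le_refl 0
  have hτ1 : τ ≤ 1 := by
    rw [hτ]; split_ifs with h
    · rw [div_le_one (by linarith)]; linarith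
    · exact zero_le_one
  -- the threshold test
  set φ : Ω → ℝ := fun w =>
    if Q w < γs * P w then 1 else if Q w ≤ γs * P w then τ else 0 with hφdef
  have hφmem : ∀ w, φ w ∈ Set.Icc (0:ℝ) 1 := by
    intro w
    rw [hφdef]
    dsimp only
    split_ifs <;> simp [Set.mem_Icc, hτ0, hτ1]
  -- pointwise dual identity
  have hpt : ∀ w, (Q w - γs * P w) * φ w = -(max (γs * P w - Q w) 0) := by
    intro w
    rw [hφdef]
    dsimp only
    split_ifs with h1 h2
    · rw [max_eq_left (by linarith)]; ring
    · have he : Q w = γs * P w := le_antisymm h2 (not_lt.mp h1)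
      rw [he]; simp
    · push_neg at h1 h2
      rw [max_eq_right (by linarith)]
      ring
  -- the feasibility constraint is met with equality
  have hPφsplit : ∀ w, P w * φ w =
      (if Q w < γs * P w then P w else 0) * (1 - τ) +
      (if Q w ≤ γs * P w then P w else 0) * τ := by
    intro w
    rw [hφdef]
    dsimp only
    by_cases h1 : Q w < γs * P w
    · rw [if_pos h1, if_pos h1, if_pos h1.le]; ring
    · by_cases h2 : Q w ≤ γs * P w
      · rw [if_neg h1, if_pos h2, if_neg h1, if_pos h2]; ring
      · rw [if_neg h1, if_neg h2, if_neg h1, if_neg h2]; ring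
  have hPφ : ∑ w, P w * φ w = α := by
    have : ∑ w, P w * φ w = L * (1 - τ) + U γs * τ := by
      rw [Finset.sum_congr rfl fun w _ => hPφsplit w, Finset.sum_add_distrib,
        ← Finset.sum_mul, ← Finset.sum_mul, ← Finset.sum_filter, ← Finset.sum_filter]
    rw [this]
    rcases lt_or_ge L (U γs) with h | h
    · have hτval : τ = (α - L) / (U γs - L) := by rw [hτ, if_pos h]
      have : τ * (U γs - L) = α - L := by
        rw [hτval, div_mul_cancel₀ _ (by linarith : U γs - L ≠ 0)]
      nlinarith
    · have hLeq : L = U γs := le_antisymm hLleU h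
      have hτval : τ = 0 := by rw [hτ, if_neg (not_lt.mpr h)]
      have hαL : α = L := by rw [← hLeq] at hγsU; linarith
      rw [hτval, hαL]; ring
  refine ⟨γs, hγs0, φ, hφmem, hPφ, ?_⟩
  have hsum : ∑ w, Q w * φ w - γs * ∑ w, P w * φ w = -∑ w, max (γs * P w - Q w) 0 := by
    rw [Finset.mul_sum, ← Finset.sum_sub_distrib, ← Finset.sum_neg_distrib]
    apply Finset.sum_congr rfl
    intro w _
    linear_combination hpt w
  rw [hPφ] at hsum
  linarith
end Beta2

section Channel
variable {X Y : Type*} [Fintype X] [Fintype Y] [Nonempty X] [Nonempty Y]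

/-- The payoff function `f(x,z) = ∑_y min(W(y|x), z_y) - e^{-R} ∑_y z_y`. -/
noncomputable def fxz (W : X → Y → ℝ) (R : ℝ) (x : X) (z : Y → ℝ) : ℝ :=
  (∑ y, min (W x y) (z y)) - Real.exp (-R) * ∑ y, z y

lemma dual_eq (W : X → Y → ℝ) (R : ℝ) (Qx : X → ℝ) (Qy : Y → ℝ)
    (hQx : IsPMF Qx) (hQy : IsPMF Qy) (γ : ℝ) :
    γ * (1 - Real.exp (-R)) - ∑ p : X × Y,
        max (γ * (Qx p.1 * Qy p.2) - Qx p.1 * W p.1 p.2) 0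
      = ∑ x, Qx x * fxz W R x (fun y => γ * Qy y) := by
  have hmax : ∀ x y, max (γ * (Qx x * Qy y) - Qx x * W x y) 0
      = Qx x * (γ * Qy y - min (W x y) (γ * Qy y)) := by
    intro x y
    rcases le_total (W x y) (γ * Qy y) with h | h
    · rw [min_eq_left h, max_eq_left
        (by nlinarith [mul_nonneg (hQx.1 x) (sub_nonneg.mpr h)])]
      ring
    · rw [min_eq_right h, max_eq_right
        (by nlinarith [mul_nonneg (hQx.1 x) (sub_nonneg.mpr h)])]
      ring
  have hsy : ∀ x, ∑ y, max (γ * (Qx x * Qy y) - Qx x * W x y) 0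
      = Qx x * (γ - ∑ y, min (W x y) (γ * Qy y)) := by
    intro x
    rw [Finset.sum_congr rfl fun y _ => hmax x y, ← Finset.mul_sum]
    congr 1
    rw [Finset.sum_sub_distrib, ← Finset.mul_sum, hQy.2, mul_one]
  rw [Fintype.sum_prod_type, Finset.sum_congr rfl fun x _ => hsy x]
  have h1 : ∑ x, Qx x * (γ - ∑ y, min (W x y) (γ * Qy y))
      = γ - ∑ x, Qx x * ∑ y, min (W x y) (γ * Qy y) := by
    rw [Finset.sum_congr rfl fun x _ => mul_sub (Qx x) γ _, Finset.sum_sub_distrib,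
      ← Finset.sum_mul, hQx.2, one_mul]
  have hz : ∑ y, γ * Qy y = γ := by rw [← Finset.mul_sum, hQy.2, mul_one]
  have h2 : ∑ x, Qx x * fxz W R x (fun y => γ * Qy y)
      = (∑ x, Qx x * ∑ y, min (W x y) (γ * Qy y)) - Real.exp (-R) * γ := by
    simp only [fxz, hz]
    rw [Finset.sum_congr rfl fun x _ => mul_sub (Qx x) _ _, Finset.sum_sub_distrib,
      ← Finset.sum_mul, hQx.2, one_mul]
  rw [h1, h2]
  ring

lemma fxz_clip (W : X → Y → ℝ) (hW : ∀ x y, W x y ∈ Set.Icc (0:ℝ) 1) (R : ℝ)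
    (x : X) (z : Y → ℝ) :
    fxz W R x z ≤ fxz W R x (fun y => min (z y) 1) := by
  unfold fxz
  simp only
  rw [Finset.mul_sum, Finset.mul_sum, ← Finset.sum_sub_distrib, ← Finset.sum_sub_distrib]
  apply Finset.sum_le_sum
  intro y _
  have he0 : 0 < Real.exp (-R) := Real.exp_pos _
  rcases le_total (z y) 1 with h | h
  · rw [min_eq_left h]
  · rw [min_eq_right h, min_eq_left (le_trans (hW x y).2 h), min_eq_left (hW x y).2]
    nlinarith

lemma fxz_concave (W : X → Y → ℝ) (R : ℝ) (x : X) (z1 z2 : Y → ℝ) (a b : ℝ)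
    (ha : 0 ≤ a) (hb : 0 ≤ b) (hab : a + b = 1) :
    a * fxz W R x z1 + b * fxz W R x z2 ≤ fxz W R x (fun y => a * z1 y + b * z2 y) := by
  unfold fxz
  simp only
  have hmin : ∀ y, a * min (W x y) (z1 y) + b * min (W x y) (z2 y)
      ≤ min (W x y) (a * z1 y + b * z2 y) := by
    intro y
    apply le_min
    · calc a * min (W x y) (z1 y) + b * min (W x y) (z2 y)
          ≤ a * W x y + b * W x y :=
            add_le_add (mul_le_mul_of_nonneg_left (min_le_left _ _) ha)
              (mul_le_mul_of_nonneg_left (min_le_left _ _) hb)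
        _ = W x y := by rw [← add_mul, hab, one_mul]
    · exact add_le_add (mul_le_mul_of_nonneg_left (min_le_right _ _) ha)
        (mul_le_mul_of_nonneg_left (min_le_right _ _) hb)
  have hs1 : a * ∑ y, min (W x y) (z1 y) + b * ∑ y, min (W x y) (z2 y)
      ≤ ∑ y, min (W x y) (a * z1 y + b * z2 y) := by
    rw [Finset.mul_sum, Finset.mul_sum, ← Finset.sum_add_distrib]
    exact Finset.sum_le_sum fun y _ => hmin y
  have hlin : ∑ y, (a * z1 y + b * z2 y) = a * ∑ y, z1 y + b * ∑ y, z2 y := by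
    rw [Finset.sum_add_distrib, Finset.mul_sum, Finset.mul_sum]
  rw [hlin]
  linarith

lemma fxz_cont (W : X → Y → ℝ) (R : ℝ) (x : X) :
    Continuous (fun z : Y → ℝ => fxz W R x z) := by
  unfold fxz
  apply Continuous.sub
  · exact continuous_finset_sum _ fun y _ => continuous_const.min (continuous_apply y)
  · exact continuous_const.mul (continuous_finset_sum _ fun y _ => continuous_apply y)

lemma Fq_cont (W : X → Y → ℝ) (R : ℝ) (Q : X → ℝ) :
    Continuous (fun z : Y → ℝ => ∑ x, Q x * fxz W R x z) :=
  continuous_finset_sum _ fun x _ => continuous_const.mul (fxz_cont W R x)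

lemma KS_compact : IsCompact {z : Y → ℝ | ∀ y, z y ∈ Set.Icc (0:ℝ) 1} := by
  have : {z : Y → ℝ | ∀ y, z y ∈ Set.Icc (0:ℝ) 1}
      = Set.pi Set.univ (fun _ => Set.Icc (0:ℝ) 1) := by
    ext z
    simp only [Set.mem_setOf_eq, Set.mem_pi]
    exact ⟨fun h i _ => h i, fun h y => h y (Set.mem_univ y)⟩
  rw [this]
  exact isCompact_univ_pi fun _ => isCompact_Icc

lemma KS_zero_mem : (0 : Y → ℝ) ∈ {z : Y → ℝ | ∀ y, z y ∈ Set.Icc (0:ℝ) 1} :=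
  fun y => ⟨le_refl 0, zero_le_one⟩

noncomputable def Mfun (W : X → Y → ℝ) (R : ℝ) (Q : X → ℝ) : ℝ :=
  sSup ((fun z => ∑ x, Q x * fxz W R x z) '' {z | ∀ y, z y ∈ Set.Icc (0:ℝ) 1})

lemma Mfun_isGreatest (W : X → Y → ℝ) (R : ℝ) (Q : X → ℝ) :
    IsGreatest ((fun z => ∑ x, Q x * fxz W R x z) '' {z | ∀ y, z y ∈ Set.Icc (0:ℝ) 1})
      (Mfun W R Q) := by
  obtain ⟨z0, hz0, hmax⟩ := KS_compact.exists_isMaxOn ⟨0, KS_zero_mem⟩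
    (Fq_cont W R Q).continuousOn
  have hG : IsGreatest ((fun z => ∑ x, Q x * fxz W R x z) ''
      {z | ∀ y, z y ∈ Set.Icc (0:ℝ) 1}) (∑ x, Q x * fxz W R x z0) := by
    constructor
    · exact Set.mem_image_of_mem _ hz0
    · rintro r ⟨z, hz, rfl⟩
      exact isMaxOn_iff.mp hmax z hz
  unfold Mfun
  rw [hG.csSup_eq]
  exact hG

end Channel

section Channel2
variable {X Y : Type*} [Fintype X] [Fintype Y] [Nonempty X] [Nonempty Y]


lemma inf'_univ_eq_ciInf {ι : Type*} [Fintype ι] [Nonempty ι] (g : ι → ℝ) :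
    (univ.inf' univ_nonempty g) = ⨅ i, g i := by
  apply le_antisymm
  · exact le_ciInf fun i => Finset.inf'_le _ (mem_univ i)
  · obtain ⟨i0, -, h⟩ := Finset.exists_mem_eq_inf' univ_nonempty g
    rw [h]
    exact ciInf_le (Set.finite_range g).bddBelow i0

lemma continuous_finset_inf' {ι Z : Type*} [TopologicalSpace Z] (s : Finset ι) (hs : s.Nonempty)
    (g : ι → Z → ℝ) (hg : ∀ i, Continuous (g i)) :
    Continuous fun z => s.inf' hs fun i => g i z := by
  induction hs using Finset.Nonempty.cons_induction with
  | singleton a => simpa using hg a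
  | cons a s ha hs ih =>
    have heq : (fun z => (Finset.cons a s ha).inf' (Finset.cons_nonempty ha) fun i => g i z)
        = fun z => min (g a z) (s.inf' hs fun i => g i z) := by
      funext z
      rw [Finset.inf'_cons]
    rw [heq]
    exact (hg a).min ih

lemma fxz_bound (W : X → Y → ℝ) (hW : ∀ x y, W x y ∈ Set.Icc (0:ℝ) 1) (R : ℝ) (hR : 0 < R)
    (x : X) (z : Y → ℝ) (hz : ∀ y, z y ∈ Set.Icc (0:ℝ) 1) :
    |fxz W R x z| ≤ (Fintype.card Y : ℝ) := by
  have he0 : 0 < Real.exp (-R) := Real.exp_pos _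
  have he1 : Real.exp (-R) < 1 := by
    rw [← Real.exp_zero]
    exact Real.exp_lt_exp.mpr (by linarith)
  have hs1 : 0 ≤ ∑ y, min (W x y) (z y) :=
    Finset.sum_nonneg fun y _ => le_min (hW x y).1 (hz y).1
  have hs2 : ∑ y, min (W x y) (z y) ≤ (Fintype.card Y : ℝ) := by
    calc ∑ y, min (W x y) (z y) ≤ ∑ y, (1:ℝ) :=
        Finset.sum_le_sum fun y _ => le_trans (min_le_right _ _) (hz y).2
      _ = (Fintype.card Y : ℝ) := by rw [Finset.sum_const, card_univ, nsmul_eq_mul, mul_one]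
  have hz1 : 0 ≤ ∑ y, z y := Finset.sum_nonneg fun y _ => (hz y).1
  have hz2 : ∑ y, z y ≤ (Fintype.card Y : ℝ) := by
    calc ∑ y, z y ≤ ∑ y, (1:ℝ) := Finset.sum_le_sum fun y _ => (hz y).2
      _ = (Fintype.card Y : ℝ) := by rw [Finset.sum_const, card_univ, nsmul_eq_mul, mul_one]
  rw [fxz, abs_le]
  constructor
  · nlinarith
  · nlinarith

lemma Mfun_le (W : X → Y → ℝ) (hW : ∀ x y, W x y ∈ Set.Icc (0:ℝ) 1) (R : ℝ) (hR : 0 < R)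
    (Q1 Q2 : X → ℝ)
    (hM2 : ∀ z ∈ {z : Y → ℝ | ∀ y, z y ∈ Set.Icc (0:ℝ) 1},
      ∑ x, Q2 x * fxz W R x z ≤ M2)
    (hM1 : ∃ z ∈ {z : Y → ℝ | ∀ y, z y ∈ Set.Icc (0:ℝ) 1}, M1 = ∑ x, Q1 x * fxz W R x z) :
    M1 ≤ M2 + (∑ x, |Q1 x - Q2 x|) * (Fintype.card Y : ℝ) := by
  obtain ⟨z, hz, rfl⟩ := hM1
  have hpt : ∀ x, Q1 x * fxz W R x z
      ≤ Q2 x * fxz W R x z + |Q1 x - Q2 x| * (Fintype.card Y : ℝ) := by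
    intro x
    have hb := fxz_bound W hW R hR x z hz
    have h1 : (Q1 x - Q2 x) * fxz W R x z ≤ |Q1 x - Q2 x| * (Fintype.card Y : ℝ) := by
      calc (Q1 x - Q2 x) * fxz W R x z ≤ |(Q1 x - Q2 x) * fxz W R x z| := le_abs_self _
        _ = |Q1 x - Q2 x| * |fxz W R x z| := abs_mul _ _
        _ ≤ |Q1 x - Q2 x| * (Fintype.card Y : ℝ) :=
            mul_le_mul_of_nonneg_left hb (abs_nonneg _)
    linarith
  calc ∑ x, Q1 x * fxz W R x z
      ≤ ∑ x, (Q2 x * fxz W R x z + |Q1 x - Q2 x| * (Fintype.card Y : ℝ)) :=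
        Finset.sum_le_sum fun x _ => hpt x
    _ = (∑ x, Q2 x * fxz W R x z) + (∑ x, |Q1 x - Q2 x|) * (Fintype.card Y : ℝ) := by
        rw [Finset.sum_add_distrib, Finset.sum_mul]
    _ ≤ M2 + (∑ x, |Q1 x - Q2 x|) * (Fintype.card Y : ℝ) := by
        have := hM2 z hz
        linarith

end Channel2

section S5
variable {X Y : Type*} [Fintype X] [Fintype Y] [Nonempty X] [Nonempty Y]

lemma minimax_exists_Q (W : X → Y → ℝ) (hW : ∀ x y, W x y ∈ Set.Icc (0:ℝ) 1) (R : ℝ)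
    (v ε : ℝ) (hε : 0 < ε)
    (hvub : ∀ z ∈ {z : Y → ℝ | ∀ y, z y ∈ Set.Icc (0:ℝ) 1}, (⨅ x, fxz W R x z) ≤ v) :
    ∃ Q : X → ℝ, IsPMF Q ∧ ∀ z ∈ {z : Y → ℝ | ∀ y, z y ∈ Set.Icc (0:ℝ) 1},
      ∑ x, Q x * fxz W R x z ≤ v + ε := by
  classical
  set K : Set (Y → ℝ) := {z | ∀ y, z y ∈ Set.Icc (0:ℝ) 1} with hK
  set Φ : (Y → ℝ) → (X → ℝ) := fun z x => fxz W R x z with hΦ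
  set A : Set (X → ℝ) := {a | ∃ z ∈ K, ∀ x, a x ≤ fxz W R x z} with hA
  have hfxz0 : ∀ x : X, fxz W R x 0 = 0 := by
    intro x
    unfold fxz
    have h0 : ∀ y ∈ (univ : Finset Y), min (W x y) ((0 : Y → ℝ) y) = 0 := by
      intro y _
      simp [min_eq_right (hW x y).1]
    rw [Finset.sum_congr rfl h0]
    simp
  have hconv : Convex ℝ A := by
    rintro a1 ⟨z1, hz1, h1⟩ a2 ⟨z2, hz2, h2⟩ t u ht hu htu
    refine ⟨fun y => t * z1 y + u * z2 y, ?_, ?_⟩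
    · intro y
      constructor
      · exact add_nonneg (mul_nonneg ht (hz1 y).1) (mul_nonneg hu (hz2 y).1)
      · calc t * z1 y + u * z2 y ≤ t * 1 + u * 1 :=
            add_le_add (mul_le_mul_of_nonneg_left (hz1 y).2 ht)
              (mul_le_mul_of_nonneg_left (hz2 y).2 hu)
          _ = 1 := by rw [mul_one, mul_one, htu]
    · intro x
      have hc := fxz_concave W R x z1 z2 t u ht hu htu
      have h3 := add_le_add (mul_le_mul_of_nonneg_left (h1 x) ht)
        (mul_le_mul_of_nonneg_left (h2 x) hu)
      simp only [Pi.add_apply, Pi.smul_apply, smul_eq_mul]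
      linarith
  have hAeq : A = (Φ '' K) + {d : X → ℝ | ∀ x, d x ≤ 0} := by
    ext a
    constructor
    · rintro ⟨z, hz, h⟩
      have : a = Φ z + (a - Φ z) := by abel
      rw [this]
      refine Set.add_mem_add (Set.mem_image_of_mem _ hz) ?_
      intro x
      simp only [Pi.sub_apply]
      have : Φ z x = fxz W R x z := rfl
      rw [this]
      linarith [h x]
    · intro h
      obtain ⟨p, hp, d, hd, hpd⟩ := Set.mem_add.mp h
      obtain ⟨z, hz, rfl⟩ := hp
      refine ⟨z, hz, fun x => ?_⟩
      have h1 : Φ z x + d x = a x := by rw [← hpd]; rfl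
      have h2 : Φ z x = fxz W R x z := rfl
      have := hd x
      linarith [this]
  have hΦcont : Continuous Φ := continuous_pi fun x => fxz_cont W R x
  have hclosed : IsClosed A := by
    rw [hAeq]
    apply IsClosed.add_left_of_isCompact ?_ (KS_compact.image hΦcont)
    have : {d : X → ℝ | ∀ x, d x ≤ 0} = Set.pi Set.univ fun _ => Set.Iic (0:ℝ) := by
      ext d
      simp only [Set.mem_setOf_eq, Set.mem_pi, Set.mem_univ, Set.mem_Iic]
      exact ⟨fun h i _ => h i, fun h x => h x (Set.mem_univ x)⟩
    rw [this]
    exact isClosed_set_pi fun _ _ => isClosed_Iic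
  set b : X → ℝ := fun _ => v + ε with hb
  have hbA : b ∉ A := by
    rintro ⟨z, hz, h⟩
    have h1 : v + ε ≤ ⨅ x, fxz W R x z := le_ciInf fun x => h x
    have h2 := hvub z hz
    linarith
  obtain ⟨ℓ, u, hu1, hu2⟩ := geometric_hahn_banach_closed_point hconv hclosed hbA
  set c : X → ℝ := fun x => ℓ (fun j => if x = j then (1:ℝ) else 0) with hc
  have hℓ : ∀ a : X → ℝ, ℓ a = ∑ x, a x * c x := by
    intro a
    conv_lhs => rw [pi_eq_sum_univ a]
    rw [map_sum]
    apply Finset.sum_congr rfl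
    intro x _
    rw [map_smul, smul_eq_mul]
  have h0A : (0 : X → ℝ) ∈ A := by
    refine ⟨0, KS_zero_mem, fun x => ?_⟩
    rw [hfxz0 x]
    exact le_refl 0
  have hu0 : 0 < u := by
    have := hu1 0 h0A
    rwa [map_zero] at this
  have hcnn : ∀ x, 0 ≤ c x := by
    intro x
    by_contra hneg
    push_neg at hneg
    set t : ℝ := (u + 1) / (-(c x)) with hts
    have htpos : 0 < t := div_pos (by linarith) (by linarith)
    have hmem : (fun j => if x = j then -t else 0) ∈ A := by
      refine ⟨0, KS_zero_mem, fun x' => ?_⟩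
      rw [hfxz0 x']
      dsimp only
      split_ifs with h
      · linarith
      · exact le_refl 0
    have hval := hu1 _ hmem
    rw [hℓ] at hval
    have hsum : ∑ x', (if x = x' then -t else 0) * c x' = -t * c x := by
      rw [Finset.sum_eq_single x]
      · simp
      · intro x' _ hx'
        rw [if_neg (Ne.symm hx'), zero_mul]
      · intro hx
        exact absurd (mem_univ x) hx
    rw [hsum] at hval
    have hcx : -c x ≠ 0 := by intro h; rw [neg_eq_zero] at h; linarith [hneg, h.le]
    have heq : t * (-c x) = u + 1 := by
      rw [hts]
      exact div_mul_cancel₀ _ hcx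
    nlinarith [hval, heq]
  set S : ℝ := ∑ x, c x with hS
  have hSnn : 0 ≤ S := Finset.sum_nonneg fun x _ => hcnn x
  have hℓb : ℓ b = (v + ε) * S := by
    rw [hℓ, hS, Finset.mul_sum]
  have hSpos : 0 < S := by
    rcases hSnn.lt_or_eq with h | h
    · exact h
    · exfalso
      rw [← h, mul_zero] at hℓb
      linarith [hu2, hℓb ▸ hu2]
  refine ⟨fun x => c x / S, ⟨fun x => div_nonneg (hcnn x) hSnn, ?_⟩, ?_⟩
  · rw [← Finset.sum_div, ← hS]
    exact div_self hSpos.ne'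
  · intro z hz
    have hΦzA : Φ z ∈ A := ⟨z, hz, fun x => le_refl _⟩
    have h1 := hu1 _ hΦzA
    rw [hℓ] at h1
    have h2 : ∑ x, (c x / S) * fxz W R x z = (∑ x, Φ z x * c x) / S := by
      rw [Finset.sum_div]
      apply Finset.sum_congr rfl
      intro x _
      have : Φ z x = fxz W R x z := rfl
      rw [this]
      ring
    rw [h2]
    have h3 : (∑ x, Φ z x * c x) / S ≤ u / S := by gcongr
    have h4 : u / S ≤ v + ε := by
      rw [div_le_iff₀ hSpos]
      have := hℓb ▸ hu2
      linarith
    linarith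
end S5

section Main
variable {X Y : Type*} [Fintype X] [Fintype Y] [Nonempty X] [Nonempty Y]

lemma fxz_eq_zero (W : X → Y → ℝ) (hW : ∀ x y, W x y ∈ Set.Icc (0:ℝ) 1) (R : ℝ)
    (x : X) (z : Y → ℝ) (hz : ∀ y, z y = 0) : fxz W R x z = 0 := by
  unfold fxz
  have h0 : ∀ y ∈ (univ : Finset Y), min (W x y) (z y) = 0 := by
    intro y _
    rw [hz y]
    exact min_eq_right (hW x y).1
  rw [Finset.sum_congr rfl h0, Finset.sum_congr rfl fun y _ => hz y]
  simp

/-- Key lemma: for a PMF `Qx`, `Mfun W R Qx` is the greatest value of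
`β` over PMFs `Qy`. -/
lemma key_isGreatest (W : X → Y → ℝ) (hW : ∀ x y, W x y ∈ Set.Icc (0:ℝ) 1)
    (hWsum : ∀ x, ∑ y, W x y = 1) (R : ℝ) (hR : 0 < R)
    (Qx : X → ℝ) (hQx : IsPMF Qx) :
    IsGreatest {s | ∃ Qy : Y → ℝ, IsPMF Qy ∧
      s = betaHT (1 - Real.exp (-R))
            (fun p : X × Y => Qx p.1 * Qy p.2)
            (fun p : X × Y => Qx p.1 * W p.1 p.2)} (Mfun W R Qx) := by
  have he0 : 0 < Real.exp (-R) := Real.exp_pos _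
  have he1 : Real.exp (-R) < 1 := by
    rw [← Real.exp_zero]; exact Real.exp_lt_exp.mpr (by linarith)
  have hα0 : 0 ≤ 1 - Real.exp (-R) := by linarith
  have hα1 : 1 - Real.exp (-R) ≤ 1 := by linarith
  have hQW0 : ∀ p : X × Y, 0 ≤ Qx p.1 * W p.1 p.2 :=
    fun p => mul_nonneg (hQx.1 p.1) (hW p.1 p.2).1
  have hQWs : ∑ p : X × Y, Qx p.1 * W p.1 p.2 = 1 := by
    rw [Fintype.sum_prod_type]
    simp only [← Finset.mul_sum, hWsum, mul_one]
    exact hQx.2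
  have hPprod0 : ∀ (Qy : Y → ℝ), IsPMF Qy → ∀ p : X × Y, 0 ≤ Qx p.1 * Qy p.2 :=
    fun Qy hQy p => mul_nonneg (hQx.1 p.1) (hQy.1 p.2)
  have hPprods : ∀ (Qy : Y → ℝ), IsPMF Qy → ∑ p : X × Y, Qx p.1 * Qy p.2 = 1 := by
    intro Qy hQy
    rw [Fintype.sum_prod_type]
    simp only [← Finset.mul_sum, hQy.2, mul_one]
    exact hQx.2
  -- upper bound: β(Qx, Qy) ≤ Mfun for every PMF Qy
  have hupper : ∀ Qy : Y → ℝ, IsPMF Qy →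
      betaHT (1 - Real.exp (-R)) (fun p : X × Y => Qx p.1 * Qy p.2)
        (fun p : X × Y => Qx p.1 * W p.1 p.2) ≤ Mfun W R Qx := by
    intro Qy hQy
    obtain ⟨γ, hγ0, φ, hφ, hfeas, hval⟩ :=
      beta_strong (1 - Real.exp (-R)) hα0 hα1
        (fun p : X × Y => Qx p.1 * Qy p.2) (fun p : X × Y => Qx p.1 * W p.1 p.2)
        (hPprod0 Qy hQy) (hPprods Qy hQy) hQW0
    have h1 := beta_le_of_phi (1 - Real.exp (-R))
      (fun p : X × Y => Qx p.1 * Qy p.2) (fun p : X × Y => Qx p.1 * W p.1 p.2)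
      hQW0 φ hφ (le_of_eq hfeas.symm)
    rw [hval] at h1
    have h2 := dual_eq W R Qx Qy hQx hQy γ
    rw [h2] at h1
    have hclipmem : (fun y => min (γ * Qy y) 1) ∈
        {z : Y → ℝ | ∀ y, z y ∈ Set.Icc (0:ℝ) 1} := by
      intro y
      exact ⟨le_min (mul_nonneg hγ0 (hQy.1 y)) zero_le_one, min_le_right _ _⟩
    have h3 : ∑ x, Qx x * fxz W R x (fun y => γ * Qy y)
        ≤ ∑ x, Qx x * fxz W R x (fun y => min (γ * Qy y) 1) :=
      Finset.sum_le_sum fun x _ =>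
        mul_le_mul_of_nonneg_left (fxz_clip W hW R x _) (hQx.1 x)
    have h4 : ∑ x, Qx x * fxz W R x (fun y => min (γ * Qy y) 1) ≤ Mfun W R Qx :=
      (Mfun_isGreatest W R Qx).2 ⟨_, hclipmem, rfl⟩
    linarith
  -- lower bound via weak duality
  have hlower : ∀ Qy : Y → ℝ, IsPMF Qy → ∀ γ : ℝ, 0 ≤ γ →
      ∑ x, Qx x * fxz W R x (fun y => γ * Qy y) ≤
      betaHT (1 - Real.exp (-R)) (fun p : X × Y => Qx p.1 * Qy p.2)
        (fun p : X × Y => Qx p.1 * W p.1 p.2) := by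
    intro Qy hQy γ hγ0
    have h1 := beta_weak (1 - Real.exp (-R)) hα1
      (fun p : X × Y => Qx p.1 * Qy p.2) (fun p : X × Y => Qx p.1 * W p.1 p.2)
      (hPprods Qy hQy) hQW0 γ hγ0
    rw [dual_eq W R Qx Qy hQx hQy γ] at h1
    exact h1
  constructor
  · -- membership: a maximizing Qy exists
    obtain ⟨z0, hz0, hMeq0⟩ := (Mfun_isGreatest W R Qx).1
    have hMeq : (∑ x, Qx x * fxz W R x z0) = Mfun W R Qx := hMeq0
    have hz0nn : ∀ y, 0 ≤ z0 y := fun y => (hz0 y).1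
    rcases eq_or_lt_of_le (Finset.sum_nonneg fun y (_ : y ∈ univ) => hz0nn y) with hs0 | hs0
    · -- ∑ z0 = 0 : the maximum is 0; any PMF Qy works
      have hz00 : ∀ y, z0 y = 0 := by
        intro y
        have := (Finset.sum_eq_zero_iff_of_nonneg fun y (_ : y ∈ univ) => hz0nn y).mp hs0.symm
        exact this y (mem_univ y)
      have hM0 : Mfun W R Qx = 0 := by
        rw [← hMeq]
        simp only [fxz_eq_zero W hW R _ z0 hz00, mul_zero, Finset.sum_const_zero]
      set Qy : Y → ℝ := fun _ => (Fintype.card Y : ℝ)⁻¹ with hQydef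
      have hcardY : (0:ℝ) < (Fintype.card Y : ℝ) := by
        exact_mod_cast Fintype.card_pos
      have hQypmf : IsPMF Qy := by
        constructor
        · intro y; exact inv_nonneg.mpr hcardY.le
        · rw [Finset.sum_const, card_univ, nsmul_eq_mul, mul_inv_cancel₀ hcardY.ne']
      refine ⟨Qy, hQypmf, ?_⟩
      have hl := hlower Qy hQypmf 0 (le_refl 0)
      have hzz : ∑ x, Qx x * fxz W R x (fun y => 0 * Qy y) = 0 := by
        simp only [fxz_eq_zero W hW R _ _ (fun y => zero_mul (Qy y)), mul_zero,
          Finset.sum_const_zero]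
      rw [hzz] at hl
      have hu := hupper Qy hQypmf
      rw [hM0]
      linarith
    · -- ∑ z0 > 0 : normalize z0
      set s0 : ℝ := ∑ y, z0 y with hs0def
      set Qy : Y → ℝ := fun y => z0 y / s0 with hQydef
      have hQypmf : IsPMF Qy := by
        constructor
        · intro y; exact div_nonneg (hz0nn y) hs0.le
        · rw [← Finset.sum_div, ← hs0def]
          exact div_self hs0.ne'
      refine ⟨Qy, hQypmf, ?_⟩
      have hfun : (fun y => s0 * Qy y) = z0 := by
        funext y
        rw [hQydef]
        dsimp only
        rw [mul_comm]
        exact div_mul_cancel₀ _ hs0.ne'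
      have hl := hlower Qy hQypmf s0 hs0.le
      rw [hfun, hMeq] at hl
      exact (le_antisymm (hupper Qy hQypmf) hl).symm
  · rintro s ⟨Qy, hQy, rfl⟩
    exact hupper Qy hQy

end Main
theorem stmt_12 {X Y : Type*} [Fintype X] [Fintype Y] [Nonempty X] [Nonempty Y]
    (W : X → Y → ℝ)
    (hW : ∀ x y, W x y ∈ Set.Icc (0:ℝ) 1) (hWsum : ∀ x, ∑ y, W x y = 1)
    (R : ℝ) (hR : 0 < R) :
    -- the inner maximum over `Q_Y` is attained for every `Q_X`
    (∀ Qx : X → ℝ, IsPMF Qx → ∃ r : ℝ,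
      IsGreatest {s | ∃ Qy : Y → ℝ, IsPMF Qy ∧
        s = betaHT (1 - Real.exp (-R))
              (fun p : X × Y => Qx p.1 * Qy p.2)
              (fun p : X × Y => Qx p.1 * W p.1 p.2)} r) ∧
    -- and min over `Q_X` of (max over `Q_Y` of β) = max over `z` of min over `x`
    ∃ v : ℝ,
      IsLeast {r | ∃ Qx : X → ℝ, IsPMF Qx ∧
        IsGreatest {s | ∃ Qy : Y → ℝ, IsPMF Qy ∧
          s = betaHT (1 - Real.exp (-R))
                (fun p : X × Y => Qx p.1 * Qy p.2)
                (fun p : X × Y => Qx p.1 * W p.1 p.2)} r} v ∧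
      IsGreatest {r | ∃ z : Y → ℝ, (∀ y, z y ∈ Set.Icc (0:ℝ) 1) ∧
        r = ⨅ x : X, ((∑ y, min (W x y) (z y)) - Real.exp (-R) * ∑ y, z y)} v := by
  classical
  -- maximize z ↦ ⨅ x, f(x,z) over K
  have hGcont : Continuous (fun z : Y → ℝ => ⨅ x, fxz W R x z) := by
    have heq : (fun z : Y → ℝ => ⨅ x, fxz W R x z)
        = fun z => univ.inf' univ_nonempty fun x => fxz W R x z := by
      funext z
      rw [_root_.inf'_univ_eq_ciInf]
    rw [heq]
    exact continuous_finset_inf' _ _ _ (fxz_cont W R)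
  obtain ⟨zbar, hzbar, hzmax⟩ := KS_compact.exists_isMaxOn
    ⟨0, KS_zero_mem⟩ hGcont.continuousOn
  set v : ℝ := ⨅ x, fxz W R x zbar with hv
  have hvub : ∀ z ∈ {z : Y → ℝ | ∀ y, z y ∈ Set.Icc (0:ℝ) 1},
      (⨅ x, fxz W R x z) ≤ v := fun z hz => isMaxOn_iff.mp hzmax z hz
  -- lower bound on all attained max values
  have hlb : ∀ Qx : X → ℝ, IsPMF Qx → v ≤ Mfun W R Qx := by
    intro Qx hQx
    have h1 : ∀ x, v ≤ fxz W R x zbar := fun x =>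
      ciInf_le (Set.finite_range _).bddBelow x
    calc v = ∑ x, Qx x * v := by rw [← Finset.sum_mul, hQx.2, one_mul]
      _ ≤ ∑ x, Qx x * fxz W R x zbar :=
          Finset.sum_le_sum fun x _ => mul_le_mul_of_nonneg_left (h1 x) (hQx.1 x)
      _ ≤ Mfun W R Qx := (Mfun_isGreatest W R Qx).2 ⟨zbar, hzbar, rfl⟩
  -- the simplex of PMFs on X is compact
  have hΔeq : {q : X → ℝ | IsPMF q}
      = (Set.pi Set.univ fun _ : X => Set.Icc (0:ℝ) 1) ∩ {q | ∑ x, q x = 1} := by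
    ext q
    constructor
    · intro hq
      refine ⟨fun x _ => ⟨hq.1 x, ?_⟩, hq.2⟩
      calc q x ≤ ∑ x', q x' := Finset.single_le_sum (fun x' _ => hq.1 x') (mem_univ x)
        _ = 1 := hq.2
    · rintro ⟨h1, h2⟩
      exact ⟨fun x => (h1 x (Set.mem_univ x)).1, h2⟩
  have hΔcomp : IsCompact {q : X → ℝ | IsPMF q} := by
    rw [hΔeq]
    apply IsCompact.inter_right (isCompact_univ_pi fun _ => isCompact_Icc)
    exact isClosed_eq (continuous_finset_sum _ fun x _ => continuous_apply x)
      continuous_const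
  have hcardX : (0:ℝ) < (Fintype.card X : ℝ) := by exact_mod_cast Fintype.card_pos
  have hΔne : Set.Nonempty {q : X → ℝ | IsPMF q} := by
    refine ⟨fun _ => (Fintype.card X : ℝ)⁻¹, fun x => inv_nonneg.mpr hcardX.le, ?_⟩
    rw [Finset.sum_const, card_univ, nsmul_eq_mul, mul_inv_cancel₀ hcardX.ne']
  -- Mfun is Lipschitz, hence continuous
  have key2 : ∀ Q1 Q2 : X → ℝ, Mfun W R Q1 - Mfun W R Q2
      ≤ ((Fintype.card X : ℝ) * (Fintype.card Y : ℝ)) * dist Q1 Q2 := by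
    intro Q1 Q2
    obtain ⟨z1, hz1, hM1⟩ := (Mfun_isGreatest W R Q1).1
    have hM1' : Mfun W R Q1 = ∑ x, Q1 x * fxz W R x z1 := hM1.symm
    have h1 := Mfun_le W hW R hR Q1 Q2
      (fun z hz => (Mfun_isGreatest W R Q2).2 ⟨z, hz, rfl⟩) ⟨z1, hz1, hM1'⟩
    have hsum : ∑ x, |Q1 x - Q2 x| ≤ (Fintype.card X : ℝ) * dist Q1 Q2 := by
      calc ∑ x, |Q1 x - Q2 x| ≤ ∑ _x : X, dist Q1 Q2 :=
          Finset.sum_le_sum fun x _ => by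
            rw [← Real.dist_eq]
            exact dist_le_pi_dist Q1 Q2 x
        _ = (Fintype.card X : ℝ) * dist Q1 Q2 := by
            rw [Finset.sum_const, card_univ, nsmul_eq_mul]
    have hcy : (0:ℝ) ≤ (Fintype.card Y : ℝ) := Nat.cast_nonneg _
    nlinarith [mul_le_mul_of_nonneg_right hsum hcy]
  have hMcont : Continuous (Mfun W R : (X → ℝ) → ℝ) := by
    have hC : (0:ℝ) ≤ (Fintype.card X : ℝ) * (Fintype.card Y : ℝ) := by positivity
    apply LipschitzWith.continuous (K := ⟨_, hC⟩)
    apply LipschitzWith.of_dist_le_mul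
    intro Q1 Q2
    rw [Real.dist_eq, abs_sub_le_iff]
    refine ⟨?_, ?_⟩
    · exact key2 Q1 Q2
    · have := key2 Q2 Q1
      rwa [dist_comm] at this
  obtain ⟨Qs, hQsΔ, hQsmin⟩ := hΔcomp.exists_isMinOn hΔne hMcont.continuousOn
  -- the minimum equals v
  have hge : v ≤ Mfun W R Qs := hlb Qs hQsΔ
  have hle : Mfun W R Qs ≤ v := by
    apply le_of_forall_pos_le_add
    intro ε hε
    obtain ⟨Q, hQpmf, hQ⟩ := minimax_exists_Q W hW R v ε hε hvub
    have h1 : Mfun W R Q ≤ v + ε := by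
      obtain ⟨z, hz, hMeq⟩ := (Mfun_isGreatest W R Q).1
      have hMeq' : Mfun W R Q = ∑ x, Q x * fxz W R x z := hMeq.symm
      rw [hMeq']
      exact hQ z hz
    have h2 : Mfun W R Qs ≤ Mfun W R Q := isMinOn_iff.mp hQsmin Q hQpmf
    linarith
  have hQsv : Mfun W R Qs = v := le_antisymm hle hge
  refine ⟨fun Qx hQx => ⟨Mfun W R Qx, key_isGreatest W hW hWsum R hR Qx hQx⟩,
    v, ⟨⟨Qs, hQsΔ, hQsv ▸ key_isGreatest W hW hWsum R hR Qs hQsΔ⟩, ?_⟩,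
    ⟨⟨zbar, hzbar, rfl⟩, ?_⟩⟩
  · rintro r ⟨Qx, hQx, hgr⟩
    have hr : r = Mfun W R Qx := hgr.unique (key_isGreatest W hW hWsum R hR Qx hQx)
    rw [hr]
    exact hlb Qx hQx
  · rintro r ⟨z, hz, rfl⟩
    exact hvub z hz
end

section
/- Let X and Y be finite index sets, let b ∈ ℝ^X, let a_y ∈ ℝ^X for each y ∈ Y, and let α_y ≥ 0 for each y ∈ Y. Then the following are equivalent: (i) for every μ ∈ ℝ^X with μ·𝟙 = 0, μ·( b − Σ_{y∈Y} α_y·a_y·1{μ·a_y < 0} ) ≥ 0; (ii) there exist real numbers λ_y with 0 ≤ λ_y ≤ α_y for each y ∈ Y and τ ∈ ℝ such that b = Σ_{y∈Y} λ_y·a_y + τ·𝟙. -/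
open Finset
open scoped Classical
open scoped Pointwise

theorem stmt_14 {X Y : Type*} [Fintype X] [Fintype Y]
    (b : X → ℝ) (a : Y → X → ℝ) (α : Y → ℝ) (hα : ∀ y, 0 ≤ α y) :
    (∀ μ : X → ℝ, (∑ x, μ x) = 0 →
        0 ≤ (∑ x, μ x * b x) -
          ∑ y, α y * (if (∑ x, μ x * a y x) < 0 then (∑ x, μ x * a y x) else 0)) ↔
      (∃ (lam : Y → ℝ) (τ : ℝ), (∀ y, 0 ≤ lam y ∧ lam y ≤ α y) ∧
        ∀ x, b x = (∑ y, lam y * a y x) + τ) := by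
  constructor
  · intro hyp
    -- setup
    set T : (Y → ℝ) →ₗ[ℝ] (X → ℝ) :=
      { toFun := fun lam => fun x => ∑ y, lam y * a y x
        map_add' := by
          intro u v; funext x; simp [add_mul, Finset.sum_add_distrib]
        map_smul' := by
          intro c v; funext x; simp [Finset.mul_sum, mul_assoc] } with hT
    have hTdef : ∀ lam x, T lam x = ∑ y, lam y * a y x := fun _ _ => rfl
    set K : Set (Y → ℝ) := Set.Icc 0 α with hK
    set C : Set (X → ℝ) := T '' K with hC
    set L : Set (X → ℝ) := ((Submodule.span ℝ {(fun _ => 1 : X → ℝ)} : Submodule ℝ (X → ℝ)) : Set (X → ℝ)) with hL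
    set S : Set (X → ℝ) := C + L with hS
    have hCcpt : IsCompact C := (isCompact_Icc).image T.continuous_of_finiteDimensional
    have hLclosed : IsClosed L := (Submodule.span ℝ {(fun _ => 1 : X → ℝ)}).closed_of_finiteDimensional
    have hSclosed : IsClosed S := hLclosed.add_left_of_isCompact hCcpt
    have hSconvex : Convex ℝ S :=
      ((convex_Icc 0 α).linear_image T).add (Submodule.span ℝ {(fun _ => 1 : X → ℝ)}).convex
    by_cases hb : b ∈ S
    · obtain ⟨c, hc, l, hl, hcl⟩ := hb
      obtain ⟨lam, hlam, rfl⟩ := hc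
      obtain ⟨τ, rfl⟩ := Submodule.mem_span_singleton.mp hl
      refine ⟨lam, τ, fun y => ⟨hlam.1 y, hlam.2 y⟩, fun x => ?_⟩
      have := congrFun hcl x
      simp only [Pi.add_apply, Pi.smul_apply, smul_eq_mul, mul_one] at this
      rw [← this, hTdef]
    · exfalso
      obtain ⟨f, u, hfb, hfS⟩ := geometric_hahn_banach_point_closed hSconvex hSclosed hb
      set μ : X → ℝ := fun x => f (fun j => if x = j then 1 else 0) with hμ
      have hfeq : ∀ v : X → ℝ, f v = ∑ x, μ x * v x := by
        intro v
        conv_lhs => rw [pi_eq_sum_univ v]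
        rw [map_sum]
        refine Finset.sum_congr rfl fun x _ => ?_
        rw [map_smul]; simp [hμ, mul_comm]
      have hmem : ∀ lam : Y → ℝ, (∀ y, 0 ≤ lam y ∧ lam y ≤ α y) → ∀ τ : ℝ,
          (fun x => (∑ y, lam y * a y x) + τ) ∈ S := by
        intro lam hlam τ
        refine ⟨T lam, ⟨lam, ⟨fun y => (hlam y).1, fun y => (hlam y).2⟩, rfl⟩,
          (fun _ => τ), ?_, ?_⟩
        · exact Submodule.mem_span_singleton.mpr ⟨τ, by funext x; simp⟩
        · funext x; simp [hTdef]
      -- sum of μ is zero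
      have hf1 : ∀ τ : ℝ, u < τ * ∑ x, μ x := by
        intro τ
        have h0 := hfS _ (hmem 0 (fun y => ⟨le_refl _, hα y⟩) τ)
        rw [hfeq] at h0
        simpa [Finset.mul_sum, mul_comm] using h0
      have hμsum : (∑ x, μ x) = 0 := by
        by_contra hne
        have := hf1 ((u - 1) / (∑ x, μ x))
        rw [div_mul_cancel₀ _ hne] at this
        linarith
      -- apply hypothesis
      have hkey := hyp μ hμsum
      set lam₀ : Y → ℝ := fun y => if (∑ x, μ x * a y x) < 0 then α y else 0 with hlam₀
      have hlam₀mem : ∀ y, 0 ≤ lam₀ y ∧ lam₀ y ≤ α y := by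
        intro y; constructor <;> simp only [hlam₀] <;> split <;> simp [hα y]
      have hTlam₀ : (∑ x, μ x * ((∑ y, lam₀ y * a y x) + 0)) =
          ∑ y, α y * (if (∑ x, μ x * a y x) < 0 then (∑ x, μ x * a y x) else 0) := by
        simp only [add_zero, Finset.mul_sum]
        rw [Finset.sum_comm]
        refine Finset.sum_congr rfl fun y _ => ?_
        simp only [hlam₀]
        split
        · rw [Finset.mul_sum]; ring_nf; exact Finset.sum_congr rfl fun x _ => by ring
        · simp
      have hfb' := hfS _ (hmem lam₀ hlam₀mem 0)
      rw [hfeq] at hfb' hfb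
      rw [hTlam₀] at hfb'
      linarith
  · rintro ⟨lam, τ, hlam, hb⟩ μ hμ
    have h1 : (∑ x, μ x * b x) = ∑ y, lam y * ∑ x, μ x * a y x := by
      simp only [hb, mul_add, Finset.sum_add_distrib, ← Finset.sum_mul, hμ, zero_mul, add_zero,
        Finset.mul_sum]
      rw [Finset.sum_comm]
      exact Finset.sum_congr rfl fun y _ => Finset.sum_congr rfl fun x _ => by ring
    rw [h1, sub_nonneg]
    refine Finset.sum_le_sum fun y _ => ?_
    set t := ∑ x, μ x * a y x
    split
    · next h => nlinarith [(hlam y).1, (hlam y).2]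
    · next h => push_neg at h; rw [mul_zero]; exact mul_nonneg (hlam y).1 h
end

section
/- Let n, m, k be positive integers, let a_j ∈ ℝ^n for j = 1,…,m, let b ∈ ℝ^n, let α_j ≥ 0 for j = 1,…,m, and let C be an n × k real matrix. Suppose that for every μ ∈ ℝ^n with μᵀC ≥ 0 (componentwise), it holds that μ·( b − Σ_{j=1}^m α_j·a_j·1{μ·a_j < 0} ) ≥ 0. Then there exist λ_j with 0 ≤ λ_j ≤ α_j for each j and τ ∈ ℝ^k with τ ≥ 0 (componentwise) such that b = Σ_{j=1}^m λ_j·a_j + C·τ. -/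
open Finset
open scoped Classical

/-- Conic Carathéodory: any nonnegative combination can be rewritten as a nonnegative
combination supported on a set where the vectors are linearly independent. -/
lemma carath_aux {k : ℕ} {E : Type*} [AddCommGroup E] [Module ℝ E] (c : Fin k → E) :
    ∀ (N : ℕ) (s : Finset (Fin k)), s.card ≤ N → ∀ τ : Fin k → ℝ, (∀ l, 0 ≤ τ l) →
    (∀ l ∉ s, τ l = 0) →
    ∃ (t : Finset (Fin k)) (τ' : Fin k → ℝ), (∀ l, 0 ≤ τ' l) ∧ (∀ l ∉ t, τ' l = 0) ∧
      (∑ l, τ' l • c l) = (∑ l, τ l • c l) ∧ LinearIndependent ℝ (fun l : t => c (l : Fin k)) := by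
  intro N
  induction N with
  | zero =>
    intro s hs τ hτ hsupp
    rw [Nat.le_zero, Finset.card_eq_zero] at hs
    subst hs
    exact ⟨∅, τ, hτ, hsupp, rfl, linearIndependent_empty_type⟩
  | succ N ih =>
    intro s hs τ hτ hsupp
    by_cases hli : LinearIndependent ℝ (fun l : s => c (l : Fin k))
    · exact ⟨s, τ, hτ, hsupp, rfl, hli⟩
    · obtain ⟨g, hg0, i0, hgi0⟩ := Fintype.not_linearIndependent_iff.mp hli
      -- extend g to a function on Fin k
      have key : ∃ d : Fin k → ℝ, (∑ l, d l • c l = 0) ∧ (∀ l ∉ s, d l = 0) ∧ ∃ l, 0 < d l := by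
        set d : Fin k → ℝ := fun l => if h : l ∈ s then g ⟨l, h⟩ else 0 with hd
        have hdsum : ∑ l, d l • c l = 0 := by
          rw [← hg0]
          rw [← Finset.sum_subset (Finset.subset_univ s) (by intro l _ hl; simp [hd, hl]),
            ← Finset.sum_attach s (fun l => d l • c l)]
          exact Finset.sum_congr rfl fun x _ => by simp [hd, x.2]
        have hdsupp : ∀ l ∉ s, d l = 0 := fun l hl => by simp [hd, hl]
        have hdne : d (i0 : Fin k) ≠ 0 := by simp [hd, i0.2, hgi0]
        rcases lt_or_gt_of_ne hdne with hneg | hpos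
        · refine ⟨-d, by simp [hdsum], fun l hl => by simp [hdsupp l hl], ⟨i0, by simpa using hneg⟩⟩
        · exact ⟨d, hdsum, hdsupp, ⟨i0, hpos⟩⟩
      obtain ⟨d, hdsum, hdsupp, l1, hl1⟩ := key
      have hl1s : l1 ∈ s := by
        by_contra hl1s; rw [hdsupp l1 hl1s] at hl1; exact lt_irrefl 0 hl1
      set P := s.filter (fun l => 0 < d l) with hP
      have hPne : P.Nonempty := ⟨l1, by simp [hP, hl1s, hl1]⟩
      obtain ⟨l0, hl0P, hl0min⟩ := Finset.exists_min_image P (fun l => τ l / d l) hPne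
      rw [hP, Finset.mem_filter] at hl0P
      obtain ⟨hl0s, hdl0⟩ := hl0P
      set t0 := τ l0 / d l0 with ht0
      have ht0nn : 0 ≤ t0 := div_nonneg (hτ l0) hdl0.le
      set τ'' : Fin k → ℝ := fun l => τ l - t0 * d l with hτ''
      have hτ''nn : ∀ l, 0 ≤ τ'' l := by
        intro l
        rcases le_or_gt (d l) 0 with hdl | hdl
        · have : t0 * d l ≤ 0 := mul_nonpos_of_nonneg_of_nonpos ht0nn hdl
          simp only [hτ'']; linarith [hτ l]
        · have hls : l ∈ s := by
            by_contra hls; rw [hdsupp l hls] at hdl; exact lt_irrefl 0 hdl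
          have hlP : l ∈ P := by simp [hP, hls, hdl]
          have := hl0min l hlP
          simp only [hτ'']
          rw [sub_nonneg, ht0, div_mul_eq_mul_div, div_le_iff₀ hdl0]
          rw [div_le_div_iff₀ hdl0 hdl] at this
          exact this
      have hτ''supp : ∀ l ∉ s.erase l0, τ'' l = 0 := by
        intro l hl
        rw [Finset.mem_erase] at hl
        push_neg at hl
        by_cases h1 : l = l0
        · subst h1
          simp only [hτ'', ht0, div_mul_cancel₀ _ hdl0.ne', sub_self]
        · have h2 := hl h1
          simp only [hτ'', hsupp l h2, hdsupp l h2, mul_zero, sub_zero]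
      have hcard : (s.erase l0).card ≤ N := by
        rw [Finset.card_erase_of_mem hl0s]
        omega
      obtain ⟨t, τ', h1, h2, h3, h4⟩ := ih (s.erase l0) hcard τ'' hτ''nn hτ''supp
      refine ⟨t, τ', h1, h2, ?_, h4⟩
      rw [h3]
      simp only [hτ'', sub_smul, Finset.sum_sub_distrib, mul_smul, ← Finset.smul_sum, hdsum,
        smul_zero, sub_zero]

lemma orthant_closed (ι : Type*) [Fintype ι] : IsClosed {σ : ι → ℝ | ∀ l, 0 ≤ σ l} := by
  have : {σ : ι → ℝ | ∀ l, 0 ≤ σ l} = ⋂ l, {σ : ι → ℝ | 0 ≤ σ l} := by ext σ; simp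
  rw [this]
  exact isClosed_iInter fun l => isClosed_le continuous_const (continuous_apply l)

lemma cone_closed {k n : ℕ} (c : Fin k → (Fin n → ℝ)) :
    IsClosed {x : Fin n → ℝ | ∃ τ : Fin k → ℝ, (∀ l, 0 ≤ τ l) ∧ x = ∑ l, τ l • c l} := by
  have hset : {x : Fin n → ℝ | ∃ τ : Fin k → ℝ, (∀ l, 0 ≤ τ l) ∧ x = ∑ l, τ l • c l} =
      ⋃ (t : {t : Finset (Fin k) // LinearIndependent ℝ (fun l : t => c (l : Fin k))}),
        (fun σ : ((t : Finset (Fin k)) : Type) → ℝ =>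
          ∑ l : ((t : Finset (Fin k)) : Type), σ l • c (l : Fin k)) '' {σ | ∀ l, 0 ≤ σ l} := by
    ext x
    simp only [Set.mem_setOf_eq, Set.mem_iUnion, Set.mem_image]
    constructor
    · rintro ⟨τ, hτ, rfl⟩
      obtain ⟨t, τ', h1, h2, h3, h4⟩ :=
        carath_aux c k Finset.univ (by simp) τ hτ (by simp)
      refine ⟨⟨t, h4⟩, fun l => τ' l, fun l => h1 l, ?_⟩
      rw [← h3, Finset.sum_coe_sort t (fun l => τ' l • c l)]
      exact Finset.sum_subset (Finset.subset_univ t) (by intro l _ hl; simp [h2 l hl])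
    · rintro ⟨t, σ, hσ, rfl⟩
      refine ⟨fun l => if h : l ∈ (t : Finset (Fin k)) then σ ⟨l, h⟩ else 0, fun l => ?_, ?_⟩
      · by_cases h : l ∈ (t : Finset (Fin k)) <;> simp [h, hσ]
      · rw [← Finset.sum_subset (Finset.subset_univ (t : Finset (Fin k)))
            (by intro l _ hl; simp [hl]),
          ← Finset.sum_coe_sort (t : Finset (Fin k))
            (fun l => (if h : l ∈ (t : Finset (Fin k)) then σ ⟨l, h⟩ else 0) • c l)]
        exact Finset.sum_congr rfl fun x _ => by simp [x.2]
  rw [hset]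
  apply isClosed_iUnion_of_finite
  rintro ⟨t, hli⟩
  have hinj : LinearMap.ker
      (Fintype.linearCombination ℝ (fun l : t => c (l : Fin k))) = ⊥ := by
    rw [LinearMap.ker_eq_bot']
    intro σ hσ
    rw [Fintype.linearCombination_apply] at hσ
    funext l
    exact Fintype.linearIndependent_iff.mp hli σ hσ l
  have hce := (Fintype.linearCombination ℝ
    (fun l : t => c (l : Fin k))).isClosedEmbedding_of_injective hinj
  have himg : (fun σ : {x // x ∈ (t : Finset (Fin k))} → ℝ =>
        ∑ l : {x // x ∈ (t : Finset (Fin k))}, σ l • c (l : Fin k))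
      = ⇑(Fintype.linearCombination ℝ (fun l : t => c (l : Fin k))) := by
    funext σ; rw [Fintype.linearCombination_apply]
  rw [himg]
  exact hce.isClosedMap _ (orthant_closed _)
open scoped Pointwise

theorem stmt_15 (n m k : ℕ) (hn : 0 < n) (hm : 0 < m) (hk : 0 < k)
    (a : Fin m → Fin n → ℝ) (b : Fin n → ℝ) (α : Fin m → ℝ) (hα : ∀ j, 0 ≤ α j)
    (C : Matrix (Fin n) (Fin k) ℝ)
    (h : ∀ μ : Fin n → ℝ, (∀ j : Fin k, 0 ≤ ∑ i, μ i * C i j) →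
      0 ≤ (∑ i, μ i * b i) -
        ∑ j, α j * (if (∑ i, μ i * a j i) < 0 then (∑ i, μ i * a j i) else 0)) :
    ∃ (lam : Fin m → ℝ) (τ : Fin k → ℝ),
      (∀ j, 0 ≤ lam j ∧ lam j ≤ α j) ∧ (∀ l, 0 ≤ τ l) ∧
      ∀ i, b i = (∑ j, lam j * a j i) + ∑ l, C i l * τ l := by
  classical
  set c : Fin k → (Fin n → ℝ) := fun l i => C i l with hc
  set T : Set (Fin n → ℝ) :=
    {x | ∃ τ : Fin k → ℝ, (∀ l, 0 ≤ τ l) ∧ x = ∑ l, τ l • c l} with hT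
  set S : Set (Fin n → ℝ) :=
    (fun lam : Fin m → ℝ => ∑ j, lam j • a j) '' (Set.Icc 0 α) with hS
  have hmapS : (fun lam : Fin m → ℝ => ∑ j, lam j • a j)
      = ⇑(Fintype.linearCombination ℝ a) := by
    funext lam; rw [Fintype.linearCombination_apply]
  have hScomp : IsCompact S := by
    apply IsCompact.image isCompact_Icc
    exact continuous_finset_sum _ fun j _ => (continuous_apply j).smul continuous_const
  have hTclosed : IsClosed T := cone_closed c
  have hclosed : IsClosed (S + T) := hTclosed.add_left_of_isCompact hScomp
  have hSconv : Convex ℝ S := by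
    rw [hS, hmapS]
    exact (convex_Icc 0 α).linear_image _
  have horth : Convex ℝ {σ : Fin k → ℝ | ∀ l, 0 ≤ σ l} := by
    have : {σ : Fin k → ℝ | ∀ l, 0 ≤ σ l} = Set.Ici 0 := by
      ext σ; simp [Set.mem_Ici, Pi.le_def]
    rw [this]; exact convex_Ici 0
  have hTconv : Convex ℝ T := by
    have : T = ⇑(Fintype.linearCombination ℝ c) '' {σ : Fin k → ℝ | ∀ l, 0 ≤ σ l} := by
      ext x
      simp only [hT, Set.mem_setOf_eq, Set.mem_image, Fintype.linearCombination_apply]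
      exact ⟨fun ⟨τ, h1, h2⟩ => ⟨τ, h1, h2.symm⟩, fun ⟨τ, h1, h2⟩ => ⟨τ, h1, h2.symm⟩⟩
    rw [this]
    exact horth.linear_image _
  have hconv : Convex ℝ (S + T) := hSconv.add hTconv
  have hbmem : b ∈ S + T := by
    by_contra hb
    obtain ⟨f, u, hfb, hK⟩ := geometric_hahn_banach_point_closed hconv hclosed hb
    set μ : Fin n → ℝ := fun i => f (fun j => if i = j then 1 else 0) with hμ
    have hfeq : ∀ x, f x = ∑ i, μ i * x i := by
      intro x
      have := LinearMap.pi_apply_eq_sum_univ (f : (Fin n → ℝ) →ₗ[ℝ] ℝ) x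
      simp only [ContinuousLinearMap.coe_coe, smul_eq_mul] at this
      rw [this]
      exact Finset.sum_congr rfl fun i _ => mul_comm _ _
    have h0S : (0 : Fin n → ℝ) ∈ S := by
      refine ⟨0, Set.mem_Icc.mpr ⟨le_refl _, fun j => hα j⟩, by simp⟩
    have h0T : (0 : Fin n → ℝ) ∈ T := ⟨0, fun l => le_refl _, by simp⟩
    have hCpos : ∀ l, 0 ≤ ∑ i, μ i * C i l := by
      intro l
      by_contra hneg
      push_neg at hneg
      set dv : ℝ := ∑ i, μ i * C i l with hdv
      set tt : ℝ := (|u| + 1) / (-dv) with htt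
      have httnn : 0 ≤ tt := div_nonneg (by positivity) (by linarith)
      have hyT : tt • c l ∈ T := by
        refine ⟨fun l' => if l' = l then tt else 0, fun l' => by positivity, ?_⟩
        have hh : ∀ l' : Fin k, (if l' = l then tt else 0) • c l'
            = if l' = l then tt • c l' else 0 := by
          intro l'; split <;> simp
        rw [Finset.sum_congr rfl fun l' _ => hh l', Finset.sum_ite_eq' Finset.univ l
          (fun l' => tt • c l')]
        simp
      have hmem : tt • c l ∈ S + T := by
        have := Set.add_mem_add h0S hyT
        rwa [zero_add] at this
      have hlt := hK _ hmem
      have hval : f (tt • c l) = tt * dv := by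
        rw [hfeq, hdv, Finset.mul_sum]
        exact Finset.sum_congr rfl fun i _ => by simp [hc]; ring
      have htd : tt * dv = -(|u| + 1) := by
        rw [htt, div_mul_eq_mul_div, div_neg, mul_div_cancel_right₀ _ hneg.ne]
      rw [hval, htd] at hlt
      have := neg_abs_le u
      linarith
    have hfin := h μ hCpos
    set lam0 : Fin m → ℝ := fun j => if (∑ i, μ i * a j i) < 0 then α j else 0 with hlam0
    have hyS : (∑ j, lam0 j • a j) ∈ S := by
      refine ⟨lam0, Set.mem_Icc.mpr ⟨fun j => ?_, fun j => ?_⟩, rfl⟩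
      · simp only [hlam0, Pi.zero_apply]
        split <;> [exact hα j; exact le_refl 0]
      · simp only [hlam0]
        split <;> [exact le_refl _; exact hα j]
    have hmem2 : (∑ j, lam0 j • a j) ∈ S + T := by
      have := Set.add_mem_add hyS h0T
      rwa [add_zero] at this
    have hlt2 := hK _ hmem2
    have hval2 : f (∑ j, lam0 j • a j)
        = ∑ j, α j * (if (∑ i, μ i * a j i) < 0 then (∑ i, μ i * a j i) else 0) := by
      rw [hfeq]
      have hcoord : ∀ i, (∑ j, lam0 j • a j) i = ∑ j, lam0 j * a j i := by
        intro i; rw [Finset.sum_apply]; rfl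
      calc ∑ i, μ i * (∑ j, lam0 j • a j) i
          = ∑ i, ∑ j, μ i * (lam0 j * a j i) := by
            exact Finset.sum_congr rfl fun i _ => by rw [hcoord, Finset.mul_sum]
        _ = ∑ j, lam0 j * (∑ i, μ i * a j i) := by
            rw [Finset.sum_comm]
            refine Finset.sum_congr rfl fun j _ => ?_
            rw [Finset.mul_sum]
            exact Finset.sum_congr rfl fun i _ => by ring
        _ = ∑ j, α j * (if (∑ i, μ i * a j i) < 0 then (∑ i, μ i * a j i) else 0) := by
            refine Finset.sum_congr rfl fun j _ => ?_
            simp only [hlam0]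
            split <;> simp
    rw [hval2] at hlt2
    rw [hfeq] at hfb
    linarith
  rw [Set.mem_add] at hbmem
  obtain ⟨s, hsS, t, htT, hst⟩ := hbmem
  obtain ⟨lam, hlam, rfl⟩ := hsS
  obtain ⟨τ, hτnn, rfl⟩ := htT
  rw [Set.mem_Icc] at hlam
  refine ⟨lam, τ, fun j => ⟨hlam.1 j, hlam.2 j⟩, hτnn, fun i => ?_⟩
  rw [← hst]
  simp only [Pi.add_apply, Finset.sum_apply, Pi.smul_apply, smul_eq_mul]
  congr 1
  exact Finset.sum_congr rfl fun l _ => by rw [hc]; ring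
end

section
/- Let X and Y be finite sets and W : X × Y → [0,1]. Let z, z^l ∈ ℝ^Y with z^l_y ≤ z_y for all y ∈ Y, and suppose that for every y ∈ Y, {x : W(y|x) > z^l_y} = {x : W(y|x) ≥ z_y}. For μ ∈ ℝ^X, define z^μ ∈ ℝ^Y by z^μ_y = z_y if Σ_{x : W(y|x) ≥ z_y} μ(x) ≥ 0 and z^μ_y = z^l_y otherwise, and define η(μ, z') = Σ_{x∈X} Σ_{y∈Y} μ(x)·min(W(y|x), z'_y) for z' ∈ ℝ^Y. Then η(μ, z^μ) = η(μ, z) − Σ_{y∈Y} (z_y − z^l_y)·( Σ_{x : W(y|x) ≥ z_y} μ(x) )·1{ Σ_{x : W(y|x) ≥ z_y} μ(x) < 0 }. -/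
open Finset
open scoped Classical

theorem stmt_17 {X Y : Type*} [Fintype X] [Fintype Y] (W : X → Y → ℝ)
    (hW : ∀ x y, W x y ∈ Set.Icc (0:ℝ) 1)
    (z zl : Y → ℝ) (hle : ∀ y, zl y ≤ z y)
    (hset : ∀ y : Y, {x : X | zl y < W x y} = {x : X | z y ≤ W x y})
    (μ : X → ℝ) :
    -- η(μ, z^μ) = η(μ, z) − ∑_y (z_y − z^l_y)·(μ-mass of {x : W(y|x) ≥ z_y})·1{that mass < 0}
    (∑ x, ∑ y, μ x * min (W x y)
        (if 0 ≤ ∑ x' ∈ univ.filter (fun x' => z y ≤ W x' y), μ x' then z y else zl y))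
      = (∑ x, ∑ y, μ x * min (W x y) (z y)) -
        ∑ y, (z y - zl y) * (∑ x ∈ univ.filter (fun x' => z y ≤ W x' y), μ x) *
          (if (∑ x ∈ univ.filter (fun x' => z y ≤ W x' y), μ x) < 0 then 1 else 0) := by
  rw [Finset.sum_comm, Finset.sum_comm (s := univ) (t := univ)
    (f := fun x y => μ x * min (W x y) (z y)), ← Finset.sum_sub_distrib]
  refine Finset.sum_congr rfl fun y _ => ?_
  by_cases h : 0 ≤ ∑ x' ∈ univ.filter (fun x' => z y ≤ W x' y), μ x'
  · simp [h, not_lt.mpr h]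
  · rw [if_neg h, if_pos (not_le.mp h), mul_one]
    have key : ∀ x, μ x * min (W x y) (z y) - μ x * min (W x y) (zl y)
        = (if z y ≤ W x y then (z y - zl y) * μ x else 0) := by
      intro x
      by_cases hx : z y ≤ W x y
      · have hzl : zl y < W x y := (Set.ext_iff.mp (hset y) x).mpr hx
        rw [min_eq_right hx, min_eq_right hzl.le, if_pos hx]; ring
      · have h1 : ¬ zl y < W x y := fun h' => hx ((Set.ext_iff.mp (hset y) x).mp h')
        have h2 : W x y ≤ zl y := not_lt.mp h1
        rw [min_eq_left (h2.trans (hle y)), min_eq_left h2, if_neg hx]; ring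
    have := Finset.sum_congr rfl (fun x (_ : x ∈ (univ : Finset X)) => key x)
    rw [Finset.sum_sub_distrib, ← Finset.sum_filter, ← Finset.mul_sum] at this
    linarith [this]
end

section
/- Let X and Y be finite sets, let W : X × Y → [0,1] be a channel (for each x ∈ X, Σ_{y∈Y} W(y|x) = 1), and fix R > 0. Let Q_X be a probability mass function on X with Q_X(x) > 0 for all x, and let μ ∈ ℝ^X with Σ_{x∈X} μ(x) = 0. Let z, z^l ∈ [0,1]^Y satisfy, for every y ∈ Y: Q_X({x : W(y|x) > z_y}) < e^{−R} ≤ Q_X({x : W(y|x) ≥ z_y}) and Q_X({x : W(y|x) > z^l_y}) ≤ e^{−R} < Q_X({x : W(y|x) ≥ z^l_y}); and suppose that for every y with Σ_{x : W(y|x) ≥ z_y} μ(x) < 0 it holds that {x : W(y|x) > z^l_y} = {x : W(y|x) ≥ z_y}. Define z^μ ∈ [0,1]^Y by z^μ_y = z_y if Σ_{x : W(y|x) ≥ z_y} μ(x) ≥ 0 and z^μ_y = z^l_y otherwise. Then there exists δ₀ > 0 such that for every δ with 0 < δ < δ₀: Q_X + δ·μ is a probability mass function on X, and for every y ∈ Y,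 (Q_X + δ·μ)({x : W(y|x) > z^μ_y}) ≤ e^{−R} ≤ (Q_X + δ·μ)({x : W(y|x) ≥ z^μ_y}). -/
open Finset
open scoped Classical

theorem stmt_18 {X Y : Type*} [Fintype X] [Fintype Y] (W : X → Y → ℝ)
    (hW : ∀ x y, W x y ∈ Set.Icc (0:ℝ) 1) (hWsum : ∀ x, ∑ y, W x y = 1)
    (R : ℝ) (hR : 0 < R)
    (Q : X → ℝ) (hQ : IsPMF Q) (hQpos : ∀ x, 0 < Q x)
    (μ : X → ℝ) (hμ : ∑ x, μ x = 0)
    (z zl : Y → ℝ) (hz : ∀ y, z y ∈ Set.Icc (0:ℝ) 1) (hzl : ∀ y, zl y ∈ Set.Icc (0:ℝ) 1)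
    -- `z` satisfies: Q({W > z_y}) < e^{-R} ≤ Q({W ≥ z_y})
    (hzcond : ∀ y : Y,
      (∑ x ∈ univ.filter (fun x => z y < W x y), Q x) < Real.exp (-R) ∧
        Real.exp (-R) ≤ ∑ x ∈ univ.filter (fun x => z y ≤ W x y), Q x)
    -- `zl` satisfies: Q({W > z^l_y}) ≤ e^{-R} < Q({W ≥ z^l_y})
    (hzlcond : ∀ y : Y,
      (∑ x ∈ univ.filter (fun x => zl y < W x y), Q x) ≤ Real.exp (-R) ∧
        Real.exp (-R) < ∑ x ∈ univ.filter (fun x => zl y ≤ W x y), Q x)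
    -- for every y with negative μ-mass of {x : W(y|x) ≥ z_y}: {W > z^l_y} = {W ≥ z_y}
    (hsets : ∀ y : Y, (∑ x ∈ univ.filter (fun x => z y ≤ W x y), μ x) < 0 →
      {x : X | zl y < W x y} = {x : X | z y ≤ W x y}) :
    ∃ δ₀ : ℝ, 0 < δ₀ ∧ ∀ δ : ℝ, 0 < δ → δ < δ₀ →
      IsPMF (fun x => Q x + δ * μ x) ∧
      ∀ y : Y,
        (∑ x ∈ univ.filter (fun x =>
            (if 0 ≤ ∑ x' ∈ univ.filter (fun x' => z y ≤ W x' y), μ x'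
             then z y else zl y) < W x y), (Q x + δ * μ x))
          ≤ Real.exp (-R) ∧
        Real.exp (-R) ≤
          ∑ x ∈ univ.filter (fun x =>
            (if 0 ≤ ∑ x' ∈ univ.filter (fun x' => z y ≤ W x' y), μ x'
             then z y else zl y) ≤ W x y), (Q x + δ * μ x) := by
  have sum_split : ∀ (A : Finset X) (δ : ℝ),
      ∑ x ∈ A, (Q x + δ * μ x) = (∑ x ∈ A, Q x) + δ * ∑ x ∈ A, μ x := by
    intro A δ
    rw [Finset.sum_add_distrib, Finset.mul_sum]
  have tend : ∀ (A : Finset X), Filter.Tendsto (fun δ : ℝ => ∑ x ∈ A, (Q x + δ * μ x))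
      (nhdsWithin 0 (Set.Ioi 0)) (nhds (∑ x ∈ A, Q x)) := by
    intro A
    have h1 : Filter.Tendsto (fun δ : ℝ => (∑ x ∈ A, Q x) + δ * ∑ x ∈ A, μ x)
        (nhds 0) (nhds ((∑ x ∈ A, Q x) + 0 * ∑ x ∈ A, μ x)) :=
      Continuous.tendsto (by continuity) 0
    have h2 := h1.mono_left (nhdsWithin_le_nhds (s := Set.Ioi (0:ℝ)))
    simp only [zero_mul, add_zero] at h2
    convert h2 using 2 with δ
    exact sum_split A δ
  -- nonnegativity, eventually
  have hnn : ∀ᶠ δ in nhdsWithin (0:ℝ) (Set.Ioi 0), ∀ x, 0 ≤ Q x + δ * μ x := by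
    rw [Filter.eventually_all]
    intro x
    have ht : Filter.Tendsto (fun δ : ℝ => Q x + δ * μ x)
        (nhdsWithin 0 (Set.Ioi 0)) (nhds (Q x)) := by
      have h1 : Filter.Tendsto (fun δ : ℝ => Q x + δ * μ x)
          (nhds 0) (nhds (Q x + 0 * μ x)) := Continuous.tendsto (by continuity) 0
      have h2 := h1.mono_left (nhdsWithin_le_nhds (s := Set.Ioi (0:ℝ)))
      simpa using h2
    exact (ht.eventually_const_lt (hQpos x)).mono fun δ h => le_of_lt h
  -- per y condition, eventually (given δ > 0)
  have hy : ∀ y : Y, ∀ᶠ δ in nhdsWithin (0:ℝ) (Set.Ioi 0), 0 < δ →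
      ((∑ x ∈ univ.filter (fun x =>
            (if 0 ≤ ∑ x' ∈ univ.filter (fun x' => z y ≤ W x' y), μ x'
             then z y else zl y) < W x y), (Q x + δ * μ x))
          ≤ Real.exp (-R) ∧
        Real.exp (-R) ≤
          ∑ x ∈ univ.filter (fun x =>
            (if 0 ≤ ∑ x' ∈ univ.filter (fun x' => z y ≤ W x' y), μ x'
             then z y else zl y) ≤ W x y), (Q x + δ * μ x)) := by
    intro y
    by_cases hS : 0 ≤ ∑ x' ∈ univ.filter (fun x' => z y ≤ W x' y), μ x'
    · -- threshold is z y
      simp only [if_pos hS]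
      have hup : ∀ᶠ δ in nhdsWithin (0:ℝ) (Set.Ioi 0),
          (∑ x ∈ univ.filter (fun x => z y < W x y), (Q x + δ * μ x)) < Real.exp (-R) :=
        (tend _).eventually_lt_const (hzcond y).1
      refine hup.mono fun δ h hδ => ⟨le_of_lt h, ?_⟩
      rw [sum_split]
      have : 0 ≤ δ * ∑ x' ∈ univ.filter (fun x' => z y ≤ W x' y), μ x' :=
        mul_nonneg hδ.le hS
      linarith [(hzcond y).2]
    · -- threshold is zl y
      simp only [if_neg hS]
      push_neg at hS
      have hfe : univ.filter (fun x => zl y < W x y) = univ.filter (fun x => z y ≤ W x y) := by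
        apply Finset.filter_congr
        intro x _
        have := Set.ext_iff.mp (hsets y hS) x
        simpa using this
      have hlo : ∀ᶠ δ in nhdsWithin (0:ℝ) (Set.Ioi 0),
          Real.exp (-R) < ∑ x ∈ univ.filter (fun x => zl y ≤ W x y), (Q x + δ * μ x) :=
        (tend _).eventually_const_lt (hzlcond y).2
      refine hlo.mono fun δ h hδ => ⟨?_, le_of_lt h⟩
      rw [hfe, sum_split]
      have h1 : (∑ x ∈ univ.filter (fun x => z y ≤ W x y), Q x) ≤ Real.exp (-R) := by
        have := (hzlcond y).1
        rwa [hfe] at this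
      have h2 : δ * ∑ x' ∈ univ.filter (fun x' => z y ≤ W x' y), μ x' ≤ 0 :=
        le_of_lt (mul_neg_of_pos_of_neg hδ hS)
      linarith
  have key : ∀ᶠ δ in nhdsWithin (0:ℝ) (Set.Ioi 0), 0 < δ →
      (IsPMF (fun x => Q x + δ * μ x) ∧
      ∀ y : Y,
        (∑ x ∈ univ.filter (fun x =>
            (if 0 ≤ ∑ x' ∈ univ.filter (fun x' => z y ≤ W x' y), μ x'
             then z y else zl y) < W x y), (Q x + δ * μ x))
          ≤ Real.exp (-R) ∧
        Real.exp (-R) ≤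
          ∑ x ∈ univ.filter (fun x =>
            (if 0 ≤ ∑ x' ∈ univ.filter (fun x' => z y ≤ W x' y), μ x'
             then z y else zl y) ≤ W x y), (Q x + δ * μ x)) := by
    filter_upwards [hnn, Filter.eventually_all.mpr hy] with δ h1 h2 hδ
    refine ⟨⟨h1, ?_⟩, fun y => h2 y hδ⟩
    rw [sum_split, hμ, hQ.2, mul_zero, add_zero]
  rw [eventually_nhdsWithin_iff, Metric.eventually_nhds_iff] at key
  obtain ⟨ε, hε, hkey⟩ := key
  refine ⟨ε, hε, fun δ hδ hδε => hkey ?_ hδ hδ⟩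
  simp only [Real.dist_eq, sub_zero, abs_of_pos hδ]
  exact hδε
end

section
/- Let X and Y be finite sets, let W : X × Y → [0,1] be a channel (for each x ∈ X, Σ_{y∈Y} W(y|x) = 1), and let M be a positive integer. Consider any code with M equiprobable messages, given by an encoder f : {1,…,M} → X and a randomized decoder D : Y → (probability mass function on {1,…,M}), with average error probability ε = 1 − (1/M)·Σ_{m=1}^{M} Σ_{y∈Y} W(y|f(m))·D(y)(m). Then ε ≥ min over probability mass functions Q_X on X of max over probability mass functions Q_Y on Y of β_{1−1/M}(Q_X × Q_Y, Q_X W). -/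
open Finset
open scoped Classical

theorem stmt_19 {X Y : Type*} [Fintype X] [Fintype Y] (W : X → Y → ℝ)
    (hW : ∀ x y, W x y ∈ Set.Icc (0:ℝ) 1) (hWsum : ∀ x, ∑ y, W x y = 1)
    (M : ℕ) (hM : 0 < M)
    -- encoder
    (f : Fin M → X)
    -- randomized decoder: `D y` is a probability mass function on the messages
    (D : Y → Fin M → ℝ) (hD : ∀ y, IsPMF (D y))
    -- average error probability of the code
    (ε : ℝ)
    (hε : ε = 1 - (1 / (M : ℝ)) * ∑ m : Fin M, ∑ y, W (f m) y * D y m) :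
    sInf {v | ∃ Qx : X → ℝ, IsPMF Qx ∧
        v = sSup {r | ∃ Qy : Y → ℝ, IsPMF Qy ∧
          r = betaHT (1 - 1 / (M : ℝ))
                (fun p : X × Y => Qx p.1 * Qy p.2)
                (fun p : X × Y => Qx p.1 * W p.1 p.2)}}
      ≤ ε := by
  classical
  have hMR : (0:ℝ) < M := by exact_mod_cast hM
  set N : X → ℕ := fun x => (univ.filter (fun m => f m = x)).card with hNdef
  set Qx : X → ℝ := fun x => (N x : ℝ) / M with hQxdef
  set S : X → Y → ℝ := fun x y => ∑ m ∈ univ.filter (fun m => f m = x), D y m with hSdef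
  have hDmem : ∀ y m, D y m ∈ Set.Icc (0:ℝ) 1 := by
    intro y m
    obtain ⟨h0, h1⟩ := hD y
    exact ⟨h0 m, h1 ▸ Finset.single_le_sum (fun i _ => h0 i) (mem_univ m)⟩
  have hS0 : ∀ x y, 0 ≤ S x y := fun x y =>
    Finset.sum_nonneg fun m _ => (hDmem y m).1
  have hSN : ∀ x y, S x y ≤ (N x : ℝ) := by
    intro x y
    calc S x y ≤ ∑ _m ∈ univ.filter (fun m => f m = x), (1:ℝ) :=
          Finset.sum_le_sum fun m _ => (hDmem y m).2
      _ = (N x : ℝ) := by simp [hNdef]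
  have hSzero : ∀ x y, N x = 0 → S x y = 0 := by
    intro x y h
    have : (univ.filter (fun m => f m = x)) = ∅ := Finset.card_eq_zero.mp h
    simp [hSdef, this]
  -- the key identity
  have key : ∀ x y, Qx x * (S x y / (N x : ℝ)) = S x y / M := by
    intro x y
    by_cases h : N x = 0
    · simp [hQxdef, h, hSzero x y h]
    · have hN0 : ((N x : ℝ)) ≠ 0 := by exact_mod_cast h
      field_simp [hQxdef]
      simp only [hQxdef]
      rw [div_mul_eq_mul_div, div_mul_cancel₀ _ hMR.ne']
      ring
  have hNsum : ∑ x, (N x : ℝ) = M := by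
    have h := Finset.card_eq_sum_card_fiberwise (f := f) (s := univ) (t := univ)
      (fun m _ => mem_univ (f m))
    rw [Finset.card_univ, Fintype.card_fin] at h
    rw [← Nat.cast_sum, ← h]
  have hQxPMF : IsPMF Qx := by
    constructor
    · intro x; exact div_nonneg (Nat.cast_nonneg _) hMR.le
    · rw [show ∑ x, Qx x = (∑ x, (N x : ℝ)) / M by rw [Finset.sum_div],
        hNsum, div_self hMR.ne']
  have hSsum : ∀ y, ∑ x, S x y = 1 := by
    intro y
    rw [show ∑ x, S x y = ∑ m, D y m from Finset.sum_fiberwise _ _ _]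
    exact (hD y).2
  -- the test
  set ψ : X × Y → ℝ := fun p => 1 - S p.1 p.2 / (N p.1 : ℝ) with hψdef
  have hψmem : ∀ p, ψ p ∈ Set.Icc (0:ℝ) 1 := by
    intro ⟨x, y⟩
    constructor
    · simp only [hψdef, sub_nonneg]
      by_cases h : N x = 0
      · simp [hSzero x y h]
      · exact div_le_one_of_le₀ (hSN x y) (Nat.cast_nonneg _)
    · simp only [hψdef, sub_le_self_iff]
      exact div_nonneg (hS0 x y) (Nat.cast_nonneg _)
  -- ε ≥ 0
  have hεnn : 0 ≤ ε := by
    rw [hε, sub_nonneg]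
    rw [mul_comm, ← div_eq_mul_one_div, div_le_one hMR]
    calc ∑ m : Fin M, ∑ y, W (f m) y * D y m
        ≤ ∑ m : Fin M, (1:ℝ) := by
          refine Finset.sum_le_sum fun m _ => ?_
          calc ∑ y, W (f m) y * D y m ≤ ∑ y, W (f m) y := by
                refine Finset.sum_le_sum fun y _ => ?_
                nlinarith [(hW (f m) y).1, (hW (f m) y).2, (hDmem y m).1, (hDmem y m).2]
            _ = 1 := hWsum (f m)
      _ = M := by simp
  -- per-x×y identities
  have key' : ∀ x y, Qx x * ψ (x, y) = Qx x - S x y / M := by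
    intro x y
    simp only [hψdef]
    rw [mul_sub, mul_one, key]
  -- for each Qy PMF, betaHT ≤ ε
  have hbeta : ∀ Qy : Y → ℝ, IsPMF Qy →
      betaHT (1 - 1 / (M : ℝ)) (fun p : X × Y => Qx p.1 * Qy p.2)
        (fun p : X × Y => Qx p.1 * W p.1 p.2) ≤ ε := by
    intro Qy hQy
    apply csInf_le
    · refine ⟨0, fun r hr => ?_⟩
      obtain ⟨φ, hφ, -, hrval⟩ := hr
      rw [hrval]
      refine Finset.sum_nonneg fun p _ => mul_nonneg (mul_nonneg ?_ (hW p.1 p.2).1) (hφ p).1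
      exact (hQxPMF.1 p.1)
    · refine ⟨ψ, hψmem, ?_, ?_⟩
      · -- constraint
        have : ∑ p : X × Y, Qx p.1 * Qy p.2 * ψ p = 1 - 1 / M := by
          rw [Fintype.sum_prod_type]
          have h1 : ∀ x, ∑ y, Qx x * Qy y * ψ (x, y)
              = ∑ y, (Qx x * Qy y - Qy y * (S x y / M)) := by
            intro x
            refine Finset.sum_congr rfl fun y _ => ?_
            linear_combination Qy y * key' x y
          calc ∑ x, ∑ y, Qx x * Qy y * ψ (x, y)
              = ∑ x, ∑ y, (Qx x * Qy y - Qy y * (S x y / M)) := by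
                exact Finset.sum_congr rfl fun x _ => h1 x
            _ = (∑ x, ∑ y, Qx x * Qy y) - ∑ x, ∑ y, Qy y * (S x y / M) := by
                rw [← Finset.sum_sub_distrib]
                exact Finset.sum_congr rfl fun x _ => Finset.sum_sub_distrib _ _
            _ = 1 - 1 / M := by
                congr 1
                · simp only [← Finset.mul_sum, hQy.2, mul_one]
                  exact hQxPMF.2
                · rw [Finset.sum_comm]
                  have h2 : ∀ y, ∑ x, Qy y * (S x y / (M:ℝ)) = Qy y * (1 / M) := by
                    intro y
                    rw [← Finset.mul_sum, ← Finset.sum_div, hSsum y, one_div]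
                  rw [Finset.sum_congr rfl fun y _ => h2 y, ← Finset.sum_mul, hQy.2,
                    one_mul]
        rw [this]
      · -- value
        have h1 : ∀ x y, Qx x * W x y * ψ (x, y) = Qx x * W x y - W x y * S x y / (M:ℝ) := by
          intro x y
          linear_combination W x y * key' x y
        have h2 : ∀ x, ∑ y, W x y * S x y
            = ∑ m ∈ univ.filter (fun m => f m = x), ∑ y, W (f m) y * D y m := by
          intro x
          simp only [hSdef, Finset.mul_sum]
          rw [Finset.sum_comm]
          refine Finset.sum_congr rfl fun m hm => ?_
          rw [(Finset.mem_filter.mp hm).2]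
        have hval : ∑ p : X × Y, Qx p.1 * W p.1 p.2 * ψ p = ε := by
          rw [Fintype.sum_prod_type]
          calc ∑ x, ∑ y, Qx x * W x y * ψ (x, y)
              = ∑ x, ∑ y, (Qx x * W x y - W x y * S x y / (M:ℝ)) :=
                Finset.sum_congr rfl fun x _ =>
                  Finset.sum_congr rfl fun y _ => h1 x y
            _ = (∑ x, ∑ y, Qx x * W x y) - ∑ x, ∑ y, W x y * S x y / (M:ℝ) := by
                rw [← Finset.sum_sub_distrib]
                exact Finset.sum_congr rfl fun x _ => Finset.sum_sub_distrib _ _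
            _ = ε := by
                rw [hε]
                congr 1
                · simp only [← Finset.mul_sum, hWsum, mul_one]
                  exact hQxPMF.2
                · have : ∑ x, ∑ y, W x y * S x y / (M:ℝ)
                      = (∑ x, ∑ m ∈ univ.filter (fun m => f m = x),
                          ∑ y, W (f m) y * D y m) / M := by
                    simp only [← Finset.sum_div]
                    congr 1
                    exact Finset.sum_congr rfl fun x _ => h2 x
                  have h3 : (∑ x, ∑ m ∈ univ.filter (fun m => f m = x),
                      ∑ y, W (f m) y * D y m) = ∑ m, ∑ y, W (f m) y * D y m :=
                    Finset.sum_fiberwise _ _ _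
                  rw [this, h3, one_div, inv_mul_eq_div]
        exact hval.symm
  refine le_trans (csInf_le ?_ ⟨Qx, hQxPMF, rfl⟩) ?_
  · refine ⟨0, fun v hv => ?_⟩
    obtain ⟨Qx', hQx', rfl⟩ := hv
    refine Real.sSup_nonneg fun r hr => ?_
    obtain ⟨Qy, hQy, rfl⟩ := hr
    refine Real.sInf_nonneg fun t ht => ?_
    obtain ⟨φ, hφ, -, rfl⟩ := ht
    exact Finset.sum_nonneg fun p _ =>
      mul_nonneg (mul_nonneg (hQx'.1 p.1) (hW p.1 p.2).1) (hφ p).1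
  · refine Real.sSup_le (fun r hr => ?_) hεnn
    obtain ⟨Qy, hQy, rfl⟩ := hr
    exact hbeta Qy hQy
end
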